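/- arXiv:2308.15297 — 13 statements merged into one kernel-verified Lean document; each statement's English description precedes it below -/
import Mathlib

section
/- The element 1 − ω is invertible in B and satisfies (1 − ω)⁻¹𝒪(1 − ω) = 𝒪, so conjugation induces a ring automorphism [1 − ω] of 𝒪. This automorphism has order exactly 6, and the group Aut_i⁺(𝒪) := {φ a ring automorphism of 𝒪 : φ(i) = i} is precisely the cyclic group generated by [1 − ω]; in particular Aut_i⁺(𝒪) is cyclic of order 6. -/
open Quaternion

noncomputable section

/-- The quaternion algebra `B = (−3, 2)_ℚ`, with `i² = −3`, `j² = 2`, `ij = −ji`. -/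
abbrev B : Type := ℍ[ℚ, -3, 2]

/-- The basis element `i` of `B`, with `i² = −3`. -/
def iB : B := ⟨0, 1, 0, 0⟩

/-- The basis element `j` of `B`, with `j² = 2`. -/
def jB : B := ⟨0, 0, 1, 0⟩

/-- The element `ω = (−1 + i)/2` of `B`, satisfying `ω² + ω + 1 = 0`. -/
def ωB : B := ⟨-1/2, 1/2, 0, 0⟩

/-- The maximal order `𝒪 = ℤ[ω, j]` of `B`. -/
def O : Subring B := Subring.closure {ωB, jB}

lemma i_mem_O : iB ∈ O := by
  have h : iB = 1 + ωB + ωB := by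
    ext <;> simp [iB, ωB] <;> norm_num
  rw [h]
  exact Subring.add_mem _
    (Subring.add_mem _ (Subring.one_mem _) (Subring.subset_closure (Set.mem_insert _ _)))
    (Subring.subset_closure (Set.mem_insert _ _))

def u : Bˣ where
  val := 1 - ωB
  inv := ⟨1/2, 1/6, 0, 0⟩
  val_inv := by ext <;> simp [ωB] <;> norm_num
  inv_val := by ext <;> simp [ωB] <;> norm_num

def c : B ≃+* B where
  toFun x := ↑u⁻¹ * x * ↑u
  invFun x := ↑u * x * ↑u⁻¹
  left_inv x := by
    simp only [← mul_assoc, Units.mul_inv_cancel_right]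
    simp [mul_assoc, Units.inv_mul, Units.mul_inv]
  right_inv x := by
    simp only [← mul_assoc, Units.inv_mul_cancel_right]
    simp [mul_assoc, Units.inv_mul, Units.mul_inv]
  map_mul' x y := by
    simp only [← mul_assoc, Units.mul_inv_cancel_right]
  map_add' x y := by noncomm_ring

lemma uinv_coe : ((u⁻¹ : Bˣ) : B) = ⟨1/2, 1/6, 0, 0⟩ := rfl

lemma c_apply (x : B) : c x = ↑u⁻¹ * x * ↑u := rfl

lemma c_ω : c ωB = ωB := by
  show ↑u⁻¹ * ωB * ↑u = ωB
  rw [uinv_coe]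
  ext <;> simp [ωB, u] <;> norm_num

lemma c_i : c iB = iB := by
  show ↑u⁻¹ * iB * ↑u = iB
  rw [uinv_coe]
  ext <;> simp [iB, ωB, u] <;> norm_num

lemma c_jk (p q : ℚ) : c ⟨0,0,p,q⟩ = ⟨0, 0, (p-3*q)/2, (p+q)/2⟩ := by
  rw [c_apply, uinv_coe]
  ext <;> simp [ωB, u] <;> ring

lemma ω_mem : ωB ∈ O := Subring.subset_closure (Set.mem_insert _ _)
lemma j_mem : jB ∈ O := Subring.subset_closure (Set.mem_insert_of_mem _ rfl)

def e1 : B := ⟨0,0,1/2,1/2⟩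

lemma c_j : c jB = e1 := by
  have := c_jk 1 0
  simpa [jB, e1] using this

lemma e1_mem : e1 ∈ O := by
  have h : e1 = (1 + ωB) * jB := by ext <;> simp [e1, ωB, jB] <;> norm_num
  rw [h]
  exact Subring.mul_mem _ (Subring.add_mem _ (Subring.one_mem _) ω_mem) j_mem

lemma j_from_e1 : jB = -(ωB * e1) := by ext <;> simp [e1, ωB, jB] <;> norm_num

lemma map_O : O.map (c : B →+* B) = O := by
  rw [O, RingHom.map_closure]
  have himg : (c : B →+* B) '' {ωB, jB} = {ωB, e1} := by
    rw [Set.image_pair]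
    show ({c ωB, c jB} : Set B) = _
    rw [c_ω, c_j]
  rw [himg]
  apply le_antisymm
  · rw [Subring.closure_le]
    rintro x (rfl | rfl)
    · exact ω_mem
    · exact e1_mem
  · rw [Subring.closure_le]
    rintro x (rfl | rfl)
    · exact Subring.subset_closure (Set.mem_insert _ _)
    · rw [j_from_e1]
      exact Subring.neg_mem _ (Subring.mul_mem _
        (Subring.subset_closure (Set.mem_insert _ _))
        (Subring.subset_closure (Set.mem_insert_of_mem _ rfl)))

lemma mem_O_iff (x : B) : c x ∈ O ↔ x ∈ O := by
  constructor
  · intro h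
    have h2 : c x ∈ O.map (c : B →+* B) := map_O.symm ▸ h
    obtain ⟨y, hy, hyx⟩ := h2
    have : y = x := c.injective hyx
    exact this ▸ hy
  · intro h
    rw [← map_O]
    exact ⟨x, h, rfl⟩

def φ : RingAut O where
  toFun x := ⟨c x, (mem_O_iff x).mpr x.2⟩
  invFun x := ⟨c.symm x, by
    have := (mem_O_iff (c.symm x)).mp
    simp only [RingEquiv.apply_symm_apply] at this
    exact this x.2⟩
  left_inv x := Subtype.ext (by simp)
  right_inv x := Subtype.ext (by simp)
  map_mul' x y := Subtype.ext (by push_cast; exact map_mul c _ _)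
  map_add' x y := Subtype.ext (by push_cast; exact map_add c _ _)

lemma φ_coe (x : O) : (φ x : B) = c x := rfl

lemma pow_apply_succ (n : ℕ) (x : O) : (φ^(n+1)) x = φ ((φ^n) x) := by
  rw [pow_succ']; rfl

lemma φ_pow_coe (n : ℕ) (x : O) :
    ((φ^n) x : B) = ↑((u^n)⁻¹) * ↑x * ↑(u^n) := by
  induction n generalizing x with
  | zero =>
    simp only [pow_zero, inv_one, Units.val_one, one_mul, mul_one]
    rfl
  | succ n ih =>
    rw [pow_apply_succ, φ_coe, c_apply, ih x, pow_succ u]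
    simp [mul_inv_rev, Units.val_mul, mul_assoc]

def s27 : B := ⟨-27, 0, 0, 0⟩

lemma u6 : ((u^6 : Bˣ) : B) = s27 := by
  rw [Units.val_pow_eq_pow_val]
  show (1 - ωB)^6 = s27
  ext <;> simp [ωB, s27, pow_succ] <;> norm_num

lemma s27_comm (x : B) : x * s27 = s27 * x := by
  ext <;> simp [s27] <;> ring

lemma φ6 : φ^6 = 1 := by
  apply RingEquiv.ext
  intro x
  apply Subtype.ext
  rw [φ_pow_coe 6 x]
  show _ = (x : B)
  rw [mul_assoc, u6, s27_comm, ← u6, ← mul_assoc, Units.inv_mul, one_mul]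

lemma φ_ω : φ ⟨ωB, ω_mem⟩ = ⟨ωB, ω_mem⟩ := Subtype.ext c_ω

lemma φpow_ω (k : ℕ) : (φ^k) ⟨ωB, ω_mem⟩ = ⟨ωB, ω_mem⟩ := by
  induction k with
  | zero => rfl
  | succ n ih => rw [pow_apply_succ, ih, φ_ω]

lemma pj1 : ((φ^1) ⟨jB, j_mem⟩ : B) = ⟨0,0,1/2,1/2⟩ := by
  rw [pow_one, φ_coe]
  show c jB = _
  rw [c_j]; rfl

lemma pj2 : ((φ^2) ⟨jB, j_mem⟩ : B) = ⟨0,0,-1/2,1/2⟩ := by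
  rw [pow_apply_succ, φ_coe, pj1, c_jk]; norm_num

lemma pj3 : ((φ^3) ⟨jB, j_mem⟩ : B) = ⟨0,0,-1,0⟩ := by
  rw [pow_apply_succ, φ_coe, pj2, c_jk]; norm_num

lemma pj4 : ((φ^4) ⟨jB, j_mem⟩ : B) = ⟨0,0,-1/2,-1/2⟩ := by
  rw [pow_apply_succ, φ_coe, pj3, c_jk]; norm_num

lemma pj5 : ((φ^5) ⟨jB, j_mem⟩ : B) = ⟨0,0,1/2,-1/2⟩ := by
  rw [pow_apply_succ, φ_coe, pj4, c_jk]; norm_num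

lemma order_φ : orderOf φ = 6 := by
  have hdvd : orderOf φ ∣ 6 := orderOf_dvd_of_pow_eq_one φ6
  have h2 : φ^2 ≠ 1 := by
    intro h
    have h' := congrArg (fun ψ : RingAut O => ((ψ ⟨jB, j_mem⟩ : O) : B)) h
    rw [pj2] at h'
    have h'' : (⟨0,0,-1/2,1/2⟩ : B) = jB := h'
    rw [jB, QuaternionAlgebra.mk.injEq] at h''
    norm_num at h''
  have h3 : φ^3 ≠ 1 := by
    intro h
    have h' := congrArg (fun ψ : RingAut O => ((ψ ⟨jB, j_mem⟩ : O) : B)) h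
    rw [pj3] at h'
    have h'' : (⟨0,0,-1,0⟩ : B) = jB := h'
    rw [jB, QuaternionAlgebra.mk.injEq] at h''
    norm_num at h''
  have hpos : 0 < orderOf φ := Nat.pos_of_ne_zero (by intro h; rw [h] at hdvd; omega)
  have hle : orderOf φ ≤ 6 := Nat.le_of_dvd (by norm_num) hdvd
  have hcases : orderOf φ = 1 ∨ orderOf φ = 2 ∨ orderOf φ = 3 ∨ orderOf φ = 6 := by
    interval_cases h : orderOf φ <;> revert hdvd <;> norm_num
  rcases hcases with h | h | h | h
  · exact absurd (by rw [orderOf_eq_one_iff.mp h]; simp) h2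
  · exact absurd (h ▸ pow_orderOf_eq_one φ) h2
  · exact absurd (h ▸ pow_orderOf_eq_one φ) h3
  · exact h

def O' : Subring B where
  carrier := {x | ∃ a b cc d : ℤ, x = ⟨a - b/2, b/2, cc - d/2, d/2⟩}
  one_mem' := ⟨1, 0, 0, 0, by ext <;> simp⟩
  zero_mem' := ⟨0, 0, 0, 0, by ext <;> simp⟩
  add_mem' := by
    rintro x y ⟨a, b, cc, d, rfl⟩ ⟨a', b', c', d', rfl⟩
    exact ⟨a + a', b + b', cc + c', d + d', by ext <;> simp <;> push_cast <;> ring⟩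
  neg_mem' := by
    rintro x ⟨a, b, cc, d, rfl⟩
    exact ⟨-a, -b, -cc, -d, by ext <;> simp <;> push_cast <;> ring⟩
  mul_mem' := by
    rintro x y ⟨a, b, cc, d, rfl⟩ ⟨a', b', c', d', rfl⟩
    refine ⟨a*a' - b*b' + 2*cc*c' - 2*cc*d' + 2*d*d',
            a*b' + b*a' - b*b' - 2*cc*d' + 2*d*c',
            a*c' - b*d' + cc*a' - cc*b' + d*b',
            a*d' + b*c' - b*d' - cc*b' + d*a', ?_⟩
    ext <;> simp <;> push_cast <;> ring

lemma O_le_O' : O ≤ O' := by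
  rw [O, Subring.closure_le]
  rintro x (rfl | rfl)
  · exact ⟨0, 1, 0, 0, by ext <;> simp [ωB] <;> norm_num⟩
  · exact ⟨0, 0, 1, 0, by ext <;> simp [jB] <;> norm_num⟩

lemma eq_of_agree (ψ χ : RingAut O)
    (hω : ψ ⟨ωB, ω_mem⟩ = χ ⟨ωB, ω_mem⟩)
    (hj : ψ ⟨jB, j_mem⟩ = χ ⟨jB, j_mem⟩) : ψ = χ := by
  let f : ↥O →+* B := O.subtype.comp (ψ : ↥O →+* ↥O)
  let g : ↥O →+* B := O.subtype.comp (χ : ↥O →+* ↥O)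
  have key : O ≤ (f.eqLocus g).map O.subtype := by
    show Subring.closure {ωB, jB} ≤ _
    rw [Subring.closure_le]
    rintro x (rfl | rfl)
    · exact ⟨⟨ωB, ω_mem⟩, congrArg Subtype.val hω, rfl⟩
    · exact ⟨⟨jB, j_mem⟩, congrArg Subtype.val hj, rfl⟩
  apply RingEquiv.ext
  intro x
  obtain ⟨y, hy, hyx⟩ := key x.2
  have hxy : y = x := Subtype.ext hyx
  subst hxy
  exact Subtype.ext hy

def fixI : Subgroup (RingAut O) where
  carrier := {ψ | ψ ⟨iB, i_mem_O⟩ = ⟨iB, i_mem_O⟩}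
  one_mem' := rfl
  mul_mem' := by
    intro a b ha hb
    show a (b _) = _
    rw [hb, ha]
  inv_mem' := by
    intro a ha
    show a.symm _ = _
    conv_lhs => rw [← ha]
    rw [RingEquiv.symm_apply_apply]

lemma φ_fix_i : φ ⟨iB, i_mem_O⟩ = ⟨iB, i_mem_O⟩ := Subtype.ext c_i

lemma pj0 : ((φ^0) ⟨jB, j_mem⟩ : B) = ⟨0,0,1,0⟩ := by rw [pow_zero]; rfl

set_option synthInstance.maxHeartbeats 1000000 in
set_option maxHeartbeats 2000000 in
lemma forward (ψ : RingAut O) (hi : ψ ⟨iB, i_mem_O⟩ = ⟨iB, i_mem_O⟩) :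
    ψ ∈ Subgroup.zpowers φ := by
  -- step 1 : ψ fixes ω
  have hrel : (⟨iB, i_mem_O⟩ : O) = 1 + ⟨ωB, ω_mem⟩ + ⟨ωB, ω_mem⟩ := by
    apply Subtype.ext
    push_cast
    ext <;> simp [iB, ωB] <;> norm_num
  have hψrel := congrArg ψ hrel
  simp only [map_add, map_one] at hψrel
  rw [hi] at hψrel
  set w : O := ψ ⟨ωB, ω_mem⟩ with hw
  have hBeq : ωB + ωB = (w : B) + (w : B) := by
    have h0 := congrArg (Subtype.val) (hrel.symm.trans hψrel)
    push_cast at h0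
    -- h0 : 1 + ωB + ωB = 1 + ↑w + ↑w
    rw [add_assoc, add_assoc] at h0
    exact add_left_cancel h0
  have hωfix : ψ ⟨ωB, ω_mem⟩ = ⟨ωB, ω_mem⟩ := by
    rw [← hw]
    apply Subtype.ext
    show (w : B) = ωB
    have h1 := congrArg QuaternionAlgebra.re hBeq
    have h2 := congrArg QuaternionAlgebra.imI hBeq
    have h3 := congrArg QuaternionAlgebra.imJ hBeq
    have h4 := congrArg QuaternionAlgebra.imK hBeq
    simp [ωB] at h1 h2 h3 h4
    ext <;> simp [ωB] <;> linarith
  -- step 2 : constraints on q = ψ j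
  set q : O := ψ ⟨jB, j_mem⟩ with hqdef
  have hantiO : (⟨jB, j_mem⟩ : O) * ⟨iB, i_mem_O⟩ + ⟨iB, i_mem_O⟩ * ⟨jB, j_mem⟩ = 0 := by
    apply Subtype.ext
    push_cast
    ext <;> simp [iB, jB]
  have hanti := congrArg ψ hantiO
  simp only [map_add, map_mul, map_zero] at hanti
  rw [hi] at hanti
  have hantiB : (q : B) * iB + iB * (q : B) = 0 := by
    have := congrArg Subtype.val hanti
    push_cast at this
    exact this
  have hsqO : (⟨jB, j_mem⟩ : O) * ⟨jB, j_mem⟩ = 1 + 1 := by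
    apply Subtype.ext
    push_cast
    ext <;> simp [jB] <;> norm_num
  have hsq := congrArg ψ hsqO
  simp only [map_mul, map_add, map_one] at hsq
  have hsqB : (q : B) * (q : B) = 1 + 1 := by
    have := congrArg Subtype.val hsq
    push_cast at this
    exact this
  obtain ⟨a, b, cc, d, hq⟩ := O_le_O' q.2
  -- b = 0 and a = 0
  have hb : b = 0 := by
    have h1 := congrArg QuaternionAlgebra.re hantiB
    rw [hq] at h1
    simp [iB] at h1
    exact_mod_cast h1
  have ha : a = 0 := by
    have h1 := congrArg QuaternionAlgebra.imI hantiB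
    rw [hq] at h1
    simp [iB, hb] at h1
    exact_mod_cast h1
  subst ha hb
  -- norm equation
  have hnorm : cc^2 - cc*d + d^2 = 1 := by
    have h1 := congrArg QuaternionAlgebra.re hsqB
    rw [hq] at h1
    simp at h1
    have h2 : (cc : ℚ)^2 - cc*d + d^2 = 1 := by nlinarith [h1]
    exact_mod_cast h2
  have h3d : 3*d^2 ≤ 4 := by nlinarith [sq_nonneg (2*cc - d)]
  have h3c : 3*cc^2 ≤ 4 := by nlinarith [sq_nonneg (cc - 2*d)]
  have hd1 : -1 ≤ d := by nlinarith [sq_nonneg (d+1)]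
  have hd2 : d ≤ 1 := by nlinarith [sq_nonneg (d-1)]
  have hc1 : -1 ≤ cc := by nlinarith [sq_nonneg (cc+1)]
  have hc2 : cc ≤ 1 := by nlinarith [sq_nonneg (cc-1)]
  clear hrel hψrel hantiO hanti hsqO hsq hantiB hsqB hBeq hi
  rw [Subgroup.mem_zpowers_iff]
  interval_cases cc <;> interval_cases d
  · refine ⟨(4:ℤ), ?_⟩
    rw [show (4:ℤ) = ((4:ℕ):ℤ) from rfl, zpow_natCast]
    refine eq_of_agree _ _ (by rw [φpow_ω, hωfix]) ?_
    apply Subtype.ext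
    rw [pj4]
    show _ = (q : B)
    rw [hq]
    ext <;> norm_num
  · refine ⟨(3:ℤ), ?_⟩
    rw [show (3:ℤ) = ((3:ℕ):ℤ) from rfl, zpow_natCast]
    refine eq_of_agree _ _ (by rw [φpow_ω, hωfix]) ?_
    apply Subtype.ext
    rw [pj3]
    show _ = (q : B)
    rw [hq]
    ext <;> norm_num
  · exact absurd hnorm (by norm_num)
  · refine ⟨(5:ℤ), ?_⟩
    rw [show (5:ℤ) = ((5:ℕ):ℤ) from rfl, zpow_natCast]
    refine eq_of_agree _ _ (by rw [φpow_ω, hωfix]) ?_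
    apply Subtype.ext
    rw [pj5]
    show _ = (q : B)
    rw [hq]
    ext <;> norm_num
  · exact absurd hnorm (by norm_num)
  · refine ⟨(2:ℤ), ?_⟩
    rw [show (2:ℤ) = ((2:ℕ):ℤ) from rfl, zpow_natCast]
    refine eq_of_agree _ _ (by rw [φpow_ω, hωfix]) ?_
    apply Subtype.ext
    rw [pj2]
    show _ = (q : B)
    rw [hq]
    ext <;> norm_num
  · exact absurd hnorm (by norm_num)
  · refine ⟨(0:ℤ), ?_⟩
    rw [show (0:ℤ) = ((0:ℕ):ℤ) from rfl, zpow_natCast]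
    refine eq_of_agree _ _ (by rw [φpow_ω, hωfix]) ?_
    apply Subtype.ext
    rw [pj0]
    show _ = (q : B)
    rw [hq]
    ext <;> norm_num
  · refine ⟨(1:ℤ), ?_⟩
    rw [show (1:ℤ) = ((1:ℕ):ℤ) from rfl, zpow_natCast]
    refine eq_of_agree _ _ (by rw [φpow_ω, hωfix]) ?_
    apply Subtype.ext
    rw [pj1]
    show _ = (q : B)
    rw [hq]
    ext <;> norm_num

/-- The element `1 − ω` is invertible in `B`, conjugation by it preserves `𝒪`, hence it
induces a ring automorphism `[1 − ω]` of `𝒪`; this automorphism has order exactly `6`, and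
`Aut_i⁺(𝒪) = {φ : φ(i) = i}` is precisely the cyclic subgroup generated by `[1 − ω]`
(in particular, `Aut_i⁺(𝒪)` is cyclic of order `6`). -/
theorem bielliptic_Aut_i_plus_cyclic_of_order_six :
    ∃ u : Bˣ, (u : B) = 1 - ωB ∧
      (∀ x : B, ((u⁻¹ : Bˣ) : B) * x * (u : B) ∈ O ↔ x ∈ O) ∧
      ∃ φ : RingAut O,
        (∀ x : O, (φ x : B) = ((u⁻¹ : Bˣ) : B) * (x : B) * (u : B)) ∧
        orderOf φ = 6 ∧
        ∀ ψ : RingAut O, (ψ ⟨iB, i_mem_O⟩ = ⟨iB, i_mem_O⟩ ↔ ψ ∈ Subgroup.zpowers φ) := by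
  refine ⟨u, rfl, ?_, φ, ?_, order_φ, ?_⟩
  · intro x
    exact mem_O_iff x
  · intro x
    exact φ_coe x
  · intro ψ
    refine ⟨forward ψ, fun h => ?_⟩
    have hm : ψ ∈ fixI := Subgroup.zpowers_le.mpr φ_fix_i h
    exact hm
end
end

section
/- The fixed subring of the automorphism [ij] of 𝒪, namely {x ∈ 𝒪 : (ij)x = x(ij)}, is equal to ℤ + ℤ·(ij), and this subring is isomorphic as a ring to ℤ[√6] (the quadratic ring ℤ[X]/(X² − 6)). -/
open Quaternion

noncomputable section

def Smod : Subring B where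
  carrier := {x : B | ∃ a b c d : ℤ,
    x.re = a - b/2 ∧ x.imI = b/2 ∧ x.imJ = c - d/2 ∧ x.imK = d/2}
  one_mem' := ⟨1, 0, 0, 0, by norm_num⟩
  zero_mem' := ⟨0, 0, 0, 0, by norm_num⟩
  add_mem' := by
    rintro x y ⟨a, b, c, d, h1, h2, h3, h4⟩ ⟨A, Bb, C, D, g1, g2, g3, g4⟩
    refine ⟨a + A, b + Bb, c + C, d + D, ?_, ?_, ?_, ?_⟩ <;>
      simp only [QuaternionAlgebra.re_add, QuaternionAlgebra.imI_add,
        QuaternionAlgebra.imJ_add, QuaternionAlgebra.imK_add, h1, h2, h3, h4,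
        g1, g2, g3, g4] <;> push_cast <;> ring
  neg_mem' := by
    rintro x ⟨a, b, c, d, h1, h2, h3, h4⟩
    refine ⟨-a, -b, -c, -d, ?_, ?_, ?_, ?_⟩ <;>
      simp only [QuaternionAlgebra.re_neg, QuaternionAlgebra.imI_neg,
        QuaternionAlgebra.imJ_neg, QuaternionAlgebra.imK_neg, h1, h2, h3, h4] <;>
      push_cast <;> ring
  mul_mem' := by
    rintro x y ⟨a, b, c, d, h1, h2, h3, h4⟩ ⟨A, Bb, C, D, g1, g2, g3, g4⟩
    refine ⟨a*A - b*Bb + 2*c*C - 2*c*D + 2*d*D,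
            a*Bb + A*b - b*Bb - 2*c*D + 2*d*C,
            a*C + A*c - b*D - Bb*c + Bb*d,
            a*D + A*d + b*C - b*D - Bb*c, ?_, ?_, ?_, ?_⟩ <;>
      simp only [QuaternionAlgebra.re_mul, QuaternionAlgebra.imI_mul,
        QuaternionAlgebra.imJ_mul, QuaternionAlgebra.imK_mul, h1, h2, h3, h4,
        g1, g2, g3, g4] <;> push_cast <;> ring

lemma mem_Smod_O : ∀ x ∈ Smod, x ∈ O := by
  rintro x ⟨a, b, c, d, h1, h2, h3, h4⟩
  have hx : x = (a : B) + (b : B) * ωB + (c : B) * jB + (d : B) * (ωB * jB) := by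
    ext <;>
      simp [ωB, jB, h1, h2, h3, h4, QuaternionAlgebra.re_mul, QuaternionAlgebra.imI_mul,
        QuaternionAlgebra.imJ_mul, QuaternionAlgebra.imK_mul] <;> push_cast <;> ring
  rw [hx]
  have hω : ωB ∈ O := Subring.subset_closure (Set.mem_insert _ _)
  have hj : jB ∈ O := Subring.subset_closure (Set.mem_insert_of_mem _ rfl)
  exact Subring.add_mem _ (Subring.add_mem _ (Subring.add_mem _
    (intCast_mem O a) (Subring.mul_mem _ (intCast_mem O b) hω))
    (Subring.mul_mem _ (intCast_mem O c) hj))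
    (Subring.mul_mem _ (intCast_mem O d) (Subring.mul_mem _ hω hj))

lemma O_eq_Smod : O = Smod := by
  apply le_antisymm
  · apply Subring.closure_le.mpr
    rintro x (rfl | rfl)
    · exact ⟨0, 1, 0, 0, by norm_num [ωB]⟩
    · exact ⟨0, 0, 1, 0, by norm_num [jB]⟩
  · exact mem_Smod_O

lemma kB_eq : iB * jB = (⟨0, 0, 0, 1⟩ : B) := by
  ext <;> simp [iB, jB, QuaternionAlgebra.re_mul, QuaternionAlgebra.imI_mul,
    QuaternionAlgebra.imJ_mul, QuaternionAlgebra.imK_mul]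

set_option synthInstance.maxHeartbeats 1000000
set_option maxHeartbeats 1600000

/-- The fixed subring of the automorphism `[ij]` of `𝒪`, namely `{x ∈ 𝒪 : (ij)x = x(ij)}`, is
equal to `ℤ + ℤ·(ij)`, and it is isomorphic as a ring to `ℤ[√6]`. -/
theorem bielliptic_fixed_subring_of_conj_ij :
    (∀ x : B, x ∈ O ⊓ Subring.centralizer {iB * jB} ↔ (x ∈ O ∧ (iB * jB) * x = x * (iB * jB))) ∧
    (∀ x : B, (x ∈ O ∧ (iB * jB) * x = x * (iB * jB)) ↔
      ∃ m n : ℤ, x = (m : B) + (n : B) * (iB * jB)) ∧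
    Nonempty ((O ⊓ Subring.centralizer {iB * jB} : Subring B) ≃+* Zsqrtd 6) := by
  have hmem : ∀ x : B, x ∈ O ⊓ Subring.centralizer {iB * jB} ↔
      (x ∈ O ∧ (iB * jB) * x = x * (iB * jB)) := by
    intro x
    rw [Subring.mem_inf, Subring.mem_centralizer_iff]
    constructor
    · rintro ⟨h1, h2⟩; exact ⟨h1, h2 _ rfl⟩
    · rintro ⟨h1, h2⟩; exact ⟨h1, by rintro g rfl; exact h2⟩
  have hiff : ∀ x : B, (x ∈ O ∧ (iB * jB) * x = x * (iB * jB)) ↔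
      ∃ m n : ℤ, x = (m : B) + (n : B) * (iB * jB) := by
    intro x
    constructor
    · rintro ⟨hO, hc⟩
      rw [O_eq_Smod] at hO
      obtain ⟨a, b, c, d, h1, h2, h3, h4⟩ := hO
      rw [kB_eq] at hc
      have e2 := congrArg QuaternionAlgebra.imI hc
      have e3 := congrArg QuaternionAlgebra.imJ hc
      simp [QuaternionAlgebra.imI_mul, QuaternionAlgebra.imJ_mul] at e2 e3
      -- e2 : forces imJ = 0, e3 : forces imI = 0
      have himI : x.imI = 0 := by linarith
      have himJ : x.imJ = 0 := by linarith
      have hb : (b : ℚ) = 0 := by rw [h2] at himI; linarith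
      have hd : (d : ℚ) = 2 * c := by rw [h3] at himJ; linarith
      refine ⟨a, c, ?_⟩
      rw [kB_eq]
      ext <;> simp [h1, h2, h3, h4, hb, hd, QuaternionAlgebra.re_mul,
        QuaternionAlgebra.imI_mul, QuaternionAlgebra.imJ_mul,
        QuaternionAlgebra.imK_mul] <;> push_cast <;> linarith
    · rintro ⟨m, n, rfl⟩
      constructor
      · rw [O_eq_Smod, kB_eq]
        refine ⟨m, 0, n, 2*n, ?_, ?_, ?_, ?_⟩ <;>
          simp [QuaternionAlgebra.re_mul, QuaternionAlgebra.imI_mul,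
            QuaternionAlgebra.imJ_mul, QuaternionAlgebra.imK_mul] <;> push_cast <;> ring
      · rw [kB_eq]
        ext <;> simp [QuaternionAlgebra.re_mul, QuaternionAlgebra.imI_mul,
          QuaternionAlgebra.imJ_mul, QuaternionAlgebra.imK_mul] <;> ring
  have key : ∀ p q u v : ℤ, ((p:B) + (q:B) * (iB * jB)) * ((u:B) + (v:B) * (iB * jB))
      = (((p * u + 6 * q * v : ℤ)):B) + (((p * v + q * u : ℤ)):B) * (iB * jB) := by
    intro p q u v
    rw [kB_eq]
    ext <;>
      simp only [QuaternionAlgebra.re_mul, QuaternionAlgebra.imI_mul,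
        QuaternionAlgebra.imJ_mul, QuaternionAlgebra.imK_mul,
        QuaternionAlgebra.re_add, QuaternionAlgebra.imI_add, QuaternionAlgebra.imJ_add,
        QuaternionAlgebra.imK_add, QuaternionAlgebra.re_intCast, QuaternionAlgebra.imI_intCast,
        QuaternionAlgebra.imJ_intCast, QuaternionAlgebra.imK_intCast] <;>
      push_cast <;> ring
  refine ⟨hmem, hiff, ?_⟩
  let f : Zsqrtd 6 →+* B :=
  { toFun := fun z => (z.re : B) + (z.im : B) * (iB * jB)
    map_one' := by simp
    map_zero' := by simp
    map_add' := by
      intro z w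
      push_cast [Zsqrtd.re_add, Zsqrtd.im_add]
      rw [add_mul]
      abel
    map_mul' := by
      intro z w
      show ((((z*w).re : ℤ) : B) + (((z*w).im : ℤ) : B) * (iB * jB)) = _
      simp only [Zsqrtd.re_mul, Zsqrtd.im_mul]
      exact (key z.re z.im w.re w.im).symm }
  have hfmem : ∀ z : Zsqrtd 6, f z ∈ O ⊓ Subring.centralizer {iB * jB} := by
    intro z
    rw [hmem, hiff]
    exact ⟨z.re, z.im, rfl⟩
  let f' : Zsqrtd 6 →+* (O ⊓ Subring.centralizer {iB * jB} : Subring B) :=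
    f.codRestrict _ hfmem
  have hbij : Function.Bijective f' := by
    constructor
    · intro z w h
      have h2 : f z = f w := congrArg Subtype.val h
      simp only [f, RingHom.coe_mk, MonoidHom.coe_mk, OneHom.coe_mk] at h2
      have e1 := congrArg QuaternionAlgebra.re h2
      have e4 := congrArg QuaternionAlgebra.imK h2
      simp [kB_eq, QuaternionAlgebra.re_mul, QuaternionAlgebra.imK_mul] at e1 e4
      ext
      · exact_mod_cast e1
      · exact_mod_cast e4
    · rintro ⟨x, hx⟩
      rw [hmem, hiff] at hx
      obtain ⟨m, n, rfl⟩ := hx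
      exact ⟨⟨m, n⟩, rfl⟩
  exact ⟨(RingEquiv.ofBijective f' hbij).symm⟩
end
end

section
/- For every integer m such that the automorphism [1 − ω]^m of 𝒪 is not the identity, the fixed subring {x ∈ 𝒪 : (1 − ω)^m · x = x · (1 − ω)^m} is equal to ℤ + ℤω, the subring of 𝒪 generated by ω (i.e., the image of ℤ[ω] in B). -/
open Quaternion

noncomputable section

/-- The underlying set of the ℤ-lattice `ℤ + ℤω + ℤj + ℤωj`. -/
def Mset : Set B := {x | ∃ a b c d : ℤ, x = (a:B) + (b:B)*ωB + (c:B)*jB + (d:B)*(ωB*jB)}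

/-- The ℤ-lattice `ℤ + ℤω + ℤj + ℤωj`, as a subring of `B`. -/
def M : Subring B where
  carrier := Mset
  zero_mem' := ⟨0, 0, 0, 0, by push_cast; simp⟩
  one_mem' := ⟨1, 0, 0, 0, by push_cast; simp⟩
  add_mem' := by
    rintro _ _ ⟨a,b,c,d,rfl⟩ ⟨a',b',c',d',rfl⟩
    exact ⟨a+a', b+b', c+c', d+d', by push_cast; noncomm_ring⟩
  neg_mem' := by
    rintro _ ⟨a,b,c,d,rfl⟩
    exact ⟨-a, -b, -c, -d, by push_cast; noncomm_ring⟩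
  mul_mem' := by
    rintro _ _ ⟨a,b,c,d,rfl⟩ ⟨a',b',c',d',rfl⟩
    exact ⟨a*a' - b*b' + (c*c'+c*c') - (c*d'+c*d') + (d*d'+d*d'),
           a*b' + b*a' - b*b' - (c*d'+c*d') + (d*c'+d*c'),
           a*c' + c*a' - b*d' - c*b' + d*b',
           a*d' + d*a' + b*c' - b*d' - c*b', by
      ext <;> push_cast <;> simp [ωB, jB] <;> ring⟩

lemma mem_M {x : B} : x ∈ M ↔ x ∈ Mset := Iff.rfl

lemma O_le_M : O ≤ M := by
  apply Subring.closure_le.mpr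
  rintro x (rfl | rfl) <;> rw [SetLike.mem_coe, mem_M]
  · exact ⟨0, 1, 0, 0, by push_cast; simp⟩
  · exact ⟨0, 0, 1, 0, by push_cast; simp⟩

/-- The subring `ℚ(i)` of `B`: quaternions with vanishing `j` and `k` parts. -/
def C : Subring B where
  carrier := {x | x.imJ = 0 ∧ x.imK = 0}
  zero_mem' := ⟨rfl, rfl⟩
  one_mem' := ⟨rfl, rfl⟩
  add_mem' := by rintro x y ⟨h1, h2⟩ ⟨h3, h4⟩; constructor <;> simp [h1, h2, h3, h4]
  neg_mem' := by rintro x ⟨h1, h2⟩; constructor <;> simp [h1, h2]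
  mul_mem' := by rintro x y ⟨h1, h2⟩ ⟨h3, h4⟩; constructor <;> simp [h1, h2, h3, h4]

lemma C_comm {x y : B} (hx : x ∈ C) (hy : y ∈ C) : x * y = y * x := by
  obtain ⟨h1, h2⟩ := hx
  obtain ⟨h3, h4⟩ := hy
  ext <;> simp [h1, h2, h3, h4] <;> ring

lemma central_of_scalar {x : B} (h1 : x.imI = 0) (h2 : x.imJ = 0) (h3 : x.imK = 0) (y : B) :
    x * y = y * x := by
  ext <;> simp [h1, h2, h3] <;> ring

lemma one_sub_ω_unit : ∃ u : Bˣ, (u : B) = 1 - ωB := by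
  refine ⟨⟨1 - ωB, ⟨1/2, 1/6, 0, 0⟩, ?_, ?_⟩, rfl⟩ <;>
    · ext <;> simp [ωB] <;> norm_num

lemma zpow_mem_C (u : Bˣ) (hu : (u : B) = 1 - ωB) (m : ℤ) : ((u ^ m : Bˣ) : B) ∈ C := by
  have huC : (u : B) ∈ C := by rw [hu]; exact ⟨by simp [ωB], by simp [ωB]⟩
  have hinv : ((u⁻¹ : Bˣ) : B) = ⟨1/2, 1/6, 0, 0⟩ := by
    have h1 : (u : B) * ⟨1/2, 1/6, 0, 0⟩ = 1 := by
      rw [hu]; ext <;> simp [ωB] <;> norm_num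
    have h2 : (⟨1/2, 1/6, 0, 0⟩ : B) * (u : B) = 1 := by
      rw [hu]; ext <;> simp [ωB] <;> norm_num
    calc ((u⁻¹ : Bˣ) : B) = ((u⁻¹ : Bˣ) : B) * ((u : B) * ⟨1/2, 1/6, 0, 0⟩) := by
          rw [h1, mul_one]
      _ = ⟨1/2, 1/6, 0, 0⟩ := by rw [← mul_assoc, Units.inv_mul, one_mul]
  have huinvC : ((u⁻¹ : Bˣ) : B) ∈ C := by rw [hinv]; exact ⟨rfl, rfl⟩
  cases m with
  | ofNat n =>
    rw [Int.ofNat_eq_coe, zpow_natCast, Units.val_pow_eq_pow_val]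
    exact pow_mem huC n
  | negSucc n =>
    rw [zpow_negSucc, ← inv_pow, Units.val_pow_eq_pow_val]
    exact pow_mem huinvC _

/-- For every integer `m` such that the automorphism `[1 − ω]^m` of `𝒪` is not the identity
(equivalently, `(1 − ω)^m` does not commute with all of `𝒪`), the fixed subring
`{x ∈ 𝒪 : (1 − ω)^m · x = x · (1 − ω)^m}` is equal to `ℤ + ℤω`, the image of `ℤ[ω]` in `B`. -/
theorem bielliptic_fixed_subring_of_conj_one_sub_omega_pow :
    (∃ u : Bˣ, (u : B) = 1 - ωB) ∧
    ∀ u : Bˣ, (u : B) = 1 - ωB →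
      ∀ m : ℤ,
        (¬ ∀ x ∈ O, ((u ^ m : Bˣ) : B) * x = x * ((u ^ m : Bˣ) : B)) →
        ∀ x : B,
          (x ∈ O ∧ ((u ^ m : Bˣ) : B) * x = x * ((u ^ m : Bˣ) : B)) ↔
            ∃ p q : ℤ, x = (p : B) + (q : B) * ωB := by
  refine ⟨one_sub_ω_unit, ?_⟩
  intro u hu m hm x
  obtain ⟨hUJ, hUK⟩ := zpow_mem_C u hu m
  set U : B := ((u ^ m : Bˣ) : B) with hU
  have ht : U.imI ≠ 0 := by
    intro ht
    exact hm (fun y _ => central_of_scalar ht hUJ hUK y)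
  constructor
  · rintro ⟨hxO, hcomm⟩
    -- from the commutation relation, the j and k parts of x vanish
    have hJ : x.imJ = 0 := by
      have h := congrArg QuaternionAlgebra.imK hcomm
      simp [hUJ, hUK] at h
      have h2 : U.imI * x.imJ = 0 := by linear_combination h / 2
      rcases mul_eq_zero.mp h2 with h3 | h3
      · exact absurd h3 ht
      · exact h3
    have hK : x.imK = 0 := by
      have h := congrArg QuaternionAlgebra.imJ hcomm
      simp [hUJ, hUK] at h
      have h2 : U.imI * x.imK = 0 := by linear_combination -h / 6
      rcases mul_eq_zero.mp h2 with h3 | h3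
      · exact absurd h3 ht
      · exact h3
    obtain ⟨a, b, c, d, hx⟩ := mem_M.mp (O_le_M hxO)
    have hd : d = 0 := by
      have := congrArg QuaternionAlgebra.imK hx
      simp [hK, ωB, jB] at this
      exact_mod_cast this
    have hc : c = 0 := by
      have := congrArg QuaternionAlgebra.imJ hx
      simp [hJ, ωB, jB, hd] at this
      exact_mod_cast this.symm
    refine ⟨a, b, ?_⟩
    rw [hx, hc, hd]
    push_cast
    simp
  · rintro ⟨p, q, rfl⟩
    refine ⟨?_, ?_⟩
    · exact Subring.add_mem _ (intCast_mem O p)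
        (Subring.mul_mem _ (intCast_mem O q)
          (Subring.subset_closure (Set.mem_insert _ _)))
    · have hx : ((p : B) + (q : B) * ωB) ∈ C := by
        constructor <;> simp [ωB]
      exact C_comm ⟨hUJ, hUK⟩ hx
end
end

section
/- Every element of 𝒪 is integral over ℤ, and 𝒪 is a maximal order in B: if 𝒪′ is a subring of B containing 𝒪 all of whose elements are integral over ℤ, then 𝒪′ = 𝒪. -/
open Quaternion

noncomputable section

def Oexp : Subring B where
  carrier := {x | ∃ p q r s : ℤ, x.re = p - q/2 ∧ x.imI = q/2 ∧ x.imJ = r - s/2 ∧ x.imK = s/2}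
  zero_mem' := ⟨0,0,0,0, by norm_num⟩
  one_mem' := ⟨1,0,0,0, by norm_num⟩
  add_mem' := by
    rintro x y ⟨p,q,r,s,h1,h2,h3,h4⟩ ⟨p',q',r',s',g1,g2,g3,g4⟩
    refine ⟨p+p', q+q', r+r', s+s', ?_, ?_, ?_, ?_⟩ <;> simp [h1,h2,h3,h4,g1,g2,g3,g4] <;> push_cast <;> ring
  neg_mem' := by
    rintro x ⟨p,q,r,s,h1,h2,h3,h4⟩
    refine ⟨-p,-q,-r,-s, ?_, ?_, ?_, ?_⟩ <;> simp [h1,h2,h3,h4] <;> push_cast <;> ring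
  mul_mem' := by
    rintro x y ⟨p,q,r,s,h1,h2,h3,h4⟩ ⟨p',q',r',s',g1,g2,g3,g4⟩
    refine ⟨p*p' - q*q' + 2*r*r' - 2*r*s' + 2*s*s',
            p*q' + q*p' - q*q' - 2*r*s' + 2*s*r',
            p*r' - q*s' + r*p' - r*q' + s*q',
            p*s' + q*r' - q*s' - r*q' + s*p', ?_, ?_, ?_, ?_⟩ <;>
      simp only [QuaternionAlgebra.re_mul, QuaternionAlgebra.imI_mul,
        QuaternionAlgebra.imJ_mul, QuaternionAlgebra.imK_mul, h1,h2,h3,h4,g1,g2,g3,g4] <;>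
      push_cast <;> ring

lemma O_eq_Oexp : O = Oexp := by
  apply le_antisymm
  · rw [O, Subring.closure_le]
    rintro x (rfl | rfl)
    · exact ⟨0, 1, 0, 0, by norm_num [ωB]⟩
    · exact ⟨0, 0, 1, 0, by norm_num [jB]⟩
  · rintro x ⟨p,q,r,s,h1,h2,h3,h4⟩
    have hx : x = (p : B) + (q : B) * ωB + (r : B) * jB + (s : B) * (ωB * jB) := by
      ext <;>
        simp [QuaternionAlgebra.re_intCast, QuaternionAlgebra.imI_intCast,
          QuaternionAlgebra.imJ_intCast, QuaternionAlgebra.imK_intCast,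
          QuaternionAlgebra.re_mul, QuaternionAlgebra.imI_mul, QuaternionAlgebra.imJ_mul,
          QuaternionAlgebra.imK_mul, ωB, jB, h1, h2, h3, h4] <;> ring
    rw [hx]
    have hω : ωB ∈ O := Subring.subset_closure (Set.mem_insert _ _)
    have hj : jB ∈ O := Subring.subset_closure (Set.mem_insert_of_mem _ rfl)
    exact Subring.add_mem _ (Subring.add_mem _ (Subring.add_mem _ (intCast_mem _ p)
      (Subring.mul_mem _ (intCast_mem _ q) hω))
      (Subring.mul_mem _ (intCast_mem _ r) hj))
      (Subring.mul_mem _ (intCast_mem _ s) (Subring.mul_mem _ hω hj))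

lemma mem_O_iff_s5 {x : B} : x ∈ O ↔ ∃ p q r s : ℤ,
    x.re = p - q/2 ∧ x.imI = q/2 ∧ x.imJ = r - s/2 ∧ x.imK = s/2 := by
  rw [O_eq_Oexp]; rfl

open Polynomial in
lemma quad_int (x : B) (t n : ℤ) (h : x*x - (t:B)*x + (n:B) = 0) : IsIntegral ℤ x := by
  refine ⟨X^2 - (C t * X - C n), monic_X_pow_sub ?_, ?_⟩
  · refine lt_of_le_of_lt (degree_sub_le _ _) ?_
    simp only [max_lt_iff]
    exact ⟨lt_of_le_of_lt (degree_C_mul_X_le _) (by norm_num),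
           lt_of_le_of_lt degree_C_le (by norm_num)⟩
  · rw [← Polynomial.aeval_def]
    simp only [map_sub, map_mul, map_pow, aeval_X, aeval_C, algebraMap_int_eq,
      eq_intCast, map_intCast]
    rw [pow_two, show x*x - ((t:B)*x - (n:B)) = x*x - (t:B)*x + (n:B) by abel, h]

lemma O_integral {x : B} (hx : x ∈ O) : IsIntegral ℤ x := by
  obtain ⟨p,q,r,s,h1,h2,h3,h4⟩ := mem_O_iff_s5.mp hx
  apply quad_int x (2*p - q) (p^2 - p*q + q^2 - 2*r^2 + 2*r*s - 2*s^2)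
  ext <;>
    simp only [QuaternionAlgebra.re_mul, QuaternionAlgebra.imI_mul, QuaternionAlgebra.imJ_mul,
      QuaternionAlgebra.imK_mul, QuaternionAlgebra.re_add, QuaternionAlgebra.imI_add,
      QuaternionAlgebra.imJ_add, QuaternionAlgebra.imK_add, QuaternionAlgebra.re_sub,
      QuaternionAlgebra.imI_sub, QuaternionAlgebra.imJ_sub, QuaternionAlgebra.imK_sub,
      QuaternionAlgebra.re_intCast, QuaternionAlgebra.imI_intCast, QuaternionAlgebra.imJ_intCast,
      QuaternionAlgebra.imK_intCast, QuaternionAlgebra.re_zero, QuaternionAlgebra.imI_zero,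
      QuaternionAlgebra.imJ_zero, QuaternionAlgebra.imK_zero, h1, h2, h3, h4] <;>
    push_cast <;> ring

open Polynomial in
lemma trd_nrd_int {y : B} (hy : IsIntegral ℤ y) :
    (∃ m : ℤ, 2*y.re = (m:ℚ)) ∧
    ∃ m : ℤ, y.re^2 + 3*y.imI^2 - 2*y.imJ^2 - 6*y.imK^2 = (m:ℚ) := by
  by_cases hs : y.imI = 0 ∧ y.imJ = 0 ∧ y.imK = 0
  · obtain ⟨e1, e2, e3⟩ := hs
    have hy' : y = algebraMap ℚ B y.re := by
      ext <;> simp [QuaternionAlgebra.coe_algebraMap, e1, e2, e3]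
    rw [hy'] at hy
    have : IsIntegral ℤ (y.re : ℚ) :=
      (isIntegral_algebraMap_iff (fun a b hab => by
        simpa using congrArg QuaternionAlgebra.re hab)).mp hy
    obtain ⟨m, hm⟩ := IsIntegrallyClosed.isIntegral_iff.mp this
    refine ⟨⟨2*m, ?_⟩, ⟨m^2, ?_⟩⟩ <;> simp [e1, e2, e3, ← hm] <;> push_cast <;> ring
  · -- non-scalar case
    set t : ℚ := 2 * y.re with ht
    set n : ℚ := y.re^2 + 3*y.imI^2 - 2*y.imJ^2 - 6*y.imK^2 with hn
    have hq0 : y*y - algebraMap ℚ B t * y + algebraMap ℚ B n = 0 := by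
      ext <;>
        simp only [QuaternionAlgebra.re_mul, QuaternionAlgebra.imI_mul, QuaternionAlgebra.imJ_mul,
          QuaternionAlgebra.imK_mul, QuaternionAlgebra.re_add, QuaternionAlgebra.imI_add,
          QuaternionAlgebra.imJ_add, QuaternionAlgebra.imK_add, QuaternionAlgebra.re_sub,
          QuaternionAlgebra.imI_sub, QuaternionAlgebra.imJ_sub, QuaternionAlgebra.imK_sub,
          QuaternionAlgebra.coe_algebraMap, QuaternionAlgebra.re_coe, QuaternionAlgebra.imI_coe,
          QuaternionAlgebra.imJ_coe, QuaternionAlgebra.imK_coe, QuaternionAlgebra.re_zero,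
          QuaternionAlgebra.imI_zero, QuaternionAlgebra.imJ_zero, QuaternionAlgebra.imK_zero] <;>
        ring
    set q : ℚ[X] := X^2 - (C t * X - C n) with hqdef
    have hqmonic : q.Monic := by
      refine monic_X_pow_sub ?_
      refine lt_of_le_of_lt (degree_sub_le _ _) ?_
      simp only [max_lt_iff]
      exact ⟨lt_of_le_of_lt (degree_C_mul_X_le _) (by norm_num),
             lt_of_le_of_lt degree_C_le (by norm_num)⟩
    have hqy : aeval y q = 0 := by
      simp only [hqdef, map_sub, map_mul, map_pow, aeval_X, aeval_C]
      rw [pow_two, show y*y - (algebraMap ℚ B t * y - algebraMap ℚ B n)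
          = y*y - algebraMap ℚ B t * y + algebraMap ℚ B n by abel, hq0]
    obtain ⟨f, hfm, hfy⟩ := hy
    have hfy' : aeval y (f.map (algebraMap ℤ ℚ)) = 0 := by
      rw [aeval_map_algebraMap, aeval_def, hfy]
    -- division with remainder
    have hdiv := (modByMonic_add_div (f.map (algebraMap ℤ ℚ)) q).symm
    have hrem : aeval y (f.map (algebraMap ℤ ℚ) %ₘ q) = 0 := by
      have := congrArg (aeval y) hdiv
      rw [hfy', map_add, map_mul, hqy, zero_mul, add_zero] at this
      exact this.symm
    set r : ℚ[X] := f.map (algebraMap ℤ ℚ) %ₘ q with hrdef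
    have hqdeg : q.degree = 2 := by rw [hqdef]; compute_degree!
    have hrdeg : r.degree ≤ 1 := by
      rcases eq_or_ne r 0 with h0 | h0
      · simp [h0]
      · have h := degree_modByMonic_lt (f.map (algebraMap ℤ ℚ)) hqmonic
        rw [hqdeg] at h
        have h2 := (natDegree_lt_iff_degree_lt h0).mpr (by exact_mod_cast h)
        exact degree_le_of_natDegree_le (Nat.lt_succ_iff.mp h2)
    have hrform := eq_X_add_C_of_degree_le_one hrdeg
    rw [hrform] at hrem
    simp only [map_add, map_mul, aeval_X, aeval_C] at hrem
    have hcomp : ∀ k : Fin 4, True := fun _ => trivial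
    -- components
    have h1 : r.coeff 1 * y.imI = 0 := by
      have := congrArg QuaternionAlgebra.imI hrem
      simpa [QuaternionAlgebra.coe_algebraMap] using this
    have h2 : r.coeff 1 * y.imJ = 0 := by
      have := congrArg QuaternionAlgebra.imJ hrem
      simpa [QuaternionAlgebra.coe_algebraMap] using this
    have h3 : r.coeff 1 * y.imK = 0 := by
      have := congrArg QuaternionAlgebra.imK hrem
      simpa [QuaternionAlgebra.coe_algebraMap] using this
    have hc1 : r.coeff 1 = 0 := by
      rcases mul_eq_zero.mp h1 with h | h
      · exact h
      rcases mul_eq_zero.mp h2 with h' | h'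
      · exact h'
      rcases mul_eq_zero.mp h3 with h'' | h''
      · exact h''
      exact absurd ⟨h, h', h''⟩ hs
    have hc0 : r.coeff 0 = 0 := by
      have := congrArg QuaternionAlgebra.re hrem
      simp [QuaternionAlgebra.coe_algebraMap, hc1] at this
      exact this
    have hr0 : r = 0 := by rw [hrform, hc1, hc0]; simp
    have hdvd : q ∣ f.map (algebraMap ℤ ℚ) :=
      (modByMonic_eq_zero_iff_dvd hqmonic).mp hr0
    obtain ⟨q', hq'⟩ := IsIntegrallyClosed.eq_map_mul_C_of_dvd (K := ℚ) hfm hdvd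
    rw [hqmonic.leadingCoeff, map_one, mul_one] at hq'
    have hcoe1 : (q'.coeff 1 : ℚ) = q.coeff 1 := by rw [← hq']; simp
    have hcoe0 : (q'.coeff 0 : ℚ) = q.coeff 0 := by rw [← hq']; simp
    have hq1 : q.coeff 1 = -t := by simp [hqdef]
    have hq0' : q.coeff 0 = n := by simp [hqdef]
    refine ⟨⟨-q'.coeff 1, ?_⟩, ⟨q'.coeff 0, ?_⟩⟩
    · show t = _
      rw [show ((-q'.coeff 1 : ℤ) : ℚ) = -((q'.coeff 1 : ℤ) : ℚ) by push_cast; ring,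
        hcoe1, hq1, neg_neg]
    · show n = _
      rw [hcoe0, hq0']

lemma key_arith (W A S G : ℤ) (h1 : 2 ∣ (W + A)) (h2 : 2 ∣ (S - G))
    (h3 : (24:ℤ) ∣ (6*W^2 + 2*A^2 - 3*S^2 - G^2)) :
    3 ∣ A ∧ 6 ∣ (3*W + A) ∧ 6 ∣ G ∧ 12 ∣ (3*S + G) := by
  obtain ⟨k, hk⟩ := h3
  -- mod 3
  have d3 : (3:ℤ) ∣ 2*A^2 - G^2 := ⟨8*k - 2*W^2 + S^2, by linarith⟩
  have z3 : ((2*A^2 - G^2 : ℤ) : ZMod 3) = 0 := (ZMod.intCast_zmod_eq_zero_iff_dvd _ _).mpr d3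
  push_cast at z3
  have dec3 : ∀ a g : ZMod 3, 2*a^2 - g^2 = 0 → a = 0 ∧ g = 0 := by decide
  obtain ⟨zA, zG⟩ := dec3 _ _ z3
  have hA3 : (3:ℤ) ∣ A := (ZMod.intCast_zmod_eq_zero_iff_dvd _ _).mp zA
  have hG3 : (3:ℤ) ∣ G := (ZMod.intCast_zmod_eq_zero_iff_dvd _ _).mp zG
  -- mod 8
  have e1 : ((4*(W+A) : ℤ) : ZMod 8) = 0 := by
    refine (ZMod.intCast_zmod_eq_zero_iff_dvd _ _).mpr ?_
    obtain ⟨u, hu⟩ := h1; exact ⟨u, by push_cast; linarith⟩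
  have e2 : ((4*(S-G) : ℤ) : ZMod 8) = 0 := by
    refine (ZMod.intCast_zmod_eq_zero_iff_dvd _ _).mpr ?_
    obtain ⟨u, hu⟩ := h2; exact ⟨u, by push_cast; linarith⟩
  have e3 : ((6*W^2 + 2*A^2 - 3*S^2 - G^2 : ℤ) : ZMod 8) = 0 := by
    refine (ZMod.intCast_zmod_eq_zero_iff_dvd _ _).mpr ⟨3*k, by push_cast; linarith⟩
  push_cast at e1 e2 e3
  have dec8 : ∀ w a s g : ZMod 8, 4*(w+a) = 0 → 4*(s-g) = 0 →
      6*w^2 + 2*a^2 - 3*s^2 - g^2 = 0 → 4*s = 0 ∧ 2*(3*s+g) = 0 := by decide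
  obtain ⟨zS, zSG⟩ := dec8 _ _ _ _ e1 e2 e3
  have hS2 : (2:ℤ) ∣ S := by
    have : ((4*S : ℤ) : ZMod 8) = 0 := by push_cast; exact zS
    have := (ZMod.intCast_zmod_eq_zero_iff_dvd _ _).mp this
    omega
  have hSG4 : (4:ℤ) ∣ 3*S + G := by
    have : ((2*(3*S+G) : ℤ) : ZMod 8) = 0 := by push_cast; exact zSG
    have := (ZMod.intCast_zmod_eq_zero_iff_dvd _ _).mp this
    omega
  refine ⟨hA3, by omega, by omega, by omega⟩

/-- Every element of `𝒪` is integral over `ℤ`, and `𝒪` is a maximal order in `B`: any subring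
of `B` containing `𝒪` all of whose elements are integral over `ℤ` equals `𝒪`. -/
theorem bielliptic_O_is_maximal_order :
    (∀ x ∈ O, IsIntegral ℤ x) ∧
    ∀ O' : Subring B, O ≤ O' → (∀ x ∈ O', IsIntegral ℤ x) → O' = O := by
  refine ⟨fun x hx => O_integral hx, fun O' hle hint => ?_⟩
  refine le_antisymm (fun x hx => ?_) hle
  have hω : ωB ∈ O' := hle (Subring.subset_closure (Set.mem_insert _ _))
  have hj : jB ∈ O' := hle (Subring.subset_closure (Set.mem_insert_of_mem _ rfl))
  obtain ⟨⟨m0, hm0⟩, ⟨m5, hm5⟩⟩ := trd_nrd_int (hint x hx)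
  obtain ⟨⟨m1, hm1⟩, -⟩ := trd_nrd_int (hint _ (Subring.mul_mem _ hx hω))
  obtain ⟨⟨m2, hm2⟩, -⟩ := trd_nrd_int (hint _ (Subring.mul_mem _ (Subring.mul_mem _ hx hω) hj))
  obtain ⟨⟨m3, hm3⟩, -⟩ := trd_nrd_int (hint _ (Subring.mul_mem _ (Subring.mul_mem _ hx hj) hω))
  obtain ⟨⟨m4, hm4⟩, -⟩ := trd_nrd_int (hint _ (Subring.mul_mem _ hx hj))
  simp only [QuaternionAlgebra.re_mul, QuaternionAlgebra.imI_mul, QuaternionAlgebra.imJ_mul,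
    QuaternionAlgebra.imK_mul, ωB, jB] at hm1 hm2 hm3 hm4
  norm_num at hm1 hm2 hm3 hm4
  have hw : ((m0:ℤ):ℚ) = 2*x.re := by linarith
  have hA : ((-2*m1 - m0 : ℤ):ℚ) = 6*x.imI := by push_cast; linarith
  have hS : ((m4:ℤ):ℚ) = 4*x.imJ := by push_cast; linarith
  have hG : ((m2 - m3 : ℤ):ℚ) = 12*x.imK := by push_cast; linarith
  have h1 : (2:ℤ) ∣ (m0 + (-2*m1 - m0)) := ⟨-m1, by ring⟩
  have hmrel : m4 + m3 + m2 = 0 := by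
    have : ((m4 + m3 + m2 : ℤ) : ℚ) = 0 := by push_cast; linarith
    exact_mod_cast this
  have h2 : (2:ℤ) ∣ (m4 - (m2 - m3)) := ⟨-m2, by omega⟩
  have h3 : (24:ℤ) ∣ (6*m0^2 + 2*(-2*m1 - m0)^2 - 3*m4^2 - (m2 - m3)^2) := by
    refine ⟨m5, ?_⟩
    have : ((6*m0^2 + 2*(-2*m1 - m0)^2 - 3*m4^2 - (m2 - m3)^2 : ℤ) : ℚ)
        = ((24*m5 : ℤ) : ℚ) := by
      push_cast
      push_cast at hw hA hS hG
      linear_combination 24*hm5 + 6*((m0:ℚ) + 2*x.re)*hw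
        + 2*((-2*(m1:ℚ) - (m0:ℚ)) + 6*x.imI)*hA - 3*((m4:ℚ) + 4*x.imJ)*hS
        - (((m2:ℚ) - (m3:ℚ)) + 12*x.imK)*hG
    exact_mod_cast this
  obtain ⟨hA3, hP6, hG6, hR12⟩ := key_arith m0 (-2*m1 - m0) m4 (m2 - m3) h1 h2 h3
  obtain ⟨Q, hQ⟩ := hA3
  obtain ⟨P, hP⟩ := hP6
  obtain ⟨Sx, hSx⟩ := hG6
  obtain ⟨R, hR⟩ := hR12
  have hPQ : 6*(P:ℚ) = 3*(m0:ℚ) + (-2*(m1:ℚ) - (m0:ℚ)) := by exact_mod_cast hP.symm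
  have hQQ : 3*(Q:ℚ) = -2*(m1:ℚ) - (m0:ℚ) := by exact_mod_cast hQ.symm
  have hRR : 12*(R:ℚ) = 3*(m4:ℚ) + ((m2:ℚ) - (m3:ℚ)) := by exact_mod_cast hR.symm
  have hSS : 6*(Sx:ℚ) = (m2:ℚ) - (m3:ℚ) := by exact_mod_cast hSx.symm
  push_cast at hw hA hS hG
  refine mem_O_iff_s5.mpr ⟨P, Q, R, Sx, by linarith, by linarith, by linarith, by linarith⟩
end
end

section
/- The point P₀ := (4t, 4a) is a k-rational point of E, and there exists a point Q ∈ E(k) with 2Q = P₀ (i.e., P₀ is divisible by 2 in the group E(k)) if and only if the polynomial g_{a,t}(z) = z⁴ − 6tz² + 4az − 3t² has a root in k. -/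
/-- The elliptic curve `y² = x³ + c` as an affine Weierstrass curve. -/
def Ec (k : Type*) [Field k] (c : k) : WeierstrassCurve.Affine k :=
  { a₁ := 0, a₂ := 0, a₃ := 0, a₄ := 0, a₆ := c }

lemma Point.some_eq_some {k : Type*} [Field k] {W : WeierstrassCurve.Affine k} {x₁ y₁ x₂ y₂ : k}
    (h₁ : W.Nonsingular x₁ y₁) (h₂ : W.Nonsingular x₂ y₂) (hx : x₁ = x₂) (hy : y₁ = y₂) :
    WeierstrassCurve.Affine.Point.some _ _ h₁ = WeierstrassCurve.Affine.Point.some _ _ h₂ := by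
  subst hx; subst hy; rfl

open Classical in
/-- Let `k` be a field of characteristic `≠ 2, 3`, let `a, t ∈ k`, `b = t³` with
`b(a² − 4b) ≠ 0`, and let `E : y² = x³ + 16(a² − 4b)`. Then `P₀ = (4t, 4a)` is a `k`-rational
point of `E`, and `P₀` is divisible by `2` in `E(k)` if and only if the polynomial
`g_{a,t}(z) = z⁴ − 6tz² + 4az − 3t²` has a root in `k`. -/
theorem Ec_point_divisible_by_two_iff_quartic_root {k : Type*} [Field k]
    (h2 : (2 : k) ≠ 0) (h3 : (3 : k) ≠ 0) (a t b : k) (hb : b = t ^ 3)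
    (hnz : b * (a ^ 2 - 4 * b) ≠ 0) :
    ∃ h : (Ec k (16 * (a ^ 2 - 4 * b))).Nonsingular (4 * t) (4 * a),
      ((∃ Q : (Ec k (16 * (a ^ 2 - 4 * b))).Point,
          2 • Q = WeierstrassCurve.Affine.Point.some (4 * t) (4 * a) h) ↔
        ∃ z : k, z ^ 4 - 6 * t * z ^ 2 + 4 * a * z - 3 * t ^ 2 = 0) := by
  subst hb
  have ht : t ≠ 0 := by rintro rfl; simp at hnz
  have hd : a ^ 2 - 4 * t ^ 3 ≠ 0 := by
    intro h; exact hnz (by rw [h, mul_zero])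
  have h4 : (4 : k) ≠ 0 := by
    have := pow_ne_zero 2 h2; rwa [show (2 : k) ^ 2 = 4 by norm_num] at this
  have h16 : (16 : k) ≠ 0 := by
    have := pow_ne_zero 4 h2; rwa [show (2 : k) ^ 4 = 16 by norm_num] at this
  set W : WeierstrassCurve.Affine k := Ec k (16 * (a ^ 2 - 4 * t ^ 3)) with hW
  have ha₁ : W.a₁ = 0 := rfl
  have ha₂ : W.a₂ = 0 := rfl
  have ha₃ : W.a₃ = 0 := rfl
  have ha₄ : W.a₄ = 0 := rfl
  have ha₆ : W.a₆ = 16 * (a ^ 2 - 4 * t ^ 3) := rfl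
  -- P₀ is a nonsingular point
  have hP : W.Nonsingular (4 * t) (4 * a) := by
    rw [WeierstrassCurve.Affine.nonsingular_iff, WeierstrassCurve.Affine.equation_iff,
      ha₁, ha₂, ha₃, ha₄, ha₆]
    refine ⟨by ring, Or.inl fun h => ?_⟩
    exact mul_ne_zero (mul_ne_zero h16 h3) (pow_ne_zero 2 ht) (by linear_combination -h)
  refine ⟨hP, ?_, ?_⟩
  · -- forward: divisibility implies a root of the quartic
    rintro ⟨Q, hQ⟩
    rw [two_nsmul] at hQ
    rcases Q with _ | @⟨x, y, hxy⟩
    · rw [← WeierstrassCurve.Affine.Point.zero_def, add_zero] at hQ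
      exact (WeierstrassCurve.Affine.Point.some_ne_zero hP hQ.symm).elim
    · by_cases hy : y = W.negY x y
      · rw [WeierstrassCurve.Affine.Point.add_self_of_Y_eq hy] at hQ
        exact (WeierstrassCurve.Affine.Point.some_ne_zero hP hQ.symm).elim
      · rw [WeierstrassCurve.Affine.Point.add_self_of_Y_ne hy] at hQ
        injection hQ with hX hY
        set L : k := W.slope x x y y with hL
        have hy0 : y ≠ 0 := by
          intro h0; apply hy
          rw [WeierstrassCurve.Affine.negY, ha₁, ha₃, h0]; ring
        have hden : y - W.negY x y ≠ 0 := sub_ne_zero.mpr hy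
        have hEL : L * (2 * y) = 3 * x ^ 2 := by
          rw [hL, WeierstrassCurve.Affine.slope_of_Y_ne rfl hy, div_mul_eq_mul_div,
            div_eq_iff hden, WeierstrassCurve.Affine.negY, ha₁, ha₂, ha₃, ha₄]
          ring
        have hE2 : L ^ 2 - 2 * x = 4 * t := by
          rw [WeierstrassCurve.Affine.addX, ha₁, ha₂] at hX
          linear_combination hX
        have hE3 : L * (x - 4 * t) - y = 4 * a := by
          rw [WeierstrassCurve.Affine.addY, WeierstrassCurve.Affine.negY,
            WeierstrassCurve.Affine.negAddY, WeierstrassCurve.Affine.addX,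
            ha₁, ha₂, ha₃] at hY
          linear_combination hY + L * hE2
        refine ⟨-(L / 2), ?_⟩
        set zw : k := -(L / 2) with hzw
        have hE0 : 2 * zw = -L := by
          rw [hzw]; field_simp
        have h16T : 16 * (zw ^ 4 - 6 * t * zw ^ 2 + 4 * a * zw - 3 * t ^ 2) = 0 := by
          linear_combination
            ((2 * zw - L) * ((2 * zw) ^ 2 + L ^ 2) - 24 * t * (2 * zw - L) + 32 * a) * hE0 +
            4 * hEL + (L ^ 2 - 6 * x + 12 * t) * hE2 + 8 * L * hE3
        exact (mul_eq_zero.mp h16T).resolve_left h16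
  · -- backward: a root of the quartic gives a halving point
    rintro ⟨z, hz⟩
    set x : k := 2 * (z ^ 2 - t) with hx
    set y : k := -4 * (z ^ 3 - 3 * t * z + a) with hy
    have hy0 : y ≠ 0 := by
      intro h0
      rw [hy] at h0
      have hcube : z ^ 3 - 3 * t * z + a = 0 := by
        have h40 : (4 : k) * (z ^ 3 - 3 * t * z + a) = 0 := by linear_combination -h0
        exact (mul_eq_zero.mp h40).resolve_left h4
      have hsq : (z ^ 2 - t) ^ 2 = 0 := by
        have h30 : (3 : k) * (z ^ 2 - t) ^ 2 = 0 := by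
          linear_combination 4 * z * hcube - hz
        exact (mul_eq_zero.mp h30).resolve_left h3
      have hzt : z ^ 2 = t := by
        have := pow_eq_zero_iff (n := 2) (by norm_num) |>.mp hsq
        linear_combination this
      apply hd
      have haz : a = 2 * t * z := by linear_combination hcube - z * hzt
      rw [haz]
      linear_combination (4 * t ^ 2) * hzt
    have hQ : W.Nonsingular x y := by
      rw [WeierstrassCurve.Affine.nonsingular_iff, WeierstrassCurve.Affine.equation_iff,
        ha₁, ha₂, ha₃, ha₄, ha₆]
      constructor
      · rw [hx, hy]
        linear_combination (8 * z ^ 2 - 24 * t) * hz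
      · refine Or.inr fun h => hy0 ?_
        have h2y0 : 2 * y = 0 := by linear_combination h
        exact (mul_eq_zero.mp h2y0).resolve_left h2
    have hyne : y ≠ W.negY x y := by
      rw [WeierstrassCurve.Affine.negY, ha₁, ha₃]
      intro h
      have h2y0 : 2 * y = 0 := by linear_combination h
      exact hy0 ((mul_eq_zero.mp h2y0).resolve_left h2)
    have hden : y - W.negY x y ≠ 0 := sub_ne_zero.mpr hyne
    refine ⟨WeierstrassCurve.Affine.Point.some _ _ hQ, ?_⟩
    rw [two_nsmul, WeierstrassCurve.Affine.Point.add_self_of_Y_ne hyne]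
    have hslope : W.slope x x y y = -2 * z := by
      rw [WeierstrassCurve.Affine.slope_of_Y_ne rfl hyne, div_eq_iff hden,
        WeierstrassCurve.Affine.negY, ha₁, ha₂, ha₃, ha₄, hx, hy]
      linear_combination -4 * hz
    apply Point.some_eq_some
    · rw [WeierstrassCurve.Affine.addX, ha₁, ha₂, hslope, hx]
      ring
    · rw [WeierstrassCurve.Affine.addY, WeierstrassCurve.Affine.negY,
        WeierstrassCurve.Affine.negAddY, WeierstrassCurve.Affine.addX,
        ha₁, ha₂, ha₃, hslope, hx, hy]
      ring
end

section
/- There exists t ∈ k with t³ = b such that the polynomial g_{a,t}(z) = z⁴ − 6tz² + 4az − 3t² has a root in k if and only if there exist s, d ∈ k such that a = (4s + 3)(4s² − 3)d³ and b = (4s + 3)³d⁶. -/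
/-- For a field `k` of characteristic `≠ 2, 3` and `a, b ∈ k` with `b(a² − 4b) ≠ 0`: there
exists `t ∈ k` with `t³ = b` such that `g_{a,t}(z) = z⁴ − 6tz² + 4az − 3t²` has a root in `k`
if and only if `a = (4s + 3)(4s² − 3)d³` and `b = (4s + 3)³d⁶` for some `s, d ∈ k`. -/
theorem prym_two_torsion_parameterization {k : Type*} [Field k]
    (h2 : (2 : k) ≠ 0) (h3 : (3 : k) ≠ 0) (a b : k) (hnz : b * (a ^ 2 - 4 * b) ≠ 0) :
    (∃ t : k, t ^ 3 = b ∧ ∃ z : k, z ^ 4 - 6 * t * z ^ 2 + 4 * a * z - 3 * t ^ 2 = 0) ↔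
      ∃ s d : k, a = (4 * s + 3) * (4 * s ^ 2 - 3) * d ^ 3 ∧ b = (4 * s + 3) ^ 3 * d ^ 6 := by
  have h4 : (4 : k) ≠ 0 := by
    intro h
    exact h2 (by apply pow_eq_zero_iff (n := 2) (by norm_num) |>.mp; linear_combination h)
  constructor
  · rintro ⟨t, ht, z, hz⟩
    have hb : b ≠ 0 := fun h => hnz (by simp [h])
    have ht0 : t ≠ 0 := by
      rintro rfl
      exact hb (by linear_combination -ht)
    have hz0 : z ≠ 0 := by
      rintro rfl
      apply ht0
      apply pow_eq_zero_iff (n := 2) (by norm_num) |>.mp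
      have h : (3 : k) * t ^ 2 = 0 := by linear_combination -hz
      rcases mul_eq_zero.mp h with h | h
      · exact absurd h h3
      · exact h
    refine ⟨(z ^ 2 / t - 3) / 4, -t / z, ?_, ?_⟩
    · field_simp
      ring_nf
      linear_combination (z ^ 2) * hz
    · field_simp
      ring_nf
      linear_combination (-z ^ 6) * ht
  · rintro ⟨s, d, ha, hb⟩
    exact ⟨(4 * s + 3) * d ^ 2, by rw [hb]; ring, -(4 * s + 3) * d, by rw [ha]; ring⟩
end

section
/- The following are equivalent: (i) there exist s, d ∈ k with a = (4s + 3)(4s² − 3)d³ and b = (4s + 3)³d⁶, and moreover 16(a² − 4b) is a cube in k; (ii) there exist w, d ∈ k with a = (16w⁶ + 40w³ − 2)d³ and b = (8w³ + 1)³d⁶. -/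
/-- For a field `k` of characteristic `≠ 2, 3` and `a, b ∈ k` with `b(a² − 4b) ≠ 0`, the
following are equivalent: (i) `a = (4s + 3)(4s² − 3)d³`, `b = (4s + 3)³d⁶` for some `s, d ∈ k`
and `16(a² − 4b)` is a cube in `k`; (ii) `a = (16w⁶ + 40w³ − 2)d³` and `b = (8w³ + 1)³d⁶` for
some `w, d ∈ k`. -/
theorem prym_full_two_torsion_parameterization {k : Type*} [Field k]
    (h2 : (2 : k) ≠ 0) (h3 : (3 : k) ≠ 0) (a b : k) (hnz : b * (a ^ 2 - 4 * b) ≠ 0) :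
    ((∃ s d : k, a = (4 * s + 3) * (4 * s ^ 2 - 3) * d ^ 3 ∧ b = (4 * s + 3) ^ 3 * d ^ 6) ∧
        (∃ r : k, r ^ 3 = 16 * (a ^ 2 - 4 * b))) ↔
      ∃ w d : k, a = (16 * w ^ 6 + 40 * w ^ 3 - 2) * d ^ 3 ∧ b = (8 * w ^ 3 + 1) ^ 3 * d ^ 6 := by
  have h4 : (4 : k) ≠ 0 := by
    have := pow_ne_zero 2 h2; norm_num at this; exact this
  have h9 : (9 : k) ≠ 0 := by
    have := pow_ne_zero 2 h3; norm_num at this; exact this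
  have h16 : (16 : k) ≠ 0 := by
    have := pow_ne_zero 4 h2; norm_num at this; exact this
  obtain ⟨hb0, hd0⟩ := mul_ne_zero_iff.mp hnz
  constructor
  · rintro ⟨⟨s, e, ha, hb⟩, r, hr⟩
    subst ha hb
    -- basic nonvanishing
    have ht0 : (4 * s + 3) ≠ 0 := by
      intro h; exact hb0 (by rw [h]; ring)
    have he : e ≠ 0 := by
      intro h; exact hb0 (by rw [h]; ring)
    have hr' : r ^ 3 = (4 * s + 3) ^ 2 * (4 * s + 2) ^ 3 * (4 * s - 6) * e ^ 6 := by
      linear_combination hr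
    have hne : (4 * s + 3) ^ 2 * (4 * s + 2) ^ 3 * (4 * s - 6) * e ^ 6 ≠ 0 := by
      rw [← hr', hr]; exact mul_ne_zero h16 hd0
    have h1 : (4 * s + 2) ≠ 0 := by
      intro h; exact hne (by rw [h]; ring)
    have h6 : (4 * s - 6) ≠ 0 := by
      intro h; exact hne (by rw [h]; ring)
    set u : k := r / ((4 * s + 2) * e ^ 2 * (4 * s + 3)) with hu_def
    have hu : (4 * s + 3) * u ^ 3 = 4 * s - 6 := by
      rw [hu_def]; field_simp
      linear_combination hr'
    clear_value u
    have hprod : (4 * s + 3) * ((1 - u) * (u ^ 2 + u + 1)) ≠ 0 := by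
      have : (4 * s + 3) * ((1 - u) * (u ^ 2 + u + 1)) = 9 := by linear_combination - hu
      rw [this]; exact h9
    have hu1 : (1 - u) ≠ 0 := (mul_ne_zero_iff.mp (mul_ne_zero_iff.mp hprod).2).1
    have hq : (u ^ 2 + u + 1) ≠ 0 := (mul_ne_zero_iff.mp (mul_ne_zero_iff.mp hprod).2).2
    have hD : (1 - u ^ 3) ≠ 0 := by
      intro h
      apply hprod
      rw [show (1 - u) * (u ^ 2 + u + 1) = 1 - u ^ 3 by ring, h, mul_zero]
    have hs : s = (6 + 3 * u ^ 3) / (4 * (1 - u ^ 3)) := by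
      rw [eq_div_iff (mul_ne_zero h4 hD)]
      linear_combination - hu
    refine ⟨(u + 2) / (2 - 2 * u), (1 - u) * e / (u ^ 2 + u + 1), ?_, ?_⟩
    · rw [hs]
      have h2u : (2 - 2 * u) ≠ 0 := by
        intro h; exact hu1 (mul_left_cancel₀ h2 (by linear_combination h))
      have hq' : u * (u + 1) + 1 ≠ 0 := by convert hq using 1; ring
      field_simp
      ring
    · rw [hs]
      have h2u : (2 - 2 * u) ≠ 0 := by
        intro h; exact hu1 (mul_left_cancel₀ h2 (by linear_combination h))
      have hq' : u * (u + 1) + 1 ≠ 0 := by convert hq using 1; ring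
      field_simp
      ring
  · rintro ⟨w, d, ha, hb⟩
    subst ha hb
    have hd : d ≠ 0 := by
      intro h; exact hb0 (by rw [h]; ring)
    have hT0 : (8 * w ^ 3 + 1) ≠ 0 := by
      intro h; exact hb0 (by rw [show (8 * w ^ 3 + 1 : k) = 0 from h]; ring)
    have h21 : (2 * w + 1) ≠ 0 := by
      intro h; exact hT0 (by linear_combination (4 * w ^ 2 - 2 * w + 1) * h)
    have h42 : (4 * w ^ 2 - 2 * w + 1) ≠ 0 := by
      intro h; exact hT0 (by linear_combination (2 * w + 1) * h)
    refine ⟨⟨(4 * w ^ 3 + 6 * w - 1) / (2 * (4 * w ^ 2 - 2 * w + 1)),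
        (4 * w ^ 2 - 2 * w + 1) * d / (2 * w + 1), ?_, ?_⟩,
      ⟨16 * w * (w ^ 3 - 1) * d ^ 2, by ring⟩⟩
    · have h42' : w * (w * 4 - 2) + 1 ≠ 0 := by convert h42 using 1; ring
      have h21' : w * 2 + 1 ≠ 0 := by convert h21 using 1; ring
      field_simp
      ring
    · have h42' : w * (w * 4 - 2) + 1 ≠ 0 := by convert h42 using 1; ring
      have h21' : w * 2 + 1 ≠ 0 := by convert h21 using 1; ring
      field_simp
      ring
end

section
/- Assume additionally a ≠ 0. Then 16b(a² − 4b) is a sixth power in k (i.e., there exists e ∈ k with e⁶ = 16b(a² − 4b)) if and only if there exist t, d ∈ k (necessarily nonzero) such that a = 2(t² + 1)²td³ and b = (t² + 1)³t²d⁶. -/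
/-- For a field `k` of characteristic `≠ 2, 3` and `a, b ∈ k` with `b(a² − 4b) ≠ 0` and
`a ≠ 0`: `16b(a² − 4b)` is a sixth power in `k` if and only if `a = 2(t² + 1)²td³` and
`b = (t² + 1)³t²d⁶` for some `t, d ∈ k`. -/
theorem prym_sqrt2_multiplication_parameterization {k : Type*} [Field k]
    (h2 : (2 : k) ≠ 0) (h3 : (3 : k) ≠ 0) (a b : k) (hnz : b * (a ^ 2 - 4 * b) ≠ 0)
    (ha : a ≠ 0) :
    (∃ e : k, e ^ 6 = 16 * b * (a ^ 2 - 4 * b)) ↔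
      ∃ t d : k, a = 2 * (t ^ 2 + 1) ^ 2 * t * d ^ 3 ∧ b = (t ^ 2 + 1) ^ 3 * t ^ 2 * d ^ 6 := by
  have hb : b ≠ 0 := fun h => hnz (by simp [h])
  have hd : a ^ 2 - 4 * b ≠ 0 := fun h => hnz (by simp [h])
  constructor
  · rintro ⟨e, he⟩
    have h16 : (16 : k) ≠ 0 := by
      have : (16 : k) = 2 ^ 4 := by norm_num
      rw [this]; exact pow_ne_zero _ h2
    have he0 : e ≠ 0 := by
      intro h
      rw [h] at he
      exact (mul_ne_zero (mul_ne_zero h16 hb) hd) (by rw [← he]; ring)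
    have h8 : (8 : k) ≠ 0 := by
      have : (8 : k) = 2 ^ 3 := by norm_num
      rw [this]; exact pow_ne_zero _ h2
    have h4 : (4 : k) ≠ 0 := by
      have : (4 : k) = 2 ^ 2 := by norm_num
      rw [this]; exact pow_ne_zero _ h2
    have ht1 : (e ^ 3 / (8 * b)) ^ 2 + 1 = a ^ 2 / (4 * b) := by
      field_simp
      linear_combination 4 * he
    have ht2 : (e ^ 3 / (8 * b)) ^ 2 = (a ^ 2 - 4 * b) / (4 * b) := by
      field_simp
      linear_combination 4 * he
    refine ⟨e ^ 3 / (8 * b), 4 * b / (a * e), ?_, ?_⟩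
    · rw [ht1]
      field_simp
      ring
    · rw [ht1, ht2]
      field_simp
      linear_combination he
  · rintro ⟨t, d, rfl, rfl⟩
    exact ⟨2 * (t ^ 2 + 1) * t * d ^ 2, by ring⟩
end

section
/- Assume additionally a ≠ 0. Then −432b(a² − 4b) is a sixth power in k (i.e., there exists e ∈ k with e⁶ = −432b(a² − 4b)) if and only if there exist t, d ∈ k (necessarily nonzero) such that a = 18d³t(1 − 3t²)² and b = 81d⁶t²(1 − 3t²)³. -/
/-- For a field `k` of characteristic `≠ 2, 3` and `a, b ∈ k` with `b(a² − 4b) ≠ 0` and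
`a ≠ 0`: `−432b(a² − 4b)` is a sixth power in `k` if and only if `a = 18d³t(1 − 3t²)²` and
`b = 81d⁶t²(1 − 3t²)³` for some `t, d ∈ k`. -/
theorem prym_sqrt6_multiplication_parameterization {k : Type*} [Field k]
    (h2 : (2 : k) ≠ 0) (h3 : (3 : k) ≠ 0) (a b : k) (hnz : b * (a ^ 2 - 4 * b) ≠ 0)
    (ha : a ≠ 0) :
    (∃ e : k, e ^ 6 = -432 * b * (a ^ 2 - 4 * b)) ↔
      ∃ t d : k, a = 18 * d ^ 3 * t * (1 - 3 * t ^ 2) ^ 2 ∧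
        b = 81 * d ^ 6 * t ^ 2 * (1 - 3 * t ^ 2) ^ 3 := by
  have hb : b ≠ 0 := fun h => hnz (by rw [h]; ring)
  have h432 : (432 : k) ≠ 0 := by
    have : (432 : k) = 2 ^ 4 * 3 ^ 3 := by norm_num
    rw [this]; exact mul_ne_zero (pow_ne_zero _ h2) (pow_ne_zero _ h3)
  have h72 : (72 : k) ≠ 0 := by
    have : (72 : k) = 2 ^ 3 * 3 ^ 2 := by norm_num
    rw [this]; exact mul_ne_zero (pow_ne_zero _ h2) (pow_ne_zero _ h3)
  constructor
  · rintro ⟨e, he⟩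
    have he0 : e ≠ 0 := by
      intro h
      apply hnz
      have h' : (-432 : k) * (b * (a ^ 2 - 4 * b)) = 0 := by
        rw [show (-432 : k) * (b * (a ^ 2 - 4 * b)) = -432 * b * (a ^ 2 - 4 * b) by ring,
          ← he, h]; ring
      rcases mul_eq_zero.mp h' with h'' | h''
      · exact absurd h'' (neg_ne_zero.mpr h432)
      · exact h''
    refine ⟨e ^ 3 / (72 * b), 4 * b / (e * a), ?_, ?_⟩
    · field_simp [h72]
      linear_combination (3456 * ((b ^ 2 * 72 ^ 2 - 3 * (-432 * b * (a ^ 2 - 4 * b))) +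
        (b ^ 2 * 72 ^ 2 - e ^ 6 * 3))) * he
    · field_simp [h72]
      linear_combination (995328 * ((b ^ 2 * 72 ^ 2 - 3 * (-432 * b * (a ^ 2 - 4 * b))) ^ 2 +
        (b ^ 2 * 72 ^ 2 - 3 * (-432 * b * (a ^ 2 - 4 * b))) * (b ^ 2 * 72 ^ 2 - e ^ 6 * 3) +
          (b ^ 2 * 72 ^ 2 - e ^ 6 * 3) ^ 2)) * he
  · rintro ⟨t, d, rfl, rfl⟩
    exact ⟨18 * d ^ 2 * t * (1 - 3 * t ^ 2), by ring⟩
end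

section
/- Let k be a field of characteristic different from 2 and 3 and let a, b ∈ k with b ≠ 0. The polynomial X⁴ + aX² + b splits into a product of linear factors over k if and only if there exist c, d ∈ k such that a = −(c² + 1)d² and b = c²d⁴. -/
open Polynomial

/-- Let `k` be a field of characteristic `≠ 2, 3` and `a, b ∈ k` with `b ≠ 0`. The quartic
`X⁴ + aX² + b` splits into a product of linear factors over `k` if and only if
`a = −(c² + 1)d²` and `b = c²d⁴` for some `c, d ∈ k`. -/
theorem quartic_splits_iff_parameterization {k : Type*} [Field k]
    (h2 : (2 : k) ≠ 0) (h3 : (3 : k) ≠ 0) (a b : k) (hb : b ≠ 0) :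
    Polynomial.Splits (X ^ 4 + C a * X ^ 2 + C b) ↔
      ∃ c d : k, a = -(c ^ 2 + 1) * d ^ 2 ∧ b = c ^ 2 * d ^ 4 := by
  constructor
  · intro h
    have hdeg : (X ^ 4 + C a * X ^ 2 + C b : k[X]).degree ≠ 0 := by
      have hd : (X ^ 4 + C a * X ^ 2 + C b : k[X]).degree = 4 := by
        compute_degree!
      rw [hd]; norm_num
    obtain ⟨r, hr⟩ := h.exists_eval_eq_zero hdeg
    simp only [eval₂_eq_eval_map, Polynomial.map_id, eval_add, eval_mul, eval_pow, eval_X, eval_C] at hr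
    have hr0 : r ≠ 0 := by
      intro h0; apply hb; simpa [h0] using hr
    have hfac : (X ^ 4 + C a * X ^ 2 + C b : k[X]) =
        (X ^ 2 - C (r ^ 2)) * (X ^ 2 + C (a + r ^ 2)) := by
      have hb' : b = -(r ^ 2 * (a + r ^ 2)) := by linear_combination hr
      rw [hb']
      simp only [map_add, map_mul, map_pow, map_neg]
      ring
    have hp0 : (X ^ 2 - C (r ^ 2)) * (X ^ 2 + C (a + r ^ 2)) ≠ (0 : k[X]) := by
      rw [← hfac]
      intro h0
      have := congrArg (eval 0) h0
      simp at this
      exact hb this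
    have hq : Splits (X ^ 2 + C (a + r ^ 2)) := by
      rw [hfac] at h
      exact h.of_dvd hp0 (dvd_mul_left _ _)
    have hqdeg : (X ^ 2 + C (a + r ^ 2) : k[X]).degree ≠ 0 := by
      have hd : (X ^ 2 + C (a + r ^ 2) : k[X]).degree = 2 := by
        compute_degree!
      rw [hd]; norm_num
    obtain ⟨e, he⟩ := hq.exists_eval_eq_zero hqdeg
    simp only [eval₂_eq_eval_map, Polynomial.map_id, eval_add, eval_pow, eval_X, eval_C] at he
    refine ⟨e / r, r, ?_, ?_⟩
    · field_simp
      linear_combination he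
    · field_simp
      linear_combination hr - r ^ 2 * he
  · rintro ⟨c, d, ha, hb'⟩
    subst ha hb'
    have hfac : (X ^ 4 + C (-(c ^ 2 + 1) * d ^ 2) * X ^ 2 + C (c ^ 2 * d ^ 4) : k[X]) =
        (X - C d) * (X + C d) * ((X - C (c * d)) * (X + C (c * d))) := by
      simp only [map_add, map_mul, map_pow, map_neg, map_one]
      ring
    rw [hfac]
    have h1 : ∀ t : k, Splits (X + C t) := fun t => by
      rw [show (X + C t : k[X]) = X - C (-t) by simp [sub_neg_eq_add]]
      exact Splits.X_sub_C _
    exact Splits.mul (Splits.mul (Splits.X_sub_C _) (h1 d)) (Splits.mul (Splits.X_sub_C _) (h1 (c * d)))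
end

section
/- Let k be a field of characteristic different from 2 and 3 in which the polynomial X² + X + 1 has no root, and let K = k[X]/(X² + X + 1) be the quadratic field extension of k obtained by adjoining a primitive third root of unity ω. Then for every nonzero δ ∈ k: δ is a sixth power in K if and only if δ is a sixth power in k or −27δ is a sixth power in k. -/
/-- Let `k` be a field of characteristic `≠ 2, 3` in which `X² + X + 1` has no root, and let
`K = k(ω)` be the quadratic extension obtained by adjoining a primitive third root of unity
`ω` (i.e. `K` is a field extension of `k` generated by an element `ω` with `ω² + ω + 1 = 0`).
Then a nonzero `δ ∈ k` is a sixth power in `K` if and only if `δ` is a sixth power in `k` or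
`−27δ` is a sixth power in `k`. -/
theorem sixth_power_in_quadratic_extension_iff {k : Type*} [Field k]
    (h2 : (2 : k) ≠ 0) (h3 : (3 : k) ≠ 0) (hω : ∀ z : k, z ^ 2 + z + 1 ≠ 0)
    (K : Type*) [Field K] [Algebra k K] (ω : K)
    (hωK : ω ^ 2 + ω + 1 = 0) (hgen : Algebra.adjoin k {ω} = ⊤)
    (δ : k) (hδ : δ ≠ 0) :
    (∃ e : K, e ^ 6 = algebraMap k K δ) ↔
      (∃ e : k, e ^ 6 = δ) ∨ (∃ e : k, e ^ 6 = -27 * δ) := by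
  have hinj : Function.Injective (algebraMap k K) := (algebraMap k K).injective
  -- linear independence of 1, ω over k
  have hindep : ∀ a b : k, algebraMap k K a + algebraMap k K b * ω = 0 → a = 0 ∧ b = 0 := by
    intro a b h
    by_cases hb : b = 0
    · subst hb
      refine ⟨hinj ?_, rfl⟩
      simpa using h
    · exfalso
      have hbK : algebraMap k K b ≠ 0 := fun hc => hb (hinj (by simpa using hc))
      have hωeq : ω = algebraMap k K (-a / b) := by
        rw [map_div₀, map_neg, eq_div_iff hbK]
        linear_combination h
      apply hω (-a / b)
      apply hinj
      rw [map_add, map_add, map_pow, map_one, map_zero, ← hωeq]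
      exact hωK
  -- every element of K is a + b ω
  have hrep : ∀ x : K, ∃ a b : k, x = algebraMap k K a + algebraMap k K b * ω := by
    intro x
    have hx : x ∈ Algebra.adjoin k {ω} := hgen ▸ Algebra.mem_top
    rw [Algebra.adjoin_singleton_eq_range_aeval] at hx
    obtain ⟨p, hp⟩ := hx
    set f : Polynomial k := Polynomial.X ^ 2 + Polynomial.X + 1 with hf
    have hmonic : f.Monic := by
      unfold f
      monicity!
    have hfω : Polynomial.aeval ω f = 0 := by
      simp only [hf, map_add, map_pow, map_one, Polynomial.aeval_X]
      exact hωK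
    have key : x = Polynomial.aeval ω (p %ₘ f) := by
      conv_lhs => rw [← hp, ← Polynomial.modByMonic_add_div p f]
      simp [map_add, map_mul, hfω]
    have hdeg : (p %ₘ f).degree ≤ 1 := by
      have h1 := Polynomial.degree_modByMonic_lt p hmonic
      have hdf : f.degree = 2 := by
        unfold f
        compute_degree!
      rw [hdf] at h1
      exact Order.le_of_lt_succ (by exact_mod_cast h1)
    refine ⟨(p %ₘ f).coeff 0, (p %ₘ f).coeff 1, ?_⟩
    rw [key]
    conv_lhs => rw [Polynomial.eq_X_add_C_of_degree_le_one hdeg]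
    simp only [map_add, map_mul, Polynomial.aeval_X, Polynomial.aeval_C]
    ring
  constructor
  · rintro ⟨e, he⟩
    obtain ⟨a, b, rfl⟩ := hrep e
    set A := algebraMap k K with hA
    -- cube formula
    have hcube : (A a + A b * ω) ^ 3
        = A (a ^ 3 - 3 * a * b ^ 2 + b ^ 3) + A (3 * a * b * (a - b)) * ω := by
      simp only [map_add, map_sub, map_mul, map_pow, map_ofNat]
      linear_combination (3 * A a * (A b) ^ 2 - (A b) ^ 3 + (A b) ^ 3 * ω) * hωK
    have hsix : (A a + A b * ω) ^ 6
        = A ((a ^ 3 - 3 * a * b ^ 2 + b ^ 3) ^ 2 - (3 * a * b * (a - b)) ^ 2)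
          + A (2 * (a ^ 3 - 3 * a * b ^ 2 + b ^ 3) * (3 * a * b * (a - b))
              - (3 * a * b * (a - b)) ^ 2) * ω := by
      have : (A a + A b * ω) ^ 6 = ((A a + A b * ω) ^ 3) ^ 2 := by ring
      rw [this, hcube]
      simp only [map_add, map_sub, map_mul, map_pow, map_ofNat]
      linear_combination ((3 * A a * A b * (A a - A b)) ^ 2) * hωK
    rw [hsix] at he
    set u : k := a ^ 3 - 3 * a * b ^ 2 + b ^ 3 with hu
    set v : k := 3 * a * b * (a - b) with hv
    have h0 : A ((u ^ 2 - v ^ 2) - δ) + A (2 * u * v - v ^ 2) * ω = 0 := by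
      rw [map_sub]
      linear_combination he
    obtain ⟨hP, hQ⟩ := hindep _ _ h0
    have hP' : u ^ 2 - v ^ 2 = δ := by linear_combination hP
    have hfac : 3 * (a * (b * ((a - b) * ((2 * a - b) * ((a + b) * (a - 2 * b)))))) = 0 := by
      rw [← hQ, hu, hv]; ring
    rcases mul_eq_zero.mp hfac with h | h
    · exact absurd h h3
    rcases mul_eq_zero.mp h with h | h
    · -- a = 0
      subst h
      left; exact ⟨b, by linear_combination hP'⟩
    rcases mul_eq_zero.mp h with h | h
    · -- b = 0
      subst h
      left; exact ⟨a, by linear_combination hP'⟩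
    rcases mul_eq_zero.mp h with h | h
    · -- a = b
      have : a = b := by rw [sub_eq_zero] at h; exact h
      subst this
      left; exact ⟨a, by linear_combination hP'⟩
    rcases mul_eq_zero.mp h with h | h
    · -- b = 2a
      have : b = 2 * a := by linear_combination -h
      subst this
      right; exact ⟨3 * a, by linear_combination (-27 : k) * hP'⟩
    rcases mul_eq_zero.mp h with h | h
    · -- a = -b
      have : a = -b := by linear_combination h
      subst this
      right; exact ⟨3 * b, by linear_combination (-27 : k) * hP'⟩
    · -- a = 2b
      have : a = 2 * b := by linear_combination h
      subst this
      right; exact ⟨3 * b, by linear_combination (-27 : k) * hP'⟩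
  · rintro (⟨e, he⟩ | ⟨e, he⟩)
    · exact ⟨algebraMap k K e, by rw [← map_pow, he]⟩
    · have hne : (1 : K) + 2 * ω ≠ 0 := by
        intro h0
        have h3K : (3 : K) = 0 := by linear_combination 4 * hωK - (2 * ω + 1) * h0
        apply h3
        apply hinj
        rw [map_ofNat, map_zero, h3K]
      have hpow : ((1 : K) + 2 * ω) ^ 6 = -27 := by
        linear_combination (64 * (ω ^ 2 + ω + 1) ^ 2 - 144 * (ω ^ 2 + ω + 1) + 108 +
          (4*ω^2+4*ω+1)^2*0) * hωK
      refine ⟨algebraMap k K e / (1 + 2 * ω), ?_⟩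
      rw [div_pow, hpow, ← map_pow, he]
      have h27 : (-27 : K) ≠ 0 := by
        intro hc
        apply h3
        apply hinj
        rw [map_zero]
        have : (27 : K) = 0 := by linear_combination -hc
        calc algebraMap k K 3 = 3 := map_ofNat _ 3
        _ = 0 := by
            have h27' : (3:K) ^ 3 = 0 := by rw [show ((3:K))^3 = 27 by norm_num, this]
            exact pow_eq_zero_iff (by norm_num) |>.mp h27'
      rw [div_eq_iff h27]
      rw [map_mul, map_neg, map_ofNat]
      ring
end

section
/- For all rational numbers t and y, if y³ = 4t²(t² − 1) then y = 0 (equivalently, t ∈ {0, 1, −1}); that is, 4t²(t² − 1) is never a nonzero rational cube. -/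
/-! Eisenstein integers ℤ[ω], ω² + ω + 1 = 0, as pairs ⟨a, b⟩ = a + bω. -/

@[ext]
structure Eis where
  re : ℤ
  im : ℤ
  deriving DecidableEq

namespace Eis

def ofInt (n : ℤ) : Eis := ⟨n, 0⟩

instance : Zero Eis := ⟨ofInt 0⟩
@[simp] theorem zero_re : (0 : Eis).re = 0 := rfl
@[simp] theorem zero_im : (0 : Eis).im = 0 := rfl

instance : One Eis := ⟨ofInt 1⟩
@[simp] theorem one_re : (1 : Eis).re = 1 := rfl
@[simp] theorem one_im : (1 : Eis).im = 0 := rfl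

instance : Add Eis := ⟨fun z w => ⟨z.1 + w.1, z.2 + w.2⟩⟩
@[simp] theorem add_re (z w : Eis) : (z + w).re = z.re + w.re := rfl
@[simp] theorem add_im (z w : Eis) : (z + w).im = z.im + w.im := rfl

instance : Neg Eis := ⟨fun z => ⟨-z.1, -z.2⟩⟩
@[simp] theorem neg_re (z : Eis) : (-z).re = -z.re := rfl
@[simp] theorem neg_im (z : Eis) : (-z).im = -z.im := rfl

/-- (a+bω)(c+dω) = ac - bd + (ad + bc - bd)ω since ω² = -1-ω. -/
instance : Mul Eis :=
  ⟨fun z w => ⟨z.1 * w.1 - z.2 * w.2, z.1 * w.2 + z.2 * w.1 - z.2 * w.2⟩⟩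
@[simp] theorem mul_re (z w : Eis) : (z * w).re = z.re * w.re - z.im * w.im := rfl
@[simp] theorem mul_im (z w : Eis) :
    (z * w).im = z.re * w.im + z.im * w.re - z.im * w.im := rfl

instance addCommGroup : AddCommGroup Eis := by
  refine
  { add := (· + ·)
    zero := (0 : Eis)
    sub := fun a b => a + -b
    neg := Neg.neg
    nsmul := @nsmulRec Eis ⟨0⟩ ⟨(· + ·)⟩
    zsmul := @zsmulRec Eis ⟨0⟩ ⟨(· + ·)⟩ ⟨Neg.neg⟩ (@nsmulRec Eis ⟨0⟩ ⟨(· + ·)⟩)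
    add_assoc := ?_
    zero_add := ?_
    add_zero := ?_
    neg_add_cancel := ?_
    add_comm := ?_ } <;>
  intros <;> ext <;> simp [add_comm, add_left_comm]

@[simp] theorem sub_re (z w : Eis) : (z - w).re = z.re - w.re := rfl
@[simp] theorem sub_im (z w : Eis) : (z - w).im = z.im - w.im := rfl

instance addGroupWithOne : AddGroupWithOne Eis :=
  { Eis.addCommGroup with
    natCast := fun n => ofInt n
    intCast := ofInt
    one := 1 }

instance commRing : CommRing Eis := by
  refine
  { Eis.addGroupWithOne with
    mul := (· * ·)
    npow := @npowRec Eis ⟨1⟩ ⟨(· * ·)⟩,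
    add_comm := ?_
    left_distrib := ?_
    right_distrib := ?_
    zero_mul := ?_
    mul_zero := ?_
    mul_assoc := ?_
    one_mul := ?_
    mul_one := ?_
    mul_comm := ?_ } <;>
  intros <;> ext <;> simp <;> ring

@[simp] theorem intCast_re (n : ℤ) : (n : Eis).re = n := rfl
@[simp] theorem intCast_im (n : ℤ) : (n : Eis).im = 0 := rfl

def conj (z : Eis) : Eis := ⟨z.re - z.im, -z.im⟩
@[simp] theorem conj_re (z : Eis) : (conj z).re = z.re - z.im := rfl
@[simp] theorem conj_im (z : Eis) : (conj z).im = -z.im := rfl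

def norm (z : Eis) : ℤ := z.re * z.re - z.re * z.im + z.im * z.im

theorem norm_def (z : Eis) : norm z = z.re * z.re - z.re * z.im + z.im * z.im := rfl

@[simp] theorem norm_zero : norm (0 : Eis) = 0 := by simp [norm_def]
@[simp] theorem norm_one : norm (1 : Eis) = 1 := by simp [norm_def]

theorem norm_mul (z w : Eis) : norm (z * w) = norm z * norm w := by
  simp only [norm_def, mul_re, mul_im]; ring

theorem norm_nonneg (z : Eis) : 0 ≤ norm z := by
  have h : 4 * norm z = (2 * z.re - z.im) ^ 2 + 3 * z.im ^ 2 := by simp [norm_def]; ring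
  nlinarith [sq_nonneg (2 * z.re - z.im), sq_nonneg z.im]

theorem norm_eq_zero_iff {z : Eis} : norm z = 0 ↔ z = 0 := by
  constructor
  · intro h
    have h4 : (2 * z.re - z.im) ^ 2 + 3 * z.im ^ 2 = 0 := by
      have : 4 * norm z = (2 * z.re - z.im) ^ 2 + 3 * z.im ^ 2 := by simp [norm_def]; ring
      omega
    have h1 : z.im = 0 := by nlinarith [sq_nonneg (2 * z.re - z.im), sq_nonneg z.im]
    have h2 : z.re = 0 := by nlinarith [sq_nonneg (2 * z.re - z.im)]
    ext <;> simp [h1, h2]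
  · rintro rfl; simp

theorem mul_conj (z : Eis) : z * conj z = (norm z : Eis) := by
  ext <;> simp [norm_def] <;> ring

theorem norm_conj (z : Eis) : norm (conj z) = norm z := by simp [norm_def]; ring

theorem norm_pos {z : Eis} (hz : z ≠ 0) : 0 < norm z :=
  lt_of_le_of_ne (norm_nonneg z) (fun h => hz (norm_eq_zero_iff.1 h.symm))

theorem norm_dvd_norm {z w : Eis} (h : z ∣ w) : norm z ∣ norm w := by
  obtain ⟨c, rfl⟩ := h; exact ⟨norm c, norm_mul z c⟩

instance : Nontrivial Eis := ⟨⟨0, 1, fun h => by simpa using congrArg Eis.re h⟩⟩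

/-! ### Euclidean structure -/

instance : Div Eis :=
  ⟨fun x y =>
    let n := ((norm y : ℚ))⁻¹
    let c := conj y
    ⟨round (((x * c).re : ℚ) * n), round (((x * c).im : ℚ) * n)⟩⟩

theorem div_def (x y : Eis) :
    x / y = ⟨round (((x * conj y).re : ℚ) / (norm y : ℚ)),
             round (((x * conj y).im : ℚ) / (norm y : ℚ))⟩ := by
  show Eis.mk _ _ = _
  simp [div_eq_mul_inv]

instance : Mod Eis := ⟨fun x y => x - y * (x / y)⟩

theorem mod_def (x y : Eis) : x % y = x - y * (x / y) := rfl

theorem norm_mod_lt (x : Eis) {y : Eis} (hy : y ≠ 0) : norm (x % y) < norm y := by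
  have hn : 0 < norm y := norm_pos hy
  have hb : ∀ m : ℤ, 2 * |m - norm y * round ((m : ℚ) / (norm y : ℚ))| ≤ norm y := by
    intro m
    have hnq : (0:ℚ) < ((norm y : ℤ) : ℚ) := by exact_mod_cast hn
    have h := abs_sub_round ((m : ℚ) / ((norm y : ℤ) : ℚ))
    have h2 : |(m : ℚ) - ((norm y : ℤ) : ℚ) * round ((m : ℚ) / ((norm y : ℤ) : ℚ))|
        ≤ ((norm y : ℤ) : ℚ) / 2 := by
      have heq : (m : ℚ) - ((norm y : ℤ) : ℚ) * round ((m : ℚ) / ((norm y : ℤ) : ℚ))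
          = ((norm y : ℤ) : ℚ) * ((m : ℚ) / ((norm y : ℤ) : ℚ)
            - round ((m : ℚ) / ((norm y : ℤ) : ℚ))) := by
        field_simp
      rw [heq, abs_mul, abs_of_pos hnq]
      calc ((norm y : ℤ) : ℚ) * |(m : ℚ) / ((norm y : ℤ) : ℚ)
            - round ((m : ℚ) / ((norm y : ℤ) : ℚ))|
          ≤ ((norm y : ℤ) : ℚ) * (1/2) := mul_le_mul_of_nonneg_left h (le_of_lt hnq)
        _ = ((norm y : ℤ) : ℚ)/2 := by ring
    have h3 : ((2 * |m - norm y * round ((m : ℚ) / ((norm y : ℤ) : ℚ))| : ℤ) : ℚ)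
        ≤ ((norm y : ℤ) : ℚ) := by push_cast; linarith
    exact_mod_cast h3
  have hkey : (x % y) * conj y =
      ⟨(x * conj y).re - norm y * round (((x * conj y).re : ℚ) / (norm y : ℚ)),
       (x * conj y).im - norm y * round (((x * conj y).im : ℚ) / (norm y : ℚ))⟩ := by
    rw [mod_def, div_def]
    ext <;> simp [norm_def] <;> ring
  set s : ℤ := (x * conj y).re - norm y * round (((x * conj y).re : ℚ) / (norm y : ℚ)) with hsdef
  set t : ℤ := (x * conj y).im - norm y * round (((x * conj y).im : ℚ) / (norm y : ℚ)) with htdef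
  have hs := hb (x * conj y).re
  have ht := hb (x * conj y).im
  rw [← hsdef] at hs
  rw [← htdef] at ht
  have hnm : norm (x % y) * norm y = s * s - s * t + t * t := by
    have h := norm_mul (x % y) (conj y)
    rw [norm_conj, hkey] at h
    rw [← h]; rfl
  have h1 : (2*|s|)*(2*|s|) ≤ norm y * norm y :=
    le_trans (mul_le_mul hs hs (by positivity) (by linarith)) (le_refl _)
  have h2 : (2*|t|)*(2*|t|) ≤ norm y * norm y :=
    le_trans (mul_le_mul ht ht (by positivity) (by linarith)) (le_refl _)
  have h3 : (2*|s|)*(2*|t|) ≤ norm y * norm y :=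
    le_trans (mul_le_mul hs ht (by positivity) (by linarith)) (le_refl _)
  have habs : |s * t| = |s| * |t| := abs_mul s t
  have h4 : 4 * (s * s - s * t + t * t) ≤ 3 * (norm y * norm y) := by
    have hss : s * s = |s| * |s| := (abs_mul_abs_self s).symm
    have htt : t * t = |t| * |t| := (abs_mul_abs_self t).symm
    have hst : - (s * t) ≤ |s| * |t| := by
      rw [← habs]; exact neg_le_of_neg_le (neg_abs_le _)
    nlinarith
  have h5 : norm (x % y) * norm y * 4 ≤ 3 * (norm y * norm y) := by rw [hnm]; linarith
  nlinarith

theorem natAbs_norm_mod_lt (x : Eis) {y : Eis} (hy : y ≠ 0) :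
    (norm (x % y)).natAbs < (norm y).natAbs := by
  have h := norm_mod_lt x hy
  have h1 := norm_nonneg (x % y)
  have h2 := norm_nonneg y
  omega

theorem norm_le_norm_mul_left (x : Eis) {y : Eis} (hy : y ≠ 0) :
    (norm x).natAbs ≤ (norm (x * y)).natAbs := by
  rw [norm_mul, Int.natAbs_mul]
  have := norm_pos hy
  have : 1 ≤ (norm y).natAbs := by omega
  exact Nat.le_mul_of_pos_right _ (by omega)

instance : EuclideanDomain Eis :=
  { Eis.commRing, (inferInstance : Nontrivial Eis) with
    quotient := (· / ·)
    remainder := (· % ·)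
    quotient_zero := fun x => by
      show x / 0 = 0
      rw [div_def]
      ext <;> simp
    quotient_mul_add_remainder_eq := fun x y => by
      show y * (x / y) + (x - y * (x / y)) = x
      ring
    r := fun a b => (norm a).natAbs < (norm b).natAbs
    r_wellFounded := (measure fun x : Eis => (norm x).natAbs).wf
    remainder_lt := fun a b hb => natAbs_norm_mod_lt a hb
    mul_left_not_lt := fun a b hb => not_lt_of_ge (norm_le_norm_mul_left a hb) }

end Eis
section EisUnits
namespace Eis

theorem isUnit_of_norm_eq_one {z : Eis} (h : norm z = 1) : IsUnit z := by
  apply IsUnit.of_mul_eq_one (conj z)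
  rw [mul_conj, h]; rfl

theorem norm_eq_one_of_isUnit {z : Eis} (h : IsUnit z) : norm z = 1 := by
  obtain ⟨u, rfl⟩ := h
  have h1 : norm (u : Eis) * norm ((u⁻¹ : Eisˣ) : Eis) = 1 := by
    rw [← norm_mul]
    simp
  exact Int.eq_one_of_mul_eq_one_right (norm_nonneg _) h1

theorem norm_one_cases {z : Eis} (h : norm z = 1) :
    z = ⟨1,0⟩ ∨ z = ⟨-1,0⟩ ∨ z = ⟨0,1⟩ ∨ z = ⟨0,-1⟩ ∨ z = ⟨1,1⟩ ∨ z = ⟨-1,-1⟩ := by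
  obtain ⟨a, b⟩ := z
  simp only [norm_def] at h
  have h4 : (2*a - b)^2 + 3*b^2 = 4 := by ring_nf; nlinarith [h]
  have hb1 : -1 ≤ b := by nlinarith [sq_nonneg (2*a-b), sq_nonneg b]
  have hb2 : b ≤ 1 := by nlinarith [sq_nonneg (2*a-b), sq_nonneg b]
  interval_cases b
  · -- b = -1 : a*a + a + 1 = 1, a(a+1) = 0
    have : a * (a + 1) = 0 := by nlinarith [h]
    rcases mul_eq_zero.1 this with h1 | h1
    · subst h1; right; right; right; left; rfl
    · have : a = -1 := by omega
      subst this; right; right; right; right; right; rfl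
  · -- b = 0 : a * a = 1
    have : a * a = 1 := by nlinarith [h]
    rcases mul_self_eq_one_iff.1 this with rfl | rfl
    · left; rfl
    · right; left; rfl
  · -- b = 1 : a*(a-1) = 0
    have : a * (a - 1) = 0 := by nlinarith [h]
    rcases mul_eq_zero.1 this with h1 | h1
    · subst h1; right; right; left; rfl
    · have : a = 1 := by omega
      subst this; right; right; right; right; left; rfl

theorem cube_coords (a b : ℤ) :
    (⟨a, b⟩ : Eis)^3 = ⟨a^3 - 3*a*b^2 + b^3, 3*a^2*b - 3*a*b^2⟩ := by
  have : (⟨a, b⟩ : Eis)^3 = ⟨a,b⟩ * ⟨a,b⟩ * ⟨a,b⟩ := by ring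
  rw [this]
  ext <;> simp <;> ring

theorem even_cube_im (a b : ℤ) : Even (3*a^2*b - 3*a*b^2) := by
  have h : 3*a^2*b - 3*a*b^2 = 3*(a*b*(a-b)) := by ring
  rw [h]
  have : Even (a*b*(a-b)) := by
    rcases Int.even_or_odd a with ha | ha
    · exact (ha.mul_right b).mul_right _
    · rcases Int.even_or_odd b with hb | hb
      · exact (hb.mul_left a).mul_right _
      · exact (ha.sub_odd hb).mul_left _
  exact this.mul_left 3

/-- Key parametrization: if `u² + 3v² = T³` with `u, v` coprime, `u + v` odd and `3 ∤ u`,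
then the solution is given by the cube of an Eisenstein integer. -/
theorem descent_param (u v : ℤ) (hcop : IsCoprime u v) (hodd : Odd (u + v))
    (h3 : ¬ (3:ℤ) ∣ u) {T : ℤ} (hT : u^2 + 3*v^2 = T^3) :
    ∃ a b : ℤ, 2*u = (a+b)*(2*a-b)*(a-2*b) ∧ 2*v = 3*a*b*(a-b) := by
  classical
  letI : GCDMonoid Eis := EuclideanDomain.gcdMonoid Eis
  set α : Eis := ⟨u + v, 2*v⟩ with hα
  have hαnorm : norm α = T^3 := by
    simp only [hα, norm_def]
    linear_combination hT
  have hoddn : Odd (u^2 + 3*v^2) := by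
    rcases Int.even_or_odd u with ⟨c, hc⟩ | ⟨c, hc⟩ <;>
      rcases Int.even_or_odd v with ⟨d, hd⟩ | ⟨d, hd⟩
    · exfalso; rw [Int.odd_iff] at hodd; omega
    · exact ⟨2*c^2 + 6*d^2 + 6*d + 1, by subst hc hd; ring⟩
    · exact ⟨2*c^2 + 2*c + 6*d^2, by subst hc hd; ring⟩
    · exfalso; rw [Int.odd_iff] at hodd; omega
  have hmul : α * conj α = (⟨T, 0⟩ : Eis)^3 := by
    rw [mul_conj, hαnorm, cube_coords]
    ext <;> simp only [intCast_re, intCast_im] <;> ring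
  -- every common divisor of α and conj α is a unit
  have hcd : ∀ δ : Eis, δ ∣ α → δ ∣ conj α → IsUnit δ := by
    intro δ h1 h2
    have hd1 : δ ∣ (⟨2*u, 0⟩ : Eis) := by
      have heq : α + conj α = (⟨2*u, 0⟩ : Eis) := by ext <;> simp [hα] <;> ring
      rw [← heq]; exact dvd_add h1 h2
    have hd2 : δ ∣ (⟨6*v, 0⟩ : Eis) := by
      have heq : (conj α - α) * ⟨1, 2⟩ = (⟨6*v, 0⟩ : Eis) := by ext <;> simp [hα] <;> ring
      rw [← heq]; exact ((h2.sub h1)).mul_right _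
    have h3u : IsCoprime u (3 : ℤ) := (Int.prime_three.coprime_iff_not_dvd.2 h3).symm
    have hc3v : IsCoprime u (3*v) := h3u.mul_right hcop
    obtain ⟨m, n, hmn⟩ := hc3v
    have hd3 : δ ∣ (⟨2, 0⟩ : Eis) := by
      have key : (⟨m, 0⟩ : Eis) * ⟨2*u, 0⟩ + (⟨n, 0⟩ : Eis) * ⟨6*v, 0⟩ = (⟨2, 0⟩ : Eis) := by
        ext <;> simp
        linear_combination 2 * hmn
      rw [← key]
      exact dvd_add (hd1.mul_left _) (hd2.mul_left _)
    have hn4 : norm δ ∣ 4 := by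
      have h := norm_dvd_norm hd3
      have : norm (⟨2,0⟩ : Eis) = 4 := by simp [norm_def]
      rwa [this] at h
    have hnT : norm δ ∣ u^2 + 3*v^2 := by
      have := norm_dvd_norm h1
      rwa [hαnorm, ← hT] at this
    have hodd_nd : Odd (norm δ) := by
      rcases Int.even_or_odd (norm δ) with he | ho
      · exfalso
        have : Even (u^2 + 3*v^2) := by
          obtain ⟨k, hk⟩ := hnT
          obtain ⟨l, hl⟩ := he
          exact ⟨l*k, by rw [hk, hl]; ring⟩
        exact (Int.not_odd_iff_even.2 this) hoddn
      · exact ho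
    have hcop2 : IsCoprime (norm δ) 2 := by
      obtain ⟨k, hk⟩ := hodd_nd
      exact ⟨1, -k, by omega⟩
    have : IsCoprime (norm δ) 4 := by
      have h4 : (4 : ℤ) = 2^2 := by norm_num
      rw [h4]
      exact hcop2.pow_right
    have hu1 : IsUnit (norm δ) := this.isUnit_of_dvd' dvd_rfl hn4
    rcases Int.isUnit_iff.1 hu1 with h | h
    · exact isUnit_of_norm_eq_one h
    · exfalso; have := norm_nonneg δ; omega
  have hgcd : IsUnit (gcd α (conj α)) := hcd _ (gcd_dvd_left _ _) (gcd_dvd_right _ _)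
  obtain ⟨d, hd⟩ := exists_associated_pow_of_mul_eq_pow hgcd hmul
  obtain ⟨ε, hε⟩ := hd
  -- hε : d^3 * ε = α
  have hεnorm : norm (ε : Eis) = 1 := norm_eq_one_of_isUnit ε.isUnit
  obtain ⟨c, e⟩ := d
  rw [cube_coords] at hε
  set X : ℤ := c^3 - 3*c*e^2 + e^3 with hX
  set Y : ℤ := 3*c^2*e - 3*c*e^2 with hY
  have hYe : Even Y := even_cube_im c e
  have hre : ((⟨X, Y⟩ : Eis) * (ε:Eis)).re = u + v := by rw [hε]
  have him : ((⟨X, Y⟩ : Eis) * (ε:Eis)).im = 2*v := by rw [hε]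
  have hoddx : Odd (u + v) := hodd
  -- case on the unit
  have key : ∃ a b : ℤ, u + v = a^3 - 3*a*b^2 + b^3 ∧ 2*v = 3*a^2*b - 3*a*b^2 := by
    rcases norm_one_cases hεnorm with h | h | h | h | h | h <;> rw [h] at hre him <;>
        simp only [mul_re, mul_im] at hre him
    · exact ⟨c, e, by linarith, by linarith⟩
    · refine ⟨-c, -e, by push_cast; linarith [hre], by push_cast; linarith [him]⟩
    · -- ε = ω : α = ⟨-Y, X - Y⟩, so u+v = -Y even: contradiction
      exfalso
      have : Even (u + v) := by
        have : u + v = -Y := by linarith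
        rw [this]
        exact hYe.neg
      exact (Int.not_odd_iff_even.2 this) hoddx
    · exfalso
      have : Even (u + v) := by
        have : u + v = Y := by linarith
        rw [this]; exact hYe
      exact (Int.not_odd_iff_even.2 this) hoddx
    · -- ε = 1 + ω : α = ⟨X - Y, X⟩; im = X = 2v even, re = X - Y even: contradiction
      exfalso
      have hXe : Even X := by
        have : X = 2*v := by linarith
        exact ⟨v, by omega⟩
      have : Even (u + v) := by
        have h1 : u + v = X - Y := by linarith
        rw [h1]; exact hXe.sub hYe
      exact (Int.not_odd_iff_even.2 this) hoddx
    · exfalso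
      have hXe : Even X := by
        have : -X = 2*v := by linarith
        exact ⟨-v, by omega⟩
      have : Even (u + v) := by
        have h1 : u + v = Y - X := by linarith
        rw [h1]; exact hYe.sub hXe
      exact (Int.not_odd_iff_even.2 this) hoddx
  obtain ⟨a, b, h1, h2⟩ := key
  exact ⟨a, b, by linear_combination 2*h1 - h2, by linear_combination h2⟩

end Eis
end EisUnits
section Descent

private lemma odd_u2_3v2 {u v : ℤ} (hodd : Odd (u + v)) : Odd (u^2 + 3*v^2) := by
  rcases Int.even_or_odd u with ⟨c, hc⟩ | ⟨c, hc⟩ <;>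
    rcases Int.even_or_odd v with ⟨d, hd⟩ | ⟨d, hd⟩
  · exfalso; rw [Int.odd_iff] at hodd; omega
  · exact ⟨2*c^2 + 6*d^2 + 6*d + 1, by subst hc hd; ring⟩
  · exact ⟨2*c^2 + 2*c + 6*d^2, by subst hc hd; ring⟩
  · exfalso; rw [Int.odd_iff] at hodd; omega

private lemma param_coprime {u v a b : ℤ} (hcop : IsCoprime u v) (hodd : Odd (u + v))
    (h1 : 2*u = (a+b)*(2*a-b)*(a-2*b)) (h2 : 2*v = 3*a*b*(a-b)) : IsCoprime a b := by
  rw [Int.isCoprime_iff_gcd_eq_one]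
  by_contra hg
  have hga : (Int.gcd a b : ℤ) ∣ a := Int.gcd_dvd_left a b
  have hgb : (Int.gcd a b : ℤ) ∣ b := Int.gcd_dvd_right a b
  have hg2u : (Int.gcd a b : ℤ) ∣ 2*u := by
    rw [h1]; exact ((dvd_add hga hgb).mul_right (2*a-b)).mul_right (a-2*b)
  have hg2v : (Int.gcd a b : ℤ) ∣ 2*v := by
    rw [h2]; exact ((hgb.mul_left (3*a)).mul_right (a-b))
  obtain ⟨m, n, hmn⟩ := hcop
  have hg2 : (Int.gcd a b : ℤ) ∣ 2 := by
    have h := dvd_add (hg2u.mul_left m) (hg2v.mul_left n)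
    rwa [show m*(2*u) + n*(2*v) = 2 from by linear_combination 2*hmn] at h
  have hgn : Int.gcd a b ∣ 2 := by exact_mod_cast hg2
  rcases (Nat.dvd_prime Nat.prime_two).1 hgn with h | h
  · exact hg h
  · -- gcd = 2, so both a and b are even : contradiction with oddness
    have h2a : (2:ℤ) ∣ a := by rw [h] at hga; exact_mod_cast hga
    have h2b : (2:ℤ) ∣ b := by rw [h] at hgb; exact_mod_cast hgb
    obtain ⟨a', rfl⟩ := h2a
    obtain ⟨b', rfl⟩ := h2b
    have hu8 : 2*u = 8*((a'+b')*(2*a'-b')*(a'-2*b')) := by linear_combination h1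
    have hv24 : 2*v = 24*(a'*b'*(a'-b')) := by linear_combination h2
    rw [Int.odd_iff] at hodd
    omega

private lemma coprime_of_combo {a b X Y : ℤ} (hab : IsCoprime a b) (h3 : ¬ (3:ℤ) ∣ X)
    (e f g' h' : ℤ) (hc1 : e*X + f*Y = 3*a) (hc2 : g'*X + h'*Y = 3*b) : IsCoprime X Y := by
  rw [Int.isCoprime_iff_gcd_eq_one]
  have hdX : (Int.gcd X Y : ℤ) ∣ X := Int.gcd_dvd_left X Y
  have hdY : (Int.gcd X Y : ℤ) ∣ Y := Int.gcd_dvd_right X Y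
  obtain ⟨m, n, hmn⟩ := hab
  have hd3 : (Int.gcd X Y : ℤ) ∣ 3 := by
    have hda : (Int.gcd X Y : ℤ) ∣ 3*a := by
      rw [← hc1]; exact dvd_add (hdX.mul_left e) (hdY.mul_left f)
    have hdb : (Int.gcd X Y : ℤ) ∣ 3*b := by
      rw [← hc2]; exact dvd_add (hdX.mul_left g') (hdY.mul_left h')
    have h := dvd_add (hda.mul_left m) (hdb.mul_left n)
    rwa [show m*(3*a) + n*(3*b) = 3 from by linear_combination 3*hmn] at h
  have hd3' : Int.gcd X Y ∣ 3 := by exact_mod_cast hd3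
  rcases Nat.prime_three.eq_one_or_self_of_dvd _ hd3' with h | h
  · exact h
  · exfalso; apply h3; rw [h] at hdX; exact_mod_cast hdX

private lemma three_factor_cubes {A B C s : ℤ} (h : A * B * C = 2*s^3)
    (hAB : IsCoprime A B) (hAC : IsCoprime A C) (hBC : IsCoprime B C) (hA : Even A) :
    ∃ p q r : ℤ, A = 2*p^3 ∧ B = q^3 ∧ C = r^3 ∧ IsCoprime q r := by
  obtain ⟨k, hk⟩ := hA
  have hA2 : A = 2*k := by omega
  have hkA : k ∣ A := ⟨2, by omega⟩
  have hcopkB : IsCoprime k B := IsCoprime.of_isCoprime_of_dvd_left hAB hkA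
  have hcopkC : IsCoprime k C := IsCoprime.of_isCoprime_of_dvd_left hAC hkA
  rw [hA2] at h
  have hprod : k * (B*C) = s^3 := by
    have h2 : 2*(k*(B*C)) = 2*s^3 := by linear_combination h
    linarith
  obtain ⟨p, hp⟩ := Int.eq_pow_of_mul_eq_pow_odd_left (hcopkB.mul_right hcopkC)
    (by decide) hprod
  have hBprod : B * (k*C) = s^3 := by linear_combination hprod
  obtain ⟨q, hq⟩ := Int.eq_pow_of_mul_eq_pow_odd_left (hcopkB.symm.mul_right hBC)
    (by decide) hBprod
  have hCprod : C * (k*B) = s^3 := by linear_combination hprod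
  obtain ⟨r, hr⟩ := Int.eq_pow_of_mul_eq_pow_odd_left (hcopkC.symm.mul_right hBC.symm)
    (by decide) hCprod
  refine ⟨p, q, r, by rw [hA2, hp], hq, hr, ?_⟩
  have hqB : q ∣ B := by rw [hq]; exact dvd_pow_self q (by norm_num)
  have hrC : r ∣ C := by rw [hr]; exact dvd_pow_self r (by norm_num)
  exact IsCoprime.of_isCoprime_of_dvd_right (IsCoprime.of_isCoprime_of_dvd_left hBC hqB) hrC

private lemma size_bound {z u v p : ℤ} (hz3 : z^3 = u*(u^2+3*v^2)) (hu : u ≠ 0) (hv : v ≠ 0)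
    (hp : |p^3| ≤ |u|) : p.natAbs < z.natAbs := by
  have h1 : 1 ≤ u^2 := by rcases lt_or_gt_of_ne hu with h | h <;> nlinarith
  have h2 : 1 ≤ v^2 := by rcases lt_or_gt_of_ne hv with h | h <;> nlinarith
  have h4 : 4 ≤ u^2 + 3*v^2 := by linarith
  have habs : |z^3| = |u| * (u^2+3*v^2) := by
    rw [hz3, abs_mul, abs_of_nonneg (by linarith : (0:ℤ) ≤ u^2+3*v^2)]
  have hu1 : 1 ≤ |u| := Int.one_le_abs hu
  have hlt : |p^3| < |z^3| := by
    have : 4*|u| ≤ |u| * (u^2+3*v^2) := by nlinarith [abs_nonneg u]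
    rw [habs]; linarith
  have e1 : ((p.natAbs^3 : ℕ) : ℤ) = |p^3| := by
    rw [Int.abs_eq_natAbs, Int.natAbs_pow]
  have e2 : ((z.natAbs^3 : ℕ) : ℤ) = |z^3| := by
    rw [Int.abs_eq_natAbs, Int.natAbs_pow]
  have hfin : p.natAbs^3 < z.natAbs^3 := by
    have : ((p.natAbs^3 : ℕ) : ℤ) < ((z.natAbs^3 : ℕ) : ℤ) := by rw [e1, e2]; exact hlt
    exact_mod_cast this
  by_contra hle
  push_neg at hle
  exact absurd hfin (not_lt.2 (Nat.pow_le_pow_left hle 3))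

private lemma abs_le_prod3 {A B C : ℤ} (hB : B ≠ 0) (hC : C ≠ 0) : |A| ≤ |A*B*C| := by
  rw [abs_mul, abs_mul]
  have h1 : 1 ≤ |B| := Int.one_le_abs hB
  have h2 : 1 ≤ |C| := Int.one_le_abs hC
  have h3 : |A| * 1 ≤ |A| * |B| := mul_le_mul_of_nonneg_left h1 (abs_nonneg A)
  have h4 : |A| * |B| * 1 ≤ |A| * |B| * |C| := mul_le_mul_of_nonneg_left h2 (by positivity)
  linarith

private lemma descent_subcase {n : ℕ} {z u v : ℤ}
    (IH : ∀ m, m < n → ∀ z x y : ℤ, z.natAbs = m → IsCoprime x y →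
      x^3 + y^3 = 2*z^3 → x = y ∨ z = 0)
    (hn : z.natAbs = n)
    (hz3 : z^3 = u*(u^2+3*v^2)) (hu0 : u ≠ 0) (hv0 : v ≠ 0)
    {F1 F2 F3 s : ℤ} (hprod : F1*F2*F3 = 2*s^3) (hF1 : Even F1)
    (h12 : IsCoprime F1 F2) (h13 : IsCoprime F1 F3) (h23 : IsCoprime F2 F3)
    (hrel : F2 + F3 = F1)
    (hsize : |F1| ≤ 2*|u|) :
    F2 = F3 ∨ F1 = 0 := by
  obtain ⟨p, q, r, h1, h2, h3, hqr⟩ := three_factor_cubes hprod h12 h13 h23 hF1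
  have heq : q^3 + r^3 = 2*p^3 := by rw [← h1, ← h2, ← h3]; exact hrel
  have hps : |p^3| ≤ |u| := by
    have habs : |F1| = 2*|p^3| := by
      rw [h1, abs_mul]
      norm_num
    linarith
  have hlt : p.natAbs < n := hn ▸ size_bound hz3 hu0 hv0 hps
  rcases IH p.natAbs hlt p q r rfl hqr heq with h | h
  · left; rw [h2, h3, h]
  · right; rw [h1, h]; ring

theorem cube_descent : ∀ n : ℕ, ∀ z x y : ℤ, z.natAbs = n → IsCoprime x y →
    x^3 + y^3 = 2*z^3 → x = y ∨ z = 0 := by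
  intro n
  induction n using Nat.strong_induction_on with
  | _ n IH =>
  intro z x y hn hcop heq
  by_contra hcon
  push_neg at hcon
  obtain ⟨hxy, hz⟩ := hcon
  -- x and y are both odd
  have hno2 : ¬((2:ℤ) ∣ x ∧ (2:ℤ) ∣ y) := by
    rintro ⟨d1, d2⟩
    have := hcop.isUnit_of_dvd' d1 d2
    rw [Int.isUnit_iff] at this
    omega
  have heven : Even (x^3 + y^3) := ⟨z^3, by linarith⟩
  have hpar : Even x ↔ Even y := by
    have h1 : Even (x^3) ↔ Even x := Int.even_pow' (by norm_num)
    have h2 : Even (y^3) ↔ Even y := Int.even_pow' (by norm_num)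
    have h3 := Int.even_add.1 heven
    rw [h1, h2] at h3
    exact h3
  have hxodd : Odd x := by
    rcases Int.even_or_odd x with hx | hx
    · exfalso
      obtain ⟨c, hc⟩ := hx
      obtain ⟨d, hd⟩ := hpar.1 ⟨c, hc⟩
      exact hno2 ⟨⟨c, by omega⟩, ⟨d, by omega⟩⟩
    · exact hx
  have hyodd : Odd y := by
    rcases Int.even_or_odd y with hy | hy
    · exfalso
      obtain ⟨c, hc⟩ := hy
      obtain ⟨d, hd⟩ := hpar.2 ⟨c, hc⟩
      exact hno2 ⟨⟨d, by omega⟩, ⟨c, by omega⟩⟩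
    · exact hy
  obtain ⟨u, hu⟩ := hxodd.add_odd hyodd
  obtain ⟨v, hv⟩ := hxodd.sub_odd hyodd
  have hx : x = u + v := by omega
  have hy : y = u - v := by omega
  subst hx hy
  have h2z : 2*(z^3 - u*(u^2+3*v^2)) = 0 := by linear_combination -heq
  have hz3 : z^3 = u*(u^2+3*v^2) := by linarith
  have hcopuv : IsCoprime u v := by
    obtain ⟨m, n', hmn⟩ := hcop
    exact ⟨m + n', m - n', by linear_combination hmn⟩
  have hu0 : u ≠ 0 := by
    rintro rfl
    apply hz
    have hzz : z^3 = 0 := by rw [hz3]; ring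
    exact pow_eq_zero_iff (by norm_num) |>.1 hzz
  have hv0 : v ≠ 0 := fun h => hxy (by omega)
  have hodduv : Odd (u + v) := hxodd
  have hoddn : Odd (u^2 + 3*v^2) := odd_u2_3v2 hodduv
  rcases em ((3:ℤ) ∣ u) with c3 | c3
  · -- Case B : 3 ∣ u
    obtain ⟨w, rfl⟩ := c3
    have hw0 : w ≠ 0 := by rintro rfl; exact hu0 (by ring)
    have h3v : ¬ (3:ℤ) ∣ v := by
      intro hd
      have := hcopuv.isUnit_of_dvd' (dvd_mul_right 3 w) hd
      rw [Int.isUnit_iff] at this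
      omega
    have hcopvw : IsCoprime v w := by
      have h := IsCoprime.of_isCoprime_of_dvd_left hcopuv (dvd_mul_left w 3)
      exact h.symm
    have hoddvw : Odd (v + w) := by
      rw [Int.odd_iff] at hodduv ⊢
      omega
    have hz9 : z^3 = (9*w)*(v^2+3*w^2) := by linear_combination hz3
    have hcop9 : IsCoprime (9*w) (v^2+3*w^2) := by
      have hc3 : IsCoprime (3:ℤ) (v^2+3*w^2) := by
        rw [Int.prime_three.coprime_iff_not_dvd]
        intro hd
        apply h3v
        have hdv2 : (3:ℤ) ∣ v^2 := by
          have : v^2 = (v^2 + 3*w^2) - 3*w^2 := by ring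
          rw [this]
          exact dvd_sub hd ⟨w^2, by ring⟩
        exact Int.prime_three.dvd_of_dvd_pow hdv2
      have hcw : IsCoprime w (v^2+3*w^2) := by
        have hw2 : IsCoprime w (v^2) := hcopvw.symm.pow_right
        have h := hw2.add_mul_left_right (3*w)
        rwa [show v^2 + w*(3*w) = v^2 + 3*w^2 from by ring] at h
      have h9 : IsCoprime (9:ℤ) (v^2+3*w^2) := by
        have h32 : IsCoprime ((3:ℤ)^2) (v^2+3*w^2) := hc3.pow_left
        rwa [show (3:ℤ)^2 = 9 from by norm_num] at h32
      exact h9.mul_left hcw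
    obtain ⟨s, hs⟩ := Int.eq_pow_of_mul_eq_pow_odd_left hcop9 (by decide) hz9.symm
    obtain ⟨t, ht⟩ := Int.eq_pow_of_mul_eq_pow_odd_right hcop9 (by decide) hz9.symm
    obtain ⟨a, b, hab1, hab2⟩ := Eis.descent_param v w hcopvw hoddvw h3v ht
    have hab : IsCoprime a b := param_coprime hcopvw hoddvw hab1 hab2
    -- 3 ∣ s and w = 3*s₁³
    have h3s : (3:ℤ) ∣ s := by
      apply Int.prime_three.dvd_of_dvd_pow (n := 3)
      rw [← hs]
      exact ⟨3*w, by ring⟩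
    obtain ⟨s₁, rfl⟩ := h3s
    have hw3 : w = 3*s₁^3 := by
      have h27 : 9*w = 27*s₁^3 := by linear_combination hs
      linarith
    have hprod : a*b*(a-b) = 2*s₁^3 := by
      have h6 : 3*(a*b*(a-b)) = 6*s₁^3 := by linear_combination -hab2 + 2*hw3
      linarith
    -- coprimality of the three factors
    have hab' : IsCoprime a (a-b) := by
      have h := (hab.neg_right).add_mul_left_right 1
      rwa [show -b + a*1 = a - b from by ring] at h
    have hba : IsCoprime b (a-b) := by
      have h := (hab.symm).add_mul_left_right (-1)
      rwa [show a + b*(-1) = a - b from by ring] at h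
    -- nonzero factors
    have ha0 : a ≠ 0 := by
      rintro rfl
      apply hw0
      have : 2*w = 0 := by rw [hab2]; ring
      omega
    have hb0 : b ≠ 0 := by
      rintro rfl
      apply hw0
      have : 2*w = 0 := by rw [hab2]; ring
      omega
    have hamb0 : a - b ≠ 0 := by
      intro h
      apply hw0
      have : 2*w = 0 := by rw [hab2, show a - b = 0 from h]; ring
      omega
    -- size : |s₁³| relation with u = 3w
    have hu9 : 3*w = 9*s₁^3 := by linarith
    have heven3 : Even (a*b*(a-b)) := ⟨s₁^3, by linarith⟩
    have habs_u : |(3*w : ℤ)| = 9*|s₁^3| := by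
      rw [hu9, abs_mul, show |(9:ℤ)| = 9 from by norm_num]
    have hsz : ∀ F : ℤ, |F| ≤ |a*b*(a-b)| → |F| ≤ 2*|3*w| := by
      intro F hF
      have h1 : |a*b*(a-b)| = 2*|s₁^3| := by
        rw [hprod, abs_mul, show |(2:ℤ)| = 2 from by norm_num]
      have h2 : |s₁^3| ≥ 0 := abs_nonneg _
      rw [h1] at hF
      rw [habs_u]
      linarith
    rcases (Int.even_mul.1 heven3) with hev | hev
    rcases (Int.even_mul.1 hev) with hev2 | hev2
    · -- a even : factors (a, b, a-b)
      rcases descent_subcase IH hn hz3 hu0 hv0 hprod hev2 hab hab' hba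
        (by ring) (hsz _ (abs_le_prod3 hb0 hamb0)) with h | h
      · -- b = a - b, so a - 2b = 0, hence v = 0
        apply hv0
        have hz2 : a - 2*b = 0 := by omega
        have : 2*v = 0 := by rw [hab1, hz2]; ring
        omega
      · exact ha0 h
    · -- b even : factors (b, a, -(a-b))
      have hprod' : b*a*(-(a-b)) = 2*(-s₁)^3 := by linear_combination -hprod
      rcases descent_subcase IH hn hz3 hu0 hv0 hprod' hev2 hab.symm (hba.neg_right)
        (hab'.neg_right) (by ring) (hsz _ (by
          have h := abs_le_prod3 (A := b) ha0 hamb0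
          rwa [show b*a*(a-b) = a*b*(a-b) from by ring] at h)) with h | h
      · -- a = -(a-b), so 2a - b = 0, hence v = 0
        apply hv0
        have hz2 : 2*a - b = 0 := by omega
        have : 2*v = 0 := by rw [hab1, hz2]; ring
        omega
      · exact hb0 h
    · -- a - b even : factors (a-b, a, -b)
      have hprod' : (a-b)*a*(-b) = 2*(-s₁)^3 := by linear_combination -hprod
      rcases descent_subcase IH hn hz3 hu0 hv0 hprod' hev (hab'.symm) (hba.symm.neg_right)
        (hab.neg_right) (by ring) (hsz _ (by
          have h := abs_le_prod3 (A := a - b) ha0 hb0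
          rwa [show (a-b)*a*b = a*b*(a-b) from by ring] at h)) with h | h
      · -- a = -b, so a + b = 0, hence v = 0
        apply hv0
        have hz2 : a + b = 0 := by omega
        have : 2*v = 0 := by rw [hab1, hz2]; ring
        omega
      · exact hamb0 h
  · -- Case A : 3 ∤ u
    have hcop1 : IsCoprime u (u^2 + 3*v^2) := by
      have h3u : IsCoprime u 3 := (Int.prime_three.coprime_iff_not_dvd.2 c3).symm
      have hv2 : IsCoprime u (v^2) := hcopuv.pow_right
      have h3v2 : IsCoprime u (3*v^2) := h3u.mul_right hv2
      have h := h3v2.add_mul_left_right u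
      rwa [show 3*v^2 + u*u = u^2 + 3*v^2 from by ring] at h
    obtain ⟨s, hs⟩ := Int.eq_pow_of_mul_eq_pow_odd_left hcop1 (by decide) hz3.symm
    obtain ⟨t, ht⟩ := Int.eq_pow_of_mul_eq_pow_odd_right hcop1 (by decide) hz3.symm
    obtain ⟨a, b, hab1, hab2⟩ := Eis.descent_param u v hcopuv hodduv c3 ht
    have hab : IsCoprime a b := param_coprime hcopuv hodduv hab1 hab2
    have hprod : (a+b)*(2*a-b)*(a-2*b) = 2*s^3 := by rw [← hs]; linarith [hab1]
    -- no factor divisible by 3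
    have h3f : ∀ F G : ℤ, F*G = (a+b)*(2*a-b)*(a-2*b) → (3:ℤ) ∣ F → False := by
      intro F G hFG h3F
      apply c3
      have : (3:ℤ) ∣ 2*u := by
        rw [hab1, ← hFG]
        exact h3F.mul_right G
      rcases (Int.prime_three.dvd_mul).1 this with h | h
      · norm_num at h
      · exact h
    have h3P : ¬ (3:ℤ) ∣ (a+b) := fun h => h3f _ ((2*a-b)*(a-2*b)) (by ring) h
    have h3Q : ¬ (3:ℤ) ∣ (2*a-b) := fun h => h3f _ ((a+b)*(a-2*b)) (by ring) h
    have h3R : ¬ (3:ℤ) ∣ (a-2*b) := fun h => h3f _ ((a+b)*(2*a-b)) (by ring) h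
    -- pairwise coprimality
    have hPQ : IsCoprime (a+b) (2*a-b) :=
      coprime_of_combo hab h3P 1 1 2 (-1) (by ring) (by ring)
    have hPR : IsCoprime (a+b) (a-2*b) :=
      coprime_of_combo hab h3P 2 1 1 (-1) (by ring) (by ring)
    have hQR : IsCoprime (2*a-b) (a-2*b) :=
      coprime_of_combo hab h3Q 2 (-1) 1 (-2) (by ring) (by ring)
    -- nonzero factors
    have hP0 : a+b ≠ 0 := by
      intro h
      apply hu0
      have : 2*u = 0 := by rw [hab1, h]; ring
      omega
    have hQ0 : 2*a-b ≠ 0 := by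
      intro h
      apply hu0
      have : 2*u = 0 := by rw [hab1, h]; ring
      omega
    have hR0 : a-2*b ≠ 0 := by
      intro h
      apply hu0
      have : 2*u = 0 := by rw [hab1, h]; ring
      omega
    have hsz : ∀ F : ℤ, |F| ≤ |(a+b)*(2*a-b)*(a-2*b)| → |F| ≤ 2*|u| := by
      intro F hF
      have h1 : |(a+b)*(2*a-b)*(a-2*b)| = |2*u| := by rw [← hab1]
      have h2 : |2*u| = 2*|u| := by rw [abs_mul, show |(2:ℤ)| = 2 from by norm_num]
      rw [h1, h2] at hF
      exact hF
    have heven3 : Even ((a+b)*(2*a-b)*(a-2*b)) := ⟨s^3, by linarith⟩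
    rcases (Int.even_mul.1 heven3) with hev | hev
    rcases (Int.even_mul.1 hev) with hev2 | hev2
    · -- P = a+b even : factors (P, Q, -R), Q - R = P
      have hprod' : (a+b)*(2*a-b)*(-(a-2*b)) = 2*(-s)^3 := by linear_combination -hprod
      rcases descent_subcase IH hn hz3 hu0 hv0 hprod' hev2 hPQ (hPR.neg_right)
        (hQR.neg_right) (by ring) (hsz _ (abs_le_prod3 hQ0 hR0)) with h | h
      · -- 2a-b = -(a-2b), so a = b, hence v = 0
        apply hv0
        have hz2 : a = b := by omega
        have : 2*v = 0 := by
          rw [hab2, hz2]; ring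
        omega
      · exact hP0 h
    · -- Q = 2a-b even : factors (Q, P, R), P + R = Q
      have hprod' : (2*a-b)*(a+b)*(a-2*b) = 2*s^3 := by linear_combination hprod
      rcases descent_subcase IH hn hz3 hu0 hv0 hprod' hev2 hPQ.symm hQR
        hPR (by ring) (hsz _ (by
          have h := abs_le_prod3 (A := 2*a-b) hP0 hR0
          rwa [show (2*a-b)*(a+b)*(a-2*b) = (a+b)*(2*a-b)*(a-2*b) from by ring] at h)) with h | h
      · -- a+b = a-2b, so b = 0, hence v = 0
        apply hv0
        have hz2 : b = 0 := by omega
        have : 2*v = 0 := by rw [hab2, hz2]; ring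
        omega
      · exact hQ0 h
    · -- R = a-2b even : factors (R, Q, -P), Q - P = R
      have hprod' : (a-2*b)*(2*a-b)*(-(a+b)) = 2*(-s)^3 := by linear_combination -hprod
      rcases descent_subcase IH hn hz3 hu0 hv0 hprod' hev (hQR.symm) (hPR.symm.neg_right)
        (hPQ.symm.neg_right) (by ring) (hsz _ (by
          have h := abs_le_prod3 (A := a-2*b) hP0 hQ0
          rwa [show (a-2*b)*(a+b)*(2*a-b) = (a+b)*(2*a-b)*(a-2*b) from by ring] at h)) with h | h
      · -- 2a-b = -(a+b), so a = 0, hence v = 0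
        apply hv0
        have hz2 : a = 0 := by omega
        have : 2*v = 0 := by rw [hab2, hz2]; ring
        omega
      · exact hR0 h

/-- The only integer solutions of `x³ + y³ = 2z³` with `x, y` coprime have `x = y` or `z = 0`. -/
theorem cube_descent' {x y z : ℤ} (hcop : IsCoprime x y) (heq : x^3 + y^3 = 2*z^3) :
    x = y ∨ z = 0 :=
  cube_descent z.natAbs z x y rfl hcop heq

end Descent
section Mordell

private lemma cube_eq {a b : ℤ} (h : a^3 = b^3) : a = b := by
  have h0 : (a - b) * (a^2 + a*b + b^2) = 0 := by linear_combination h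
  rcases mul_eq_zero.1 h0 with h1 | h1
  · omega
  · have hb : b = 0 := by nlinarith [sq_nonneg (2*a+b), sq_nonneg b, sq_nonneg (a-b), sq_nonneg (a+b)]
    have ha2 : a^2 = 0 := by rw [hb] at h1; linarith [h1]
    have ha : a = 0 := by nlinarith [sq_nonneg a]
    omega

private lemma coprime_of_combo_two {X Y e f : ℤ} (hX : Odd X) (h : e*X + f*Y = 2) :
    IsCoprime X Y := by
  rw [Int.isCoprime_iff_gcd_eq_one]
  have hdX : (Int.gcd X Y : ℤ) ∣ X := Int.gcd_dvd_left X Y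
  have hdY : (Int.gcd X Y : ℤ) ∣ Y := Int.gcd_dvd_right X Y
  have hd2 : (Int.gcd X Y : ℤ) ∣ 2 := by
    rw [← h]; exact dvd_add (hdX.mul_left e) (hdY.mul_left f)
  have hgn : Int.gcd X Y ∣ 2 := by exact_mod_cast hd2
  rcases (Nat.dvd_prime Nat.prime_two).1 hgn with h1 | h1
  · exact h1
  · exfalso
    rw [h1] at hdX
    have h2 : (2:ℤ) ∣ X := by exact_mod_cast hdX
    obtain ⟨k, hk⟩ := h2
    rw [Int.odd_iff] at hX
    omega

/-- Integral points lemma: if `r² = p³ + g⁶` with `p, g` coprime and `g ≠ 0`,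
then `p ∈ {0, -g², 2g²}`. -/
private lemma mordell_aux {p g r : ℤ} (hg : g ≠ 0) (hcop : IsCoprime p g)
    (heq : r^2 = p^3 + g^6) : p = 0 ∨ p = -g^2 ∨ p = 2*g^2 := by
  have hcoprg : IsCoprime r g := by
    have h1 : IsCoprime (p^3) g := hcop.pow_left
    have h2 := h1.add_mul_left_left (g^5)
    rw [show p^3 + g*g^5 = p^3 + g^6 from by ring] at h2
    have h3 : IsCoprime (r^2) g := by rwa [← heq] at h2
    exact IsCoprime.of_isCoprime_of_dvd_left h3 (dvd_pow_self r (by norm_num))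
  have hcoprg3 : IsCoprime r (g^3) := hcoprg.pow_right
  obtain ⟨m, n, hmn⟩ := hcoprg3
  rcases Int.even_or_odd p with hpe | hpo
  · -- p even: r, g odd
    have hgo : Odd g := by
      rcases Int.even_or_odd g with hge | hgo
      · exfalso
        obtain ⟨c, hc⟩ := hpe
        obtain ⟨d, hd⟩ := hge
        have := hcop.isUnit_of_dvd' (show (2:ℤ) ∣ p from ⟨c, by omega⟩) (show (2:ℤ) ∣ g from ⟨d, by omega⟩)
        rw [Int.isUnit_iff] at this; omega
      · exact hgo
    have hro : Odd r := by
      rcases Int.even_or_odd r with hre | hro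
      · exfalso
        have h1 : Even (p^3) := Int.even_pow.2 ⟨hpe, by norm_num⟩
        have h2 : Odd (g^6) := hgo.pow
        have h3 : Odd (p^3 + g^6) := h1.add_odd h2
        rw [← heq] at h3
        have h4 : Even (r^2) := Int.even_pow.2 ⟨hre, by norm_num⟩
        exact (Int.not_odd_iff_even.2 h4) h3
      · exact hro
    have hg3o : Odd (g^3) := hgo.pow
    obtain ⟨A, hA⟩ := hro.sub_odd hg3o
    obtain ⟨B, hB⟩ := hro.add_odd hg3o
    have hA2 : 2*A = r - g^3 := by linarith
    have hB2 : 2*B = r + g^3 := by linarith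
    obtain ⟨p₀, hp0⟩ := hpe
    have hp2 : p = 2*p₀ := by omega
    have hABprod : A * B = 2 * p₀^3 := by
      have h4 : 4*(A*B) = 8*p₀^3 := by
        linear_combination (2*B)*hA2 + (r - g^3)*hB2 + heq + (p^2+2*p*p₀+4*p₀^2)*hp2
      linarith
    have hABr : A + B = r := by linarith
    have hBA : B - A = g^3 := by linarith
    have hcopAB : IsCoprime A B := ⟨m - n, m + n, by linear_combination m*hABr + n*hBA + hmn⟩
    rcases Int.even_or_odd A with hAe | hAo
    · -- A even: A = 2c³, B = d³, relation d³ + (-g)³ = 2c³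
      obtain ⟨k, hk⟩ := hAe
      have hk2 : A = 2*k := by omega
      have hkB : k * B = p₀^3 := by
        have h2 : 2*(k*B) = 2*p₀^3 := by linear_combination hABprod - B*hk2
        linarith
      have hcopkB : IsCoprime k B :=
        IsCoprime.of_isCoprime_of_dvd_left hcopAB ⟨2, by omega⟩
      obtain ⟨c, hc⟩ := Int.eq_pow_of_mul_eq_pow_odd_left hcopkB (by decide) hkB
      obtain ⟨d, hd⟩ := Int.eq_pow_of_mul_eq_pow_odd_right hcopkB (by decide) hkB
      have hA3 : A = 2*c^3 := by rw [hk2, hc]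
      have hrel : d^3 + (-g)^3 = 2*c^3 := by
        have hd3 : d^3 - 2*c^3 = g^3 := by rw [← hd, ← hA3]; linarith
        linear_combination hd3
      have hcopBg : IsCoprime B g := ⟨2*m, (n - m)*g^2, by linear_combination m*hB2 + hmn⟩
      have hcopdg : IsCoprime d (-g) :=
        (IsCoprime.of_isCoprime_of_dvd_left hcopBg ⟨d^2, by rw [hd]; ring⟩).neg_right
      rcases cube_descent' hcopdg hrel with h | h
      · -- d = -g : r = -3g³, p = 2g²
        right; right
        have hBg : B = -g^3 := by rw [hd, h]; ring
        have hr : r = -3*g^3 := by linarith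
        have hp3 : p^3 = (2*g^2)^3 := by linear_combination -heq + (r - 3*g^3)*hr
        exact cube_eq hp3
      · -- c = 0 : A = 0, r = g³, p = 0
        left
        have hA0 : A = 0 := by rw [hA3, h]; ring
        have hr : r = g^3 := by linarith
        have hp3 : p^3 = 0 := by linear_combination -heq + (r + g^3)*hr
        exact pow_eq_zero_iff (by norm_num) |>.1 hp3
    · -- B even (A odd, A + B = r odd)
      have hBe : Even B := by
        rcases Int.even_or_odd B with hB' | hB'
        · exact hB'
        · exfalso
          have : Even (A + B) := hAo.add_odd hB'
          rw [hABr] at this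
          exact (Int.not_odd_iff_even.2 this) hro
      obtain ⟨k, hk⟩ := hBe
      have hk2 : B = 2*k := by omega
      have hkA : k * A = p₀^3 := by
        have h2 : 2*(k*A) = 2*p₀^3 := by linear_combination hABprod - A*hk2
        linarith
      have hcopkA : IsCoprime k A :=
        IsCoprime.of_isCoprime_of_dvd_left hcopAB.symm ⟨2, by omega⟩
      obtain ⟨c, hc⟩ := Int.eq_pow_of_mul_eq_pow_odd_left hcopkA (by decide) hkA
      obtain ⟨d, hd⟩ := Int.eq_pow_of_mul_eq_pow_odd_right hcopkA (by decide) hkA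
      have hB3 : B = 2*c^3 := by rw [hk2, hc]
      have hrel : d^3 + g^3 = 2*c^3 := by
        have hd3 : 2*c^3 - d^3 = g^3 := by rw [← hd, ← hB3]; linarith
        linear_combination -hd3
      have hcopAg : IsCoprime A g := ⟨2*m, (n + m)*g^2, by linear_combination m*hA2 + hmn⟩
      have hcopdg : IsCoprime d g :=
        IsCoprime.of_isCoprime_of_dvd_left hcopAg ⟨d^2, by rw [hd]; ring⟩
      rcases cube_descent' hcopdg hrel with h | h
      · -- d = g : A = g³, r = 3g³, p = 2g²
        right; right
        have hAg : A = g^3 := by rw [hd, h]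
        have hr : r = 3*g^3 := by linarith
        have hp3 : p^3 = (2*g^2)^3 := by linear_combination -heq + (r + 3*g^3)*hr
        exact cube_eq hp3
      · -- c = 0 : B = 0, r = -g³, p = 0
        left
        have hB0 : B = 0 := by rw [hB3, h]; ring
        have hr : r = -g^3 := by linarith
        have hp3 : p^3 = 0 := by linear_combination -heq + (r - g^3)*hr
        exact pow_eq_zero_iff (by norm_num) |>.1 hp3
  · -- p odd
    have hfac : (r - g^3) * (r + g^3) = p^3 := by linear_combination heq
    have hodd3 : Odd (p^3) := hpo.pow
    have hoddfac : Odd ((r - g^3) * (r + g^3)) := by rwa [hfac]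
    have hodd1 : Odd (r - g^3) := (Int.odd_mul.1 hoddfac).1
    have hcopfac : IsCoprime (r - g^3) (r + g^3) :=
      coprime_of_combo_two hodd1 (e := m - n) (f := m + n) (by linear_combination 2*hmn)
    obtain ⟨c, hc⟩ := Int.eq_pow_of_mul_eq_pow_odd_left hcopfac (by decide) hfac
    obtain ⟨d, hd⟩ := Int.eq_pow_of_mul_eq_pow_odd_right hcopfac (by decide) hfac
    have hrel : d^3 + (-c)^3 = 2*g^3 := by
      have : d^3 - c^3 = 2*g^3 := by rw [← hc, ← hd]; ring
      linear_combination this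
    have hcopdc : IsCoprime d (-c) := by
      have h1 : IsCoprime (r + g^3) (r - g^3) := hcopfac.symm
      have h2 : IsCoprime d (r - g^3) :=
        IsCoprime.of_isCoprime_of_dvd_left h1 ⟨d^2, by rw [hd]; ring⟩
      have h3 : IsCoprime d c :=
        IsCoprime.of_isCoprime_of_dvd_right h2 ⟨c^2, by rw [hc]; ring⟩
      exact h3.neg_right
    rcases cube_descent' hcopdc hrel with h | h
    · -- d = -c : r = 0, p = -g²
      right; left
      have hsum : r + g^3 = -(r - g^3) := by rw [hd, hc, h]; ring
      have hr0 : r = 0 := by linarith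
      have hp3 : p^3 = (-g^2)^3 := by linear_combination -heq + r*hr0
      exact cube_eq hp3
    · exact absurd h hg

private lemma rat_num_den_coprime (q : ℚ) : IsCoprime q.num (q.den : ℤ) := by
  rw [Int.isCoprime_iff_gcd_eq_one]
  simpa [Int.gcd, Int.natAbs_natCast] using q.reduced

private lemma rat_sq_ne_two (q : ℚ) : q^2 ≠ 2 := by
  intro h
  have hden : ((q.den : ℤ) : ℚ) ≠ 0 := by
    simp [q.den_nz]
  have hy : (q.num : ℚ) = q * ((q.den : ℤ) : ℚ) := by
    have h0 : ((q.num:ℚ)) / (((q.den:ℤ)):ℚ) = q := by push_cast; exact Rat.num_div_den q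
    exact (div_eq_iff hden).1 h0
  have key : q.num^2 = 2 * (q.den:ℤ)^2 := by
    have h1 : ((q.num : ℚ))^2 = 2 * (((q.den:ℤ)) : ℚ)^2 := by
      rw [hy]
      linear_combination (((q.den:ℤ)):ℚ)^2 * h
    exact_mod_cast h1
  have h2 : (2:ℤ) ∣ q.num := by
    apply Int.prime_two.dvd_of_dvd_pow (n := 2)
    exact ⟨(q.den:ℤ)^2, key⟩
  obtain ⟨k, hk⟩ := h2
  have h3 : (2:ℤ) ∣ (q.den:ℤ) := by
    apply Int.prime_two.dvd_of_dvd_pow (n := 2)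
    refine ⟨k^2, ?_⟩
    have h4 : 4*k^2 = 2*(q.den:ℤ)^2 := by rw [hk] at key; linear_combination key
    linarith
  have := (rat_num_den_coprime q).isUnit_of_dvd' ⟨k, hk⟩ h3
  rw [Int.isUnit_iff] at this
  omega

/-- The rational points of `s² = y³ + 1` have `y ∈ {0, -1, 2}`. -/
private lemma mordell_rat (y s : ℚ) (h : s^2 = y^3 + 1) : y = 0 ∨ y = -1 ∨ y = 2 := by
  have hdy : ((y.den : ℤ) : ℚ) ≠ 0 := by simp [y.den_nz]
  have hds : ((s.den : ℤ) : ℚ) ≠ 0 := by simp [s.den_nz]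
  have hdy' : (y.den : ℤ) ≠ 0 := by exact_mod_cast hdy
  have hds' : (s.den : ℤ) ≠ 0 := by exact_mod_cast hds
  have hy : (y.num : ℚ) = y * ((y.den : ℤ) : ℚ) := by
    have h0 : ((y.num:ℚ)) / (((y.den:ℤ)):ℚ) = y := by push_cast; exact Rat.num_div_den y
    exact (div_eq_iff hdy).1 h0
  have hs : (s.num : ℚ) = s * ((s.den : ℤ) : ℚ) := by
    have h0 : ((s.num:ℚ)) / (((s.den:ℤ)):ℚ) = s := by push_cast; exact Rat.num_div_den s
    exact (div_eq_iff hds).1 h0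
  have key : s.num^2 * (y.den:ℤ)^3 = (y.num^3 + (y.den:ℤ)^3) * (s.den:ℤ)^2 := by
    have h1 : ((s.num : ℚ))^2 * (((y.den:ℤ)) : ℚ)^3
        = (((y.num:ℤ) : ℚ)^3 + (((y.den:ℤ)) : ℚ)^3) * (((s.den:ℤ)) : ℚ)^2 := by
      rw [hy, hs]
      linear_combination (((s.den:ℤ)):ℚ)^2 * (((y.den:ℤ)):ℚ)^3 * h
    exact_mod_cast h1
  have hcop := rat_num_den_coprime y
  have hcops := rat_num_den_coprime s
  have hcop1 : IsCoprime (y.num^3 + (y.den:ℤ)^3) ((y.den:ℤ)^3) := by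
    have h1 : IsCoprime (y.num^3) ((y.den:ℤ)^3) := hcop.pow
    have h2 := h1.add_mul_left_left 1
    rwa [mul_one] at h2
  have hcop2 : IsCoprime (s.num^2) ((s.den:ℤ)^2) := hcops.pow
  -- s.den² = y.den³
  have hdvd1 : ((s.den:ℤ)^2) ∣ ((y.den:ℤ)^3) := by
    have h1 : ((s.den:ℤ)^2) ∣ s.num^2 * (y.den:ℤ)^3 := by
      rw [key]; exact dvd_mul_left _ _
    exact (hcop2.symm).dvd_of_dvd_mul_left h1
  have hdvd2 : ((y.den:ℤ)^3) ∣ ((s.den:ℤ)^2) := by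
    have h1 : ((y.den:ℤ)^3) ∣ (y.num^3 + (y.den:ℤ)^3) * (s.den:ℤ)^2 := by
      rw [← key]; exact dvd_mul_left _ _
    exact (hcop1.symm).dvd_of_dvd_mul_left h1
  have heq_dens : (y.den:ℤ)^3 = (s.den:ℤ)^2 :=
    Int.dvd_antisymm (by positivity) (by positivity) hdvd2 hdvd1
  -- y.den is a perfect square
  obtain ⟨gg, hgg⟩ : ∃ gg : ℤ, (y.den:ℤ) = gg^2 := by
    have hc2 : (s.den:ℤ)^2 ∣ ((y.den:ℤ)^2)^2 := by
      refine ⟨(y.den:ℤ), ?_⟩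
      rw [← heq_dens]; ring
    have hc : (s.den:ℤ) ∣ (y.den:ℤ)^2 := (Int.pow_dvd_pow_iff (by norm_num)).1 hc2
    obtain ⟨k, hk⟩ := hc
    refine ⟨k, ?_⟩
    have hc20 : (s.den:ℤ)^2 ≠ 0 := pow_ne_zero _ hds'
    apply mul_left_cancel₀ hc20
    have : ((y.den:ℤ)^2)^2 = (s.den:ℤ)^2 * k^2 := by rw [hk]; ring
    have h2 : (y.den:ℤ) * (y.den:ℤ)^3 = (s.den:ℤ)^2 * k^2 := by
      rw [← this]; ring
    rw [heq_dens] at h2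
    linear_combination h2
  have hgg0 : gg ≠ 0 := by
    intro h0
    apply hdy'
    rw [hgg, h0]
    ring
  -- r² = p³ + g⁶
  have hd6 : (y.den:ℤ)^3 = gg^6 := by rw [hgg]; ring
  have hr2 : s.num^2 = y.num^3 + gg^6 := by
    have h1 : s.num^2 * (s.den:ℤ)^2 = (y.num^3 + gg^6) * (s.den:ℤ)^2 := by
      calc s.num^2 * (s.den:ℤ)^2 = s.num^2 * (y.den:ℤ)^3 := by rw [heq_dens]
        _ = (y.num^3 + (y.den:ℤ)^3) * (s.den:ℤ)^2 := key
        _ = (y.num^3 + gg^6) * (s.den:ℤ)^2 := by rw [hd6]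
    exact mul_right_cancel₀ (pow_ne_zero 2 hds') h1
  have hcop_ng : IsCoprime y.num gg :=
    IsCoprime.of_isCoprime_of_dvd_right hcop ⟨gg, by rw [hgg]; ring⟩
  have hggQ : (gg:ℚ) ≠ 0 := Int.cast_ne_zero.2 hgg0
  have hyd : y = ((y.num:ℚ))/(((y.den:ℤ)):ℚ) := (eq_div_iff hdy).2 hy.symm
  rcases mordell_aux hgg0 hcop_ng hr2 with h | h | h
  · left
    have : y.num = 0 := h
    exact Rat.num_eq_zero.1 this
  · right; left
    rw [hyd, h, hgg]
    push_cast
    rw [neg_div, div_self (pow_ne_zero 2 hggQ)]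
  · right; right
    rw [hyd, h, hgg]
    push_cast
    rw [mul_div_assoc, div_self (pow_ne_zero 2 hggQ), mul_one]

end Mordell

/-- For rational numbers `t` and `y`, if `y³ = 4t²(t² − 1)` then `y = 0` (equivalently,
`t ∈ {0, 1, −1}`); that is, `4t²(t² − 1)` is never a nonzero rational cube. -/
theorem no_rational_cube_4t2_t2_sub_one :
    ∀ t y : ℚ, y ^ 3 = 4 * t ^ 2 * (t ^ 2 - 1) → y = 0 ∧ (t = 0 ∨ t = 1 ∨ t = -1) := by
  intro t y h
  have hs : (2*t^2 - 1)^2 = y^3 + 1 := by linear_combination -h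
  rcases mordell_rat y (2*t^2-1) hs with hy | hy | hy
  · subst hy
    refine ⟨rfl, ?_⟩
    have h0 : 4 * t^2 * (t^2 - 1) = 0 := by linear_combination -h
    rcases mul_eq_zero.1 h0 with h1 | h1
    · rcases mul_eq_zero.1 h1 with h2 | h2
      · norm_num at h2
      · left; exact pow_eq_zero_iff (by norm_num) |>.1 h2
    · have h2 : (t-1)*(t+1) = 0 := by linear_combination h1
      rcases mul_eq_zero.1 h2 with h3 | h3
      · right; left; linarith
      · right; right; linarith
  · exfalso
    rw [hy] at hs
    have h0 : (2*t^2 - 1)^2 = 0 := by rw [hs]; norm_num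
    have h1 : 2*t^2 - 1 = 0 := pow_eq_zero_iff (by norm_num) |>.1 h0
    apply rat_sq_ne_two (2*t)
    linear_combination 2*h1
  · exfalso
    rw [hy] at hs
    have h0 : (2*t^2-1-3)*(2*t^2-1+3) = 0 := by linear_combination hs
    rcases mul_eq_zero.1 h0 with h1 | h1
    · apply rat_sq_ne_two t
      linarith
    · nlinarith [sq_nonneg t]
end

section
/- For all rational numbers w and y, if y² = w(w³ − 8)(w³ + 1) then y = 0 (and hence w ∈ {0, 2, −1}); that is, w(w³ − 8)(w³ + 1) is never a nonzero rational square. -/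
lemma three_dvd_of_sq_add_sq (a b : ℤ) (h : (3:ℤ) ∣ a^2 + b^2) : (3:ℤ) ∣ a ∧ (3:ℤ) ∣ b := by
  have key : ∀ u v : ZMod 3, u^2 + v^2 = 0 → u = 0 ∧ v = 0 := by decide
  have hc : ((a:ZMod 3))^2 + ((b:ZMod 3))^2 = 0 := by
    have := (ZMod.intCast_zmod_eq_zero_iff_dvd (a^2+b^2) 3).mpr h
    push_cast at this
    exact this
  obtain ⟨ha, hb⟩ := key _ _ hc
  exact ⟨(ZMod.intCast_zmod_eq_zero_iff_dvd a 3).mp ha, (ZMod.intCast_zmod_eq_zero_iff_dvd b 3).mp hb⟩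

lemma isCoprime_two_of_odd (a : ℤ) (h : Odd a) : IsCoprime a 2 := by
  obtain ⟨k, rfl⟩ := h
  exact ⟨1, -k, by ring⟩

lemma sq_le_sq_factor (a b : ℤ) (hb : b ≠ 0) : a^2 ≤ (b*a)^2 := by
  have h1 : 1 ≤ |b| := Int.one_le_abs hb
  have h2 : 1 ≤ b^2 := by nlinarith [sq_abs b]
  nlinarith [sq_nonneg a]

lemma isCoprime_sq_sub_sq_mul (m n : ℤ) (h : IsCoprime m n) : IsCoprime (m^2 - n^2) (m*n) := by
  have h1 : IsCoprime (m^2 - n^2) m := by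
    have h0 : IsCoprime (-n^2) m := (h.symm.pow_left).neg_left
    have := h0.add_mul_left_left m
    have he : -n^2 + m*m = m^2 - n^2 := by ring
    rwa [he] at this
  have h2 : IsCoprime (m^2 - n^2) n := by
    have h0 : IsCoprime (m^2) n := h.pow_left
    have := h0.add_mul_left_left (-n)
    have he : m^2 + n*(-n) = m^2 - n^2 := by ring
    rwa [he] at this
  exact h1.mul_right h2

lemma odd_sq_sub_sq (m n : ℤ) (hp : m % 2 = 0 ∧ n % 2 = 1 ∨ m % 2 = 1 ∧ n % 2 = 0) :
    Odd (m^2 - n^2) := by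
  rcases hp with ⟨hm, hn⟩ | ⟨hm, hn⟩
  · obtain ⟨k, hk⟩ := Int.even_iff.mpr hm
    obtain ⟨j, hj⟩ := Int.odd_iff.mpr hn
    exact ⟨2*k^2 - 2*j^2 - 2*j - 1, by rw [hk, hj]; ring⟩
  · obtain ⟨j, hj⟩ := Int.odd_iff.mpr hm
    obtain ⟨k, hk⟩ := Int.even_iff.mpr hn
    exact ⟨2*j^2 + 2*j - 2*k^2, by rw [hj, hk]; ring⟩

lemma formII (a1 a2 a3 a4 : ℤ) (h14 : IsCoprime a1 a4) (h23 : IsCoprime a2 a3)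
    (h1 : a1 ≠ 0)
    (heq : a4^2 * (a3^2 + a2^2) = a1^2 * (a3^2 + 4*a2^2)) :
    a1^2 = a3^2 + a2^2 ∧ a4^2 = a3^2 + 4*a2^2 := by
  have hcop : IsCoprime (a1^2) (a4^2) := h14.pow
  have hdvd : a1^2 ∣ a3^2 + a2^2 := by
    have : a1^2 ∣ a4^2 * (a3^2 + a2^2) := ⟨a3^2 + 4*a2^2, by linarith [heq]⟩
    exact hcop.dvd_of_dvd_mul_left this
  obtain ⟨k, hk⟩ := hdvd
  have hk' : a3^2 + 4*a2^2 = k * a4^2 := by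
    have h12 : a1^2 ≠ 0 := pow_ne_zero _ h1
    have : a1^2 * (a3^2 + 4*a2^2) = a1^2 * (k * a4^2) := by
      rw [← heq, hk]; ring
    exact mul_left_cancel₀ h12 this
  have hk2 : a3^2 + a2^2 = k * a1^2 := by rw [hk]; ring
  have hApos : 0 < a3^2 + a2^2 := by
    rcases lt_or_eq_of_le (by positivity : (0:ℤ) ≤ a3^2 + a2^2) with h | h
    · exact h
    · exfalso
      have h2 : a2 = 0 := by nlinarith [sq_nonneg a2, sq_nonneg a3]
      have h3 : a3 = 0 := by nlinarith [sq_nonneg a2, sq_nonneg a3]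
      rw [h2, h3] at h23
      exact IsUnit.ne_zero (isCoprime_zero_left.mp h23) rfl
  have hkpos : 0 < k := by
    by_contra hle
    push_neg at hle
    nlinarith [sq_nonneg a1, mul_nonneg (neg_nonneg.mpr hle) (sq_nonneg a1)]
  have h3a2 : 3 * a2^2 = k * (a4^2 - a1^2) := by linarith [hk2, hk']
  have hka2 : IsCoprime k a2 := by
    rw [Int.isCoprime_iff_gcd_eq_one]
    by_contra hne
    have hdl : (Int.gcd k a2 : ℤ) ∣ k := Int.gcd_dvd_left _ _
    have hdr : (Int.gcd k a2 : ℤ) ∣ a2 := Int.gcd_dvd_right _ _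
    have hda3 : (Int.gcd k a2 : ℤ) ∣ a3^2 := by
      have : a3^2 = k * a1^2 - a2^2 := by linarith [hk2]
      rw [this]
      exact dvd_sub (hdl.mul_right _) (by exact Dvd.dvd.mul_right (hdr) a2 |>.trans (by rw [sq]))
    have hd1 : (Int.gcd k a2 : ℤ) ∣ 1 := by
      have hc : IsCoprime a2 (a3^2) := h23.pow_right
      have := Int.dvd_gcd hdr hda3
      rw [Int.isCoprime_iff_gcd_eq_one.mp hc] at this; exact_mod_cast this
    exact hne (Nat.eq_one_of_dvd_one (by exact_mod_cast hd1))
  have hk3 : k ∣ 3 := by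
    have : k ∣ 3 * a2^2 := ⟨a4^2 - a1^2, h3a2⟩
    exact (hka2.pow_right (n := 2)).dvd_of_dvd_mul_right this
  have hub : k ≤ 3 := Int.le_of_dvd (by norm_num) hk3
  have hk13 : k = 1 ∨ k = 3 := by
    interval_cases k
    · left; rfl
    · norm_num at hk3
    · right; rfl
  rcases hk13 with rfl | rfl
  · exact ⟨by linarith [hk2], by linarith [hk']⟩
  · exfalso
    have h3dvd : (3:ℤ) ∣ a3^2 + a2^2 := ⟨a1^2, hk2⟩
    obtain ⟨d3, d2⟩ := three_dvd_of_sq_add_sq a3 a2 h3dvd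
    obtain ⟨u, v, huv⟩ := h23
    have : (3:ℤ) ∣ 1 := by
      rw [← huv]
      exact dvd_add (Dvd.dvd.mul_left d2 u) (Dvd.dvd.mul_left d3 v)
    norm_num at this

lemma four_split (a b c d : ℤ) (ha : a ≠ 0) (hab : IsCoprime a b)
    (h : a * b = c * d) :
    ∃ w x y z : ℤ, a = w * x ∧ b = y * z ∧ c = w * y ∧ d = x * z ∧
      IsCoprime x y ∧ IsCoprime w z := by
  set g : ℤ := (Int.gcd a c : ℤ) with hg
  have hgdvda : g ∣ a := Int.gcd_dvd_left _ _
  have hgdvdc : g ∣ c := Int.gcd_dvd_right _ _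
  have hgne : g ≠ 0 := by
    simp only [hg]
    exact_mod_cast fun hh => ha (Int.natAbs_eq_zero.mp (Nat.eq_zero_of_gcd_eq_zero_left (by exact_mod_cast hh)))
  obtain ⟨x, hx⟩ := hgdvda
  obtain ⟨y, hy⟩ := hgdvdc
  have hxy : IsCoprime x y := by
    rw [Int.isCoprime_iff_gcd_eq_one]
    have hpos : 0 < Int.gcd a c := by
      rcases Nat.eq_zero_or_pos (Int.gcd a c) with h0 | h0
      · exact absurd (by exact_mod_cast h0 : ((Int.gcd a c : ℤ) = 0)) hgne
      · exact h0
    have := Int.gcd_div_gcd_div_gcd (i := a) (j := c) hpos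
    have hxa : x = a / g := by
      rw [hx]; rw [Int.mul_ediv_cancel_left _ hgne]
    have hyc : y = c / g := by
      rw [hy]; rw [Int.mul_ediv_cancel_left _ hgne]
    rw [hxa, hyc]
    exact this
  have hxb : x * b = y * d := by
    have : g * (x * b) = g * (y * d) := by
      rw [← mul_assoc, ← hx, ← mul_assoc, ← hy]; exact h
    exact mul_left_cancel₀ hgne this
  have hxne : x ≠ 0 := by
    intro h0; apply ha; rw [hx, h0, mul_zero]
  have hxdvd : x ∣ d := by
    have : x ∣ y * d := ⟨b, by linarith [hxb]⟩
    exact hxy.dvd_of_dvd_mul_left this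
  obtain ⟨z, hz⟩ := hxdvd
  have hb : b = y * z := by
    have : x * b = x * (y * z) := by rw [hxb, hz]; ring
    exact mul_left_cancel₀ hxne this
  refine ⟨g, x, y, z, hx, hb, hy, hz, hxy, ?_⟩
  rw [Int.isCoprime_iff_gcd_eq_one]
  by_contra hne
  have h1 : (Int.gcd g z : ℤ) ∣ a := dvd_trans (Int.gcd_dvd_left _ _) (by rw [hx]; exact Dvd.intro x rfl)
  have h2 : (Int.gcd g z : ℤ) ∣ b := dvd_trans (Int.gcd_dvd_right _ _) (by rw [hb]; exact ⟨y, by ring⟩)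
  have hdd : (Int.gcd g z : ℤ) ∣ ((Int.gcd a b : ℤ)) := by exact_mod_cast Int.dvd_gcd h1 h2
  rw [Int.isCoprime_iff_gcd_eq_one.mp hab] at hdd
  have : Int.gcd g z = 1 := Nat.eq_one_of_dvd_one (by exact_mod_cast hdd)
  exact hne this

set_option maxHeartbeats 1600000 in
lemma lemC : ∀ N : ℕ, ∀ x y c d : ℤ, (x^2 + y^2).toNat ≤ N → IsCoprime x y →
    x ≠ 0 → y ≠ 0 → x^2 + y^2 = c^2 → x^2 + 4*y^2 = d^2 → False := by
  intro N
  induction N using Nat.strong_induction_on with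
  | _ N ih =>
  intro x y c d hle hxy hx0 hy0 hc hd
  have ht1 : PythagoreanTriple x y c := by
    unfold PythagoreanTriple; linear_combination hc
  obtain ⟨m, n, hmn1, _hz1, hmncopN, hmnpar⟩ :=
    PythagoreanTriple.coprime_classification.mp ⟨ht1, Int.isCoprime_iff_gcd_eq_one.mp hxy⟩
  have hmncop : IsCoprime m n := Int.isCoprime_iff_gcd_eq_one.mpr hmncopN
  have hm0 : m ≠ 0 := by
    rintro rfl
    rcases hmn1 with ⟨hx1, hy1⟩ | ⟨hx1, hy1⟩
    · exact hy0 (by rw [hy1]; ring)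
    · exact hx0 (by rw [hx1]; ring)
  have hn0 : n ≠ 0 := by
    rintro rfl
    rcases hmn1 with ⟨hx1, hy1⟩ | ⟨hx1, hy1⟩
    · exact hy0 (by rw [hy1]; ring)
    · exact hx0 (by rw [hx1]; ring)
  have hsum : x^2 + y^2 = (m^2+n^2)^2 := by
    rcases hmn1 with ⟨hx1, hy1⟩ | ⟨hx1, hy1⟩ <;> rw [hx1, hy1] <;> ring
  have key : ∀ Z W X Y : ℤ, IsCoprime Z W → Z ≠ 0 → W ≠ 0 →
      Z^2 + W^2 ≤ m^2 + n^2 → Z^2 + W^2 = X^2 → Z^2 + 4*W^2 = Y^2 → False := by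
    intro Z W X Y hcop hZ hW hbound h1 h2
    have hmn2 : (2:ℤ) ≤ m^2 + n^2 := by
      have h1m : m^2 ≠ 0 := pow_ne_zero _ hm0
      have h1n : n^2 ≠ 0 := pow_ne_zero _ hn0
      have h2m : 0 ≤ m^2 := sq_nonneg m
      have h2n : 0 ≤ n^2 := sq_nonneg n
      omega
    have hlt : Z^2 + W^2 < x^2 + y^2 := by
      rw [hsum]
      nlinarith [sq_nonneg (m^2 + n^2 - 1), hbound, hmn2]
    have hltN : (Z^2 + W^2).toNat < N := by
      have e1 : ((Z^2 + W^2).toNat : ℤ) = Z^2 + W^2 := Int.toNat_of_nonneg (by positivity)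
      have e2 : ((x^2 + y^2).toNat : ℤ) = x^2 + y^2 := Int.toNat_of_nonneg (by positivity)
      omega
    exact ih _ hltN Z W X Y le_rfl hcop hZ hW h1 h2
  rcases hmn1 with ⟨hx1, hy1⟩ | ⟨hx1, hy1⟩
  · -- Branch A : x = m²-n² (odd), y = 2mn
    have hxodd : Odd x := by
      rw [hx1]; exact odd_sq_sub_sq m n hmnpar
    have ht2 : PythagoreanTriple x (2*y) d := by
      unfold PythagoreanTriple; linear_combination hd
    have hco2 : Int.gcd x (2*y) = 1 :=
      Int.isCoprime_iff_gcd_eq_one.mp ((isCoprime_two_of_odd x hxodd).mul_right hxy)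
    obtain ⟨r, s, hrs1, _hz2, hrscopN, hrspar⟩ :=
      PythagoreanTriple.coprime_classification.mp ⟨ht2, hco2⟩
    have hrscop : IsCoprime r s := Int.isCoprime_iff_gcd_eq_one.mpr hrscopN
    rcases hrs1 with ⟨hxr, hyr⟩ | ⟨hxr, hyr⟩
    swap
    · exact (Int.not_odd_iff_even.mpr ⟨r*s, by rw [hxr]; ring⟩) hxodd
    have hrs_eq : r * s = 2*(m*n) := by
      have h2 : 2*y = 2*(r*s) := by rw [hyr]; ring
      have h3 := mul_left_cancel₀ (two_ne_zero (α := ℤ)) h2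
      rw [hy1] at h3; linarith
    have heqq : m^2 - n^2 = r^2 - s^2 := by rw [← hx1, hxr]
    rcases hrspar with ⟨hre, _hso⟩ | ⟨_hro, hse⟩
    · -- r even
      obtain ⟨r1, hr1⟩ : (2:ℤ) ∣ r := Int.dvd_of_emod_eq_zero hre
      have hsplit_eq : r1 * s = m * n := by
        have h2 : 2*(r1*s) = 2*(m*n) := by rw [← hrs_eq, hr1]; ring
        exact mul_left_cancel₀ two_ne_zero h2
      have hr1ne : r1 ≠ 0 := by
        rintro rfl
        simp only [zero_mul] at hsplit_eq
        rcases mul_eq_zero.mp hsplit_eq.symm with h | h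
        · exact hm0 h
        · exact hn0 h
      have hr1s : IsCoprime r1 s := hrscop.of_isCoprime_of_dvd_left ⟨2, by linarith [hr1]⟩
      obtain ⟨W, X, Y, Z, hsp1, hsp2, hsp3, hsp4, hXY, hWZ⟩ :=
        four_split r1 s m n hr1ne hr1s hsplit_eq
      have hXne : X ≠ 0 := by rintro rfl; exact hn0 (by rw [hsp4]; ring)
      have hYne : Y ≠ 0 := by rintro rfl; exact hm0 (by rw [hsp3]; ring)
      have hWne : W ≠ 0 := by rintro rfl; exact hm0 (by rw [hsp3]; ring)
      have hZne : Z ≠ 0 := by rintro rfl; exact hn0 (by rw [hsp4]; ring)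
      have hA : m^2 = (W*Y)^2 := by rw [hsp3]
      have hB : n^2 = (X*Z)^2 := by rw [hsp4]
      have hC : r^2 = (2*(W*X))^2 := by rw [hr1, hsp1]
      have hD : s^2 = (Y*Z)^2 := by rw [hsp2]
      have hform : Y^2 * (Z^2 + W^2) = X^2 * (Z^2 + 4*W^2) := by
        linear_combination heqq - hA + hB + hC - hD
      obtain ⟨hc1, hc2⟩ := formII X W Z Y hXY hWZ hXne hform
      have hZn : Z^2 ≤ n^2 := by rw [hsp4]; exact sq_le_sq_factor Z X hXne
      have hWm : W^2 ≤ m^2 := by rw [hsp3, mul_comm W Y]; exact sq_le_sq_factor W Y hYne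
      exact key Z W X Y hWZ.symm hZne hWne (by linarith) hc1.symm hc2.symm
    · -- s even
      obtain ⟨s1, hs1⟩ : (2:ℤ) ∣ s := Int.dvd_of_emod_eq_zero hse
      have hsplit_eq : s1 * r = m * n := by
        have h2 : 2*(s1*r) = 2*(m*n) := by rw [← hrs_eq, hs1]; ring
        exact mul_left_cancel₀ two_ne_zero h2
      have hs1ne : s1 ≠ 0 := by
        rintro rfl
        simp only [zero_mul] at hsplit_eq
        rcases mul_eq_zero.mp hsplit_eq.symm with h | h
        · exact hm0 h
        · exact hn0 h
      have hs1r : IsCoprime s1 r := (hrscop.symm).of_isCoprime_of_dvd_left ⟨2, by linarith [hs1]⟩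
      obtain ⟨W, X, Y, Z, hsp1, hsp2, hsp3, hsp4, hXY, hWZ⟩ :=
        four_split s1 r m n hs1ne hs1r hsplit_eq
      have hXne : X ≠ 0 := by rintro rfl; exact hn0 (by rw [hsp4]; ring)
      have hYne : Y ≠ 0 := by rintro rfl; exact hm0 (by rw [hsp3]; ring)
      have hWne : W ≠ 0 := by rintro rfl; exact hm0 (by rw [hsp3]; ring)
      have hZne : Z ≠ 0 := by rintro rfl; exact hn0 (by rw [hsp4]; ring)
      have hA : m^2 = (W*Y)^2 := by rw [hsp3]
      have hB : n^2 = (X*Z)^2 := by rw [hsp4]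
      have hC : r^2 = (Y*Z)^2 := by rw [hsp2]
      have hD : s^2 = (2*(W*X))^2 := by rw [hs1, hsp1]
      have hform : Z^2 * (Y^2 + X^2) = W^2 * (Y^2 + 4*X^2) := by
        linear_combination -heqq + hA - hB - hC + hD
      obtain ⟨hc1, hc2⟩ := formII W X Y Z hWZ hXY hWne hform
      have hYm : Y^2 ≤ m^2 := by rw [hsp3]; exact sq_le_sq_factor Y W hWne
      have hXn : X^2 ≤ n^2 := by rw [hsp4, mul_comm X Z]; exact sq_le_sq_factor X Z hZne
      exact key Y X W Z hXY.symm hYne hXne (by linarith) hc1.symm hc2.symm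
  · -- Branch B : x = 2mn, y = m²-n² (odd)
    have hmn_odd : Odd (m^2 - n^2) := odd_sq_sub_sq m n hmnpar
    have hdeven : Even d := by
      have h2 : Even (d^2) := by
        refine ⟨2*(m*n)^2 + 2*(m^2-n^2)^2, ?_⟩
        rw [← hd, hx1, hy1]; ring
      exact (Int.even_pow.mp h2).1
    obtain ⟨d1, hd1⟩ := hdeven
    have hd1sq : (m^2-n^2)^2 + (m*n)^2 = d1^2 := by
      have h2 : x^2 + 4*y^2 = (d1 + d1)^2 := by rw [← hd1, hd]
      rw [hx1, hy1] at h2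
      have h4 : 4*((m^2-n^2)^2 + (m*n)^2) = 4*(d1^2) := by linear_combination h2
      exact mul_left_cancel₀ (by norm_num : (4:ℤ) ≠ 0) h4
    have ht2 : PythagoreanTriple (m^2-n^2) (m*n) d1 := by
      unfold PythagoreanTriple; linear_combination hd1sq
    have hco2 : Int.gcd (m^2-n^2) (m*n) = 1 :=
      Int.isCoprime_iff_gcd_eq_one.mp (isCoprime_sq_sub_sq_mul m n hmncop)
    obtain ⟨r, s, hrs1, _hz2, hrscopN, hrspar⟩ :=
      PythagoreanTriple.coprime_classification.mp ⟨ht2, hco2⟩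
    have hrscop : IsCoprime r s := Int.isCoprime_iff_gcd_eq_one.mpr hrscopN
    rcases hrs1 with ⟨hxr, hyr⟩ | ⟨hxr, hyr⟩
    swap
    · exact (Int.not_odd_iff_even.mpr ⟨r*s, by rw [hxr]; ring⟩) hmn_odd
    have hmn_eq : m * n = 2*(r*s) := by rw [hyr]; ring
    have heqq : m^2 - n^2 = r^2 - s^2 := by rw [← hxr]
    rcases hmnpar with ⟨hme, _hno⟩ | ⟨_hmo, hne⟩
    · -- m even
      obtain ⟨m1, hm1⟩ : (2:ℤ) ∣ m := Int.dvd_of_emod_eq_zero hme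
      have hsplit_eq : r * s = m1 * n := by
        have h2 : 2*(m1*n) = 2*(r*s) := by rw [← hmn_eq, hm1]; ring
        exact (mul_left_cancel₀ two_ne_zero h2).symm
      have hrne : r ≠ 0 := by
        rintro rfl
        simp only [zero_mul] at hsplit_eq
        rcases mul_eq_zero.mp hsplit_eq.symm with h | h
        · exact hm0 (by rw [hm1, h]; ring)
        · exact hn0 h
      have hm1n : IsCoprime m1 n := hmncop.of_isCoprime_of_dvd_left ⟨2, by linarith [hm1]⟩
      obtain ⟨W, X, Y, Z, hsp1, hsp2, hsp3, hsp4, hXY, hWZ⟩ :=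
        four_split r s m1 n hrne hrscop hsplit_eq
      have hXne : X ≠ 0 := by rintro rfl; exact hn0 (by rw [hsp4]; ring)
      have hYne : Y ≠ 0 := by rintro rfl; exact hm0 (by rw [hm1, hsp3]; ring)
      have hWne : W ≠ 0 := by rintro rfl; exact hm0 (by rw [hm1, hsp3]; ring)
      have hZne : Z ≠ 0 := by rintro rfl; exact hn0 (by rw [hsp4]; ring)
      have hA : m^2 = (2*(W*Y))^2 := by rw [hm1, hsp3]
      have hB : n^2 = (X*Z)^2 := by rw [hsp4]
      have hC : r^2 = (W*X)^2 := by rw [hsp1]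
      have hD : s^2 = (Y*Z)^2 := by rw [hsp2]
      have hform : X^2 * (Z^2 + W^2) = Y^2 * (Z^2 + 4*W^2) := by
        linear_combination -heqq + hA - hB - hC + hD
      obtain ⟨hc1, hc2⟩ := formII Y W Z X hXY.symm hWZ hYne hform
      have hZn : Z^2 ≤ n^2 := by rw [hsp4]; exact sq_le_sq_factor Z X hXne
      have hWm : W^2 ≤ m^2 := by
        have h1 := sq_le_sq_factor W Y hYne
        have h2 : m^2 = 4*(Y*W)^2 := by rw [hm1, hsp3]; ring
        linarith [sq_nonneg (Y*W)]
      exact key Z W Y X hWZ.symm hZne hWne (by linarith) hc1.symm hc2.symm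
    · -- n even
      obtain ⟨n1, hn1⟩ : (2:ℤ) ∣ n := Int.dvd_of_emod_eq_zero hne
      have hsplit_eq : r * s = m * n1 := by
        have h2 : 2*(m*n1) = 2*(r*s) := by rw [← hmn_eq, hn1]; ring
        exact (mul_left_cancel₀ two_ne_zero h2).symm
      have hrne : r ≠ 0 := by
        rintro rfl
        simp only [zero_mul] at hsplit_eq
        rcases mul_eq_zero.mp hsplit_eq.symm with h | h
        · exact hm0 h
        · exact hn0 (by rw [hn1, h]; ring)
      have hmn1' : IsCoprime m n1 := (hmncop.symm.of_isCoprime_of_dvd_left ⟨2, by linarith [hn1]⟩).symm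
      obtain ⟨W, X, Y, Z, hsp1, hsp2, hsp3, hsp4, hXY, hWZ⟩ :=
        four_split r s m n1 hrne hrscop hsplit_eq
      have hXne : X ≠ 0 := by rintro rfl; exact hn0 (by rw [hn1, hsp4]; ring)
      have hYne : Y ≠ 0 := by rintro rfl; exact hm0 (by rw [hsp3]; ring)
      have hWne : W ≠ 0 := by rintro rfl; exact hm0 (by rw [hsp3]; ring)
      have hZne : Z ≠ 0 := by rintro rfl; exact hn0 (by rw [hn1, hsp4]; ring)
      have hA : m^2 = (W*Y)^2 := by rw [hsp3]
      have hB : n^2 = (2*(X*Z))^2 := by rw [hn1, hsp4]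
      have hC : r^2 = (W*X)^2 := by rw [hsp1]
      have hD : s^2 = (Y*Z)^2 := by rw [hsp2]
      have hform : Y^2 * (W^2 + Z^2) = X^2 * (W^2 + 4*Z^2) := by
        linear_combination heqq - hA + hB + hC - hD
      obtain ⟨hc1, hc2⟩ := formII X Z W Y hXY hWZ.symm hXne hform
      have hWm : W^2 ≤ m^2 := by rw [hsp3, mul_comm W Y]; exact sq_le_sq_factor W Y hYne
      have hZn : Z^2 ≤ n^2 := by
        have h1 := sq_le_sq_factor Z X hXne
        have h2 : n^2 = 4*(X*Z)^2 := by rw [hn1, hsp4]; ring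
        linarith [sq_nonneg (X*Z)]
      exact key W Z X Y hWZ hWne hZne (by linarith) hc1.symm hc2.symm



lemma isCoprime_three_of_not_dvd (a : ℤ) (h : ¬ (3:ℤ) ∣ a) : IsCoprime a 3 := by
  rw [Int.isCoprime_iff_gcd_eq_one]
  have h1 : (Int.gcd a 3 : ℤ) ∣ 3 := Int.gcd_dvd_right _ _
  have h2 : Int.gcd a 3 ∣ 3 := by exact_mod_cast h1
  rcases (Nat.dvd_prime (by norm_num)).mp h2 with h3 | h3
  · exact h3
  · exfalso
    apply h
    have := Int.gcd_dvd_left (a := a) (b := 3)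
    rwa [h3] at this
  
lemma three_not_dvd_helper (t q : ℤ) (hco : IsCoprime t q) : ¬ (3:ℤ) ∣ (t^2 + q^2) := by
  intro hdvd
  obtain ⟨h1, h2⟩ := three_dvd_of_sq_add_sq t q hdvd
  obtain ⟨u, v, huv⟩ := hco
  have : (3:ℤ) ∣ 1 := by
    rw [← huv]; exact dvd_add (h1.mul_left u) (h2.mul_left v)
  norm_num at this

-- mod 4 contradiction
lemma mod4_kill (K t q : ℤ) (ht : t % 2 = 1) (hq : q % 2 = 1)
    (h : K^2 = (t^2 + q^2) * (t^2 + 4*q^2)) : False := by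
  have hcast : ((K:ZMod 4))^2 = ((t:ZMod 4)^2 + (q:ZMod 4)^2) * ((t:ZMod 4)^2 + 4*(q:ZMod 4)^2) := by
    have := congrArg (fun z : ℤ => (z : ZMod 4)) h
    push_cast at this
    exact this
  have ht4 : (t:ZMod 4) = 1 ∨ (t:ZMod 4) = 3 := by
    have h14 : t % 4 = 1 ∨ t % 4 = 3 := by omega
    rcases h14 with h14 | h14
    · left
      have : (t:ZMod 4) = ((1:ℤ) : ZMod 4) := by
        rw [ZMod.intCast_eq_intCast_iff]
        unfold Int.ModEq
        omega
      simpa using this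
    · right
      have : (t:ZMod 4) = ((3:ℤ) : ZMod 4) := by
        rw [ZMod.intCast_eq_intCast_iff]
        unfold Int.ModEq
        omega
      simpa using this
  have hq4 : (q:ZMod 4) = 1 ∨ (q:ZMod 4) = 3 := by
    have h14 : q % 4 = 1 ∨ q % 4 = 3 := by omega
    rcases h14 with h14 | h14
    · left
      have : (q:ZMod 4) = ((1:ℤ) : ZMod 4) := by
        rw [ZMod.intCast_eq_intCast_iff]
        unfold Int.ModEq
        omega
      simpa using this
    · right
      have : (q:ZMod 4) = ((3:ℤ) : ZMod 4) := by
        rw [ZMod.intCast_eq_intCast_iff]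
        unfold Int.ModEq
        omega
      simpa using this
  have hne : ∀ z : ZMod 4, z^2 ≠ 2 := by decide
  rcases ht4 with h1 | h1 <;> rcases hq4 with h2 | h2 <;>
    rw [h1, h2] at hcast <;> exact hne _ (by rw [hcast]; decide)

lemma intStep (p q M : ℤ) (hp : p ≠ 0) (hq : 0 < q) (hcop : IsCoprime p q)
    (hM : M^2 = (p^2 + 4*q^2) * (p^2 + 16*q^2)) : False := by
  rcases Int.even_or_odd p with hpe | hpo
  · -- p even, q odd
    obtain ⟨t, ht⟩ := hpe
    have ht2 : p = 2*t := by omega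
    have hqodd : Odd q := by
      rcases Int.even_or_odd q with hqe | hqo
      · exfalso
        obtain ⟨u, v, huv⟩ := hcop
        obtain ⟨j, hj⟩ := hqe
        have : (2:ℤ) ∣ 1 := by
          rw [← huv, ht2, hj]
          exact dvd_add ⟨u*t, by ring⟩ ⟨v*j, by ring⟩
        norm_num at this
      · exact hqo
    -- M = 4K
    have hMeq : M^2 = 16*((t^2+q^2)*(t^2+4*q^2)) := by rw [hM, ht2]; ring
    have hMev : Even M := by
      have : Even (M^2) := ⟨8*((t^2+q^2)*(t^2+4*q^2)), by rw [hMeq]; ring⟩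
      exact (Int.even_pow.mp this).1
    obtain ⟨M1, hM1⟩ := hMev
    have hM1eq : M1^2 = 4*((t^2+q^2)*(t^2+4*q^2)) := by
      have h4 : 4*M1^2 = 4*(4*((t^2+q^2)*(t^2+4*q^2))) := by
        linear_combination hMeq - (M + M1 + M1)*hM1
      exact mul_left_cancel₀ (by norm_num : (4:ℤ) ≠ 0) h4
    have hM1ev : Even M1 := by
      have : Even (M1^2) := ⟨2*((t^2+q^2)*(t^2+4*q^2)), by rw [hM1eq]; ring⟩
      exact (Int.even_pow.mp this).1
    obtain ⟨K, hK⟩ := hM1ev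
    have hKeq : K^2 = (t^2+q^2)*(t^2+4*q^2) := by
      have h4 : 4*K^2 = 4*((t^2+q^2)*(t^2+4*q^2)) := by
        linear_combination hM1eq - (M1 + K + K)*hK
      exact mul_left_cancel₀ (by norm_num : (4:ℤ) ≠ 0) h4
    rcases Int.even_or_odd t with hte | hto
    · -- t even: the real case, descend to lemC
      have htq : IsCoprime t q := hcop.of_isCoprime_of_dvd_left ⟨2, by linarith [ht2]⟩
      have htne : t ≠ 0 := by rintro rfl; exact hp (by omega)
      have hG12 : IsCoprime (t^2+q^2) (t^2+4*q^2) := by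
        have hc3 : IsCoprime (t^2+q^2) 3 := isCoprime_three_of_not_dvd _ (three_not_dvd_helper t q htq)
        have hcq : IsCoprime (t^2+q^2) q := by
          have h0 : IsCoprime (t^2) q := htq.pow_left
          have := h0.add_mul_left_left q
          have he : t^2 + q*q = t^2+q^2 := by ring
          rwa [he] at this
        have hc3q : IsCoprime (t^2+q^2) (3*(q*q)) := hc3.mul_right (hcq.mul_right hcq)
        have h5 := hc3q.add_mul_right_right 1
        have he : 3*(q*q) + 1*(t^2+q^2) = t^2+4*q^2 := by ring
        rwa [he] at h5
      obtain ⟨cc, hcc⟩ := Int.sq_of_isCoprime hG12 hKeq.symm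
      obtain ⟨dd, hdd⟩ := Int.sq_of_isCoprime hG12.symm (by linarith [hKeq] : (t^2+4*q^2)*(t^2+q^2) = K^2)
      have hccsq : t^2 + q^2 = cc^2 := by
        rcases hcc with h | h
        · exact h
        · exfalso; nlinarith [sq_nonneg cc, sq_nonneg t, sq_nonneg q, hq]
      have hddsq : t^2 + 4*q^2 = dd^2 := by
        rcases hdd with h | h
        · exact h
        · exfalso; nlinarith [sq_nonneg dd, sq_nonneg t, sq_nonneg q, hq]
      exact lemC ((t^2+q^2).toNat) t q cc dd le_rfl htq htne (by omega) hccsq hddsq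
    · -- t odd: mod 4 contradiction
      exact mod4_kill K t q (Int.odd_iff.mp hto) (Int.odd_iff.mp hqodd) hKeq
  · -- p odd
    have hF12 : IsCoprime (p^2+4*q^2) (p^2+16*q^2) := by
      have h3 : ¬ (3:ℤ) ∣ (p^2+4*q^2) := by
        intro hdvd
        have : (3:ℤ) ∣ p^2 + q^2 := by
          obtain ⟨k, hk⟩ := hdvd
          exact ⟨k - q^2, by linarith [hk]⟩
        obtain ⟨h1, h2⟩ := three_dvd_of_sq_add_sq p q this
        obtain ⟨u, v, huv⟩ := hcop
        have : (3:ℤ) ∣ 1 := by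
          rw [← huv]; exact dvd_add (h1.mul_left u) (h2.mul_left v)
        norm_num at this
      have hc3 : IsCoprime (p^2+4*q^2) 3 := isCoprime_three_of_not_dvd _ h3
      have hodd : Odd (p^2+4*q^2) := by
        obtain ⟨j, hj⟩ := hpo
        exact ⟨2*j^2+2*j+2*q^2, by rw [hj]; ring⟩
      have hc2 : IsCoprime (p^2+4*q^2) 2 := isCoprime_two_of_odd _ hodd
      have hcq : IsCoprime (p^2+4*q^2) q := by
        have h0 : IsCoprime (p^2) q := hcop.pow_left
        have := h0.add_mul_left_left (4*q)
        have he : p^2 + q*(4*q) = p^2+4*q^2 := by ring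
        rwa [he] at this
      have hcall : IsCoprime (p^2+4*q^2) (2*2*3*(q*q)) :=
        ((hc2.mul_right hc2).mul_right hc3).mul_right (hcq.mul_right hcq)
      have h5 := hcall.add_mul_right_right 1
      have he : 2*2*3*(q*q) + 1*(p^2+4*q^2) = p^2+16*q^2 := by ring
      rwa [he] at h5
    obtain ⟨cc, hcc⟩ := Int.sq_of_isCoprime hF12 hM.symm
    obtain ⟨dd, hdd⟩ := Int.sq_of_isCoprime hF12.symm (by linarith [hM] : (p^2+16*q^2)*(p^2+4*q^2) = M^2)
    have hccsq : p^2 + 4*q^2 = cc^2 := by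
      rcases hcc with h | h
      · exact h
      · exfalso; nlinarith [sq_nonneg cc, sq_nonneg p, hq]
    have hddsq : p^2 + 16*q^2 = dd^2 := by
      rcases hdd with h | h
      · exact h
      · exfalso; nlinarith [sq_nonneg dd, sq_nonneg p, hq]
    have hcop2q : IsCoprime p (2*q) := (isCoprime_two_of_odd p hpo).mul_right hcop
    exact lemC ((p^2+(2*q)^2).toNat) p (2*q) cc dd le_rfl hcop2q hp (by positivity)
      (by linarith [hccsq] : p^2 + (2*q)^2 = cc^2)
      (by linarith [hddsq] : p^2 + 4*(2*q)^2 = dd^2)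



/-- For rational numbers `w` and `y`, if `y² = w(w³ − 8)(w³ + 1)` then `y = 0` (and hence
`w ∈ {0, 2, −1}`); that is, `w(w³ − 8)(w³ + 1)` is never a nonzero rational square. -/
theorem no_rational_square_w_w3_sub_8_w3_add_one :
    ∀ w y : ℚ, y ^ 2 = w * (w ^ 3 - 8) * (w ^ 3 + 1) →
      y = 0 ∧ (w = 0 ∨ w = 2 ∨ w = -1) := by
  intro w y h
  by_cases hy : y = 0
  · refine ⟨hy, ?_⟩
    have h0 : w * (w^3 - 8) * (w^3 + 1) = 0 := by
      rw [hy] at h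
      simpa using h.symm
    rcases mul_eq_zero.mp h0 with h1 | h1
    · rcases mul_eq_zero.mp h1 with h2 | h2
      · exact Or.inl h2
      · refine Or.inr (Or.inl ?_)
        have h3 : (w - 2) * ((w+1)^2 + 3) = 0 := by linear_combination h2
        rcases mul_eq_zero.mp h3 with h4 | h4
        · linarith [sub_eq_zero.mp h4]
        · exfalso; nlinarith [sq_nonneg (w+1)]
    · refine Or.inr (Or.inr ?_)
      have h3 : (w + 1) * ((2*w-1)^2 + 3) = 0 := by linear_combination 4*h1
      rcases mul_eq_zero.mp h3 with h4 | h4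
      · linarith [eq_neg_of_add_eq_zero_left h4]
      · exfalso; nlinarith [sq_nonneg (2*w-1)]
  · exfalso
    have hw0 : w ≠ 0 := by
      rintro rfl
      apply hy
      have : y^2 = 0 := by rw [h]; ring
      exact pow_eq_zero_iff (by norm_num) |>.mp this
    set ξ : ℚ := w^3 + 1 with hξdef
    have hξ0 : ξ ≠ 0 := by
      intro h0
      apply hy
      have h1 : y^2 = 0 := by rw [h, h0]; ring
      exact pow_eq_zero_iff (by norm_num) |>.mp h1
    set r : ℚ := y * w / ξ with hrdef
    have hr0 : r ≠ 0 := by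
      apply div_ne_zero (mul_ne_zero hy hw0) hξ0
    set z : ℚ := (ξ^2 - 9) / ξ with hzdef
    have hY : (y*w)^2 = ξ * (ξ - 1) * (ξ - 9) := by
      rw [hξdef]
      linear_combination w^2 * h
    have hr2 : r^2 = (ξ-1)*(ξ-9)/ξ := by
      rw [hrdef, div_pow, hY]
      rw [eq_div_iff hξ0]
      field_simp
    have hkey : z^2 = (r^2 + 4) * (r^2 + 16) := by
      rw [hzdef, hr2]
      field_simp
      ring
    -- integerize
    set p : ℤ := r.num with hpdef
    set q : ℤ := (r.den : ℤ) with hqdef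
    have hq0 : 0 < q := by
      rw [hqdef]; exact_mod_cast r.pos
    have hp0 : p ≠ 0 := Rat.num_ne_zero.mpr hr0
    have hrpq : (p : ℚ) = r * (q : ℚ) := by
      have h1 := Rat.num_div_den r
      rw [div_eq_iff (by exact_mod_cast r.den_ne_zero : ((r.den:ℚ) ≠ 0))] at h1
      rw [hpdef, hqdef]
      push_cast
      exact h1
    set M : ℚ := z * (q:ℚ)^2 with hMdef
    have hM2 : M^2 = (((p^2 + 4*q^2) * (p^2 + 16*q^2) : ℤ) : ℚ) := by
      push_cast
      rw [hMdef]
      calc (z * (q:ℚ)^2)^2 = (((r*q)^2 + 4*(q:ℚ)^2) * ((r*q)^2 + 16*(q:ℚ)^2)) := by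
            linear_combination ((q:ℚ)^4) * hkey
        _ = ((p:ℚ)^2 + 4*(q:ℚ)^2) * ((p:ℚ)^2 + 16*(q:ℚ)^2) := by rw [← hrpq]
    have hden1 : M.den = 1 := by
      have h1 : (M * M).den = M.den * M.den := Rat.mul_self_den M
      have h2 : M * M = (((p^2 + 4*q^2) * (p^2 + 16*q^2) : ℤ) : ℚ) := by
        rw [← hM2]; ring
      rw [h2] at h1
      have h3 : (((p^2 + 4*q^2) * (p^2 + 16*q^2) : ℤ) : ℚ).den = 1 := Rat.den_intCast _
      have h4 : M.den * M.den = 1 := by omega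
      have h5 : M.den ∣ 1 := ⟨M.den, h4.symm⟩
      exact Nat.eq_one_of_dvd_one h5
    have hMint : ((M.num : ℤ) : ℚ) = M := (Rat.den_eq_one_iff M).mp hden1
    have hfin : M.num ^ 2 = (p^2 + 4*q^2) * (p^2 + 16*q^2) := by
      have : ((M.num ^ 2 : ℤ) : ℚ) = (((p^2 + 4*q^2) * (p^2 + 16*q^2) : ℤ) : ℚ) := by
        push_cast
        rw [hMint]
        rw [hM2]; simp only [Int.cast_mul, Int.cast_add, Int.cast_pow, Int.cast_ofNat]
      exact_mod_cast this
    have hcop : IsCoprime p q := by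
      rw [Int.isCoprime_iff_gcd_eq_one]
      have := r.reduced
      unfold Int.gcd
      rw [hpdef, hqdef]
      simpa using this
    exact intStep p q M.num hp0 hq0 hcop hfin
end
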